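/- arXiv:math/0301326 — 12 statements merged into one kernel-verified Lean document; each statement's English description precedes it below -/
import Mathlib

section
/- Let (g,σ,B) be a symmetric triple with eigenspace decomposition g = h ⊕ m. Then the set {X ∈ m : ⁅h,X⁆ = 0 for all h ∈ h} equals the center z(g) of g, and z(g) = m ∩ ⁅h,m⁆^⊥, where ⊥ denotes the B-orthogonal complement. In particular z(g) is contained in m. -/
/-!
Write `𝔥`, `𝔪` for the `±1`-eigenspaces of `σ`. Invariance of `B` under `σ` gives `B(𝔥, 𝔪) = 0`,
and since `σ` is a Lie automorphism, `⁅𝔪, 𝔪⁆ ⊆ 𝔥` and `⁅𝔥, 𝔪⁆ ⊆ 𝔪`. By nondegeneracy an element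
orthogonal to both `𝔥` and `𝔪` vanishes, and ad-invariance moves brackets between the arguments of
`B`. A central `z ∈ 𝔥` is orthogonal to `⁅𝔪, 𝔪⁆`, which spans `𝔥`, hence `z = 0`; applied to
`X + σ X` this puts the center in `𝔪`. For `X ∈ 𝔪`, `⁅𝔪, X⁆ ⊆ 𝔥` pairs with `𝔥` through `⁅X, 𝔥⁆`,
and `⁅𝔥, X⁆ ⊆ 𝔪` pairs with `𝔪` through `⁅𝔥, 𝔪⁆`; this gives both descriptions of the center.
-/

namespace LinearMap.BilinForm

variable {R M : Type*} [CommSemiring R] [AddCommMonoid M] [Module R M]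

theorem mem_orthogonal_span_iff {B : LinearMap.BilinForm R M} {s : Set M} {x : M} :
    x ∈ B.orthogonal (Submodule.span R s) ↔ ∀ y ∈ s, B y x = 0 :=
  ⟨fun hx y hy => hx y (Submodule.subset_span hy),
    fun hx _ hy => (Submodule.span_le (p := LinearMap.ker (B.flip x))).2 hx hy⟩

end LinearMap.BilinForm

theorem LinearMap.SeparatingLeft.eq_zero_of_codisjoint {R M N P : Type*} [CommSemiring R]
    [AddCommMonoid M] [AddCommMonoid N] [AddCommMonoid P] [Module R M] [Module R N] [Module R P]
    {B : M →ₗ[R] N →ₗ[R] P} (hB : B.SeparatingLeft) {S T : Submodule R N} (hST : Codisjoint S T)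
    {x : M} (hS : ∀ y ∈ S, B x y = 0) (hT : ∀ y ∈ T, B x y = 0) : x = 0 :=
  hB x fun y => LinearMap.congr_fun (LinearMap.ext_on_codisjoint (g := 0) hST hS hT) y

namespace SymmetricTriple

open LinearMap (BilinForm)

variable {R L : Type*} [CommRing R] [LieRing L] [LieAlgebra R L]
  {σ : L →ₗ⁅R⁆ L} {H M : Submodule R L}

theorem lie_mem_fix_of_mem_neg (hH : ∀ x, x ∈ H ↔ σ x = x) (hM : ∀ x, x ∈ M ↔ σ x = -x)
    {x y : L} (hx : x ∈ M) (hy : y ∈ M) : ⁅x, y⁆ ∈ H := by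
  rw [hH, σ.map_lie, (hM x).1 hx, (hM y).1 hy, neg_lie, lie_neg, neg_neg]

theorem lie_mem_neg_of_mem_fix (hH : ∀ x, x ∈ H ↔ σ x = x) (hM : ∀ x, x ∈ M ↔ σ x = -x)
    {x y : L} (hx : x ∈ H) (hy : y ∈ M) : ⁅x, y⁆ ∈ M := by
  rw [hM, σ.map_lie, (hH x).1 hx, (hM y).1 hy, lie_neg]

theorem add_map_mem_fix (hσ : Function.Involutive σ) (hH : ∀ x, x ∈ H ↔ σ x = x) (x : L) :
    x + σ x ∈ H := by
  rw [hH, map_add, hσ, add_comm]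

theorem map_mem_center (hσ : Function.Involutive σ) {x : L} (hx : x ∈ LieAlgebra.center R L) :
    σ x ∈ LieAlgebra.center R L := by
  rw [LieModule.mem_maxTrivSubmodule] at hx ⊢
  intro y
  rw [← hσ y, ← σ.map_lie, hx, map_zero]

variable [IsAddTorsionFree R] {B : BilinForm R L}

theorem apply_eq_zero_of_mem_fix_of_mem_neg (hH : ∀ x, x ∈ H ↔ σ x = x)
    (hM : ∀ x, x ∈ M ↔ σ x = -x) (hBσ : ∀ x y : L, B (σ x) (σ y) = B x y)
    {x y : L} (hx : x ∈ H) (hy : y ∈ M) : B x y = 0 := by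
  refine self_eq_neg.1 ?_
  nth_rw 1 [← hBσ]
  rw [(hH x).1 hx, (hM y).1 hy, map_neg]

theorem apply_eq_zero_of_mem_neg_of_mem_fix (hH : ∀ x, x ∈ H ↔ σ x = x)
    (hM : ∀ x, x ∈ M ↔ σ x = -x) (hBσ : ∀ x y : L, B (σ x) (σ y) = B x y)
    {x y : L} (hx : x ∈ M) (hy : y ∈ H) : B x y = 0 := by
  refine self_eq_neg.1 ?_
  nth_rw 1 [← hBσ]
  rw [(hM x).1 hx, (hH y).1 hy, map_neg, LinearMap.neg_apply]

theorem eq_zero_of_mem_center_of_mem_fix (hH : ∀ x, x ∈ H ↔ σ x = x)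
    (hM : ∀ x, x ∈ M ↔ σ x = -x) (hHM : Codisjoint H M)
    (hHspan : H = Submodule.span R {z : L | ∃ x ∈ M, ∃ y ∈ M, ⁅x, y⁆ = z})
    (hB : B.SeparatingLeft) (hBσ : ∀ x y : L, B (σ x) (σ y) = B x y)
    (hBad : ∀ x y z : L, B ⁅x, y⁆ z = B x ⁅y, z⁆)
    {z : L} (hzc : z ∈ LieAlgebra.center R L) (hzH : z ∈ H) : z = 0 := by
  rw [LieModule.mem_maxTrivSubmodule] at hzc
  refine hB.eq_zero_of_codisjoint hHM (fun h hh => ?_)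
    (fun m hm => apply_eq_zero_of_mem_fix_of_mem_neg hH hM hBσ hzH hm)
  rw [hHspan] at hh
  refine (Submodule.span_le (p := LinearMap.ker (B z))).2 ?_ hh
  rintro _ ⟨x, -, y, -, rfl⟩
  rw [SetLike.mem_coe, LinearMap.mem_ker, ← hBad, ← lie_skew, hzc, neg_zero, map_zero,
    LinearMap.zero_apply]

theorem mem_neg_of_mem_center (hσ : Function.Involutive σ) (hH : ∀ x, x ∈ H ↔ σ x = x)
    (hM : ∀ x, x ∈ M ↔ σ x = -x) (hHM : Codisjoint H M)
    (hHspan : H = Submodule.span R {z : L | ∃ x ∈ M, ∃ y ∈ M, ⁅x, y⁆ = z})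
    (hB : B.SeparatingLeft) (hBσ : ∀ x y : L, B (σ x) (σ y) = B x y)
    (hBad : ∀ x y z : L, B ⁅x, y⁆ z = B x ⁅y, z⁆)
    {x : L} (hx : x ∈ LieAlgebra.center R L) : x ∈ M := by
  have hz : x + σ x = 0 := eq_zero_of_mem_center_of_mem_fix hH hM hHM hHspan hB hBσ hBad
    (add_mem hx (map_mem_center hσ hx)) (add_map_mem_fix hσ hH x)
  rw [hM]
  exact eq_neg_of_add_eq_zero_right hz

theorem mem_center_of_mem_neg (hH : ∀ x, x ∈ H ↔ σ x = x) (hM : ∀ x, x ∈ M ↔ σ x = -x)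
    (hHM : Codisjoint H M) (hB : B.SeparatingLeft) (hBσ : ∀ x y : L, B (σ x) (σ y) = B x y)
    (hBad : ∀ x y z : L, B ⁅x, y⁆ z = B x ⁅y, z⁆)
    {x : L} (hx : x ∈ M) (hxH : ∀ h ∈ H, ⁅h, x⁆ = 0) : x ∈ LieAlgebra.center R L := by
  have hxM : ∀ m ∈ M, ⁅m, x⁆ = 0 := fun m hm =>
    hB.eq_zero_of_codisjoint hHM
      (fun h hh => by rw [hBad, ← lie_skew, hxH h hh, neg_zero, map_zero])
      (fun m' hm' => apply_eq_zero_of_mem_fix_of_mem_neg hH hM hBσ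
        (lie_mem_fix_of_mem_neg hH hM hm hx) hm')
  rw [LieModule.mem_maxTrivSubmodule]
  intro y
  obtain ⟨h, m, hh, hm, rfl⟩ := Submodule.codisjoint_iff_exists_add_eq.1 hHM y
  rw [add_lie, hxH h hh, hxM m hm, add_zero]

theorem mem_neg_and_forall_lie_eq_zero_iff_mem_center (hσ : Function.Involutive σ)
    (hH : ∀ x, x ∈ H ↔ σ x = x) (hM : ∀ x, x ∈ M ↔ σ x = -x) (hHM : Codisjoint H M)
    (hHspan : H = Submodule.span R {z : L | ∃ x ∈ M, ∃ y ∈ M, ⁅x, y⁆ = z})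
    (hB : B.SeparatingLeft) (hBσ : ∀ x y : L, B (σ x) (σ y) = B x y)
    (hBad : ∀ x y z : L, B ⁅x, y⁆ z = B x ⁅y, z⁆) (x : L) :
    (x ∈ M ∧ ∀ h ∈ H, ⁅h, x⁆ = 0) ↔ x ∈ LieAlgebra.center R L :=
  ⟨fun ⟨hx, hxH⟩ => mem_center_of_mem_neg hH hM hHM hB hBσ hBad hx hxH, fun hx =>
    ⟨mem_neg_of_mem_center hσ hH hM hHM hHspan hB hBσ hBad hx,
      fun h _ => (LieModule.mem_maxTrivSubmodule R L L x).1 hx h⟩⟩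

theorem center_eq_inf_orthogonal (hσ : Function.Involutive σ)
    (hH : ∀ x, x ∈ H ↔ σ x = x) (hM : ∀ x, x ∈ M ↔ σ x = -x) (hHM : Codisjoint H M)
    (hHspan : H = Submodule.span R {z : L | ∃ x ∈ M, ∃ y ∈ M, ⁅x, y⁆ = z})
    (hB : B.SeparatingLeft) (hBσ : ∀ x y : L, B (σ x) (σ y) = B x y)
    (hBad : ∀ x y z : L, B ⁅x, y⁆ z = B x ⁅y, z⁆) :
    (LieAlgebra.center R L).toSubmodule =
      M ⊓ B.orthogonal (Submodule.span R {z : L | ∃ x ∈ H, ∃ y ∈ M, ⁅x, y⁆ = z}) := by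
  ext x
  rw [LieSubmodule.mem_toSubmodule, Submodule.mem_inf, BilinForm.mem_orthogonal_span_iff]
  constructor
  · intro hx
    refine ⟨mem_neg_of_mem_center hσ hH hM hHM hHspan hB hBσ hBad hx, ?_⟩
    rintro _ ⟨a, -, b, -, rfl⟩
    rw [hBad, (LieModule.mem_maxTrivSubmodule R L L x).1 hx, map_zero]
  · rintro ⟨hxM, hxo⟩
    refine mem_center_of_mem_neg hH hM hHM hB hBσ hBad hxM fun h hh => ?_
    refine hB.eq_zero_of_codisjoint hHM (fun h' hh' => apply_eq_zero_of_mem_neg_of_mem_fix hH hM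
      hBσ (lie_mem_neg_of_mem_fix hH hM hh hxM) hh') (fun m hm => ?_)
    rw [hBad, ← lie_skew, map_neg, ← hBad, hxo _ ⟨h, hh, m, hm, rfl⟩, neg_zero]

end SymmetricTriple

theorem center_of_symmetric_triple_general
    (L : Type*) [LieRing L] [LieAlgebra ℝ L]
    (σ : L →ₗ⁅ℝ⁆ L) (hσ : ∀ x, σ (σ x) = x)
    (H M : Submodule ℝ L)
    (hH : ∀ x, x ∈ H ↔ σ x = x)
    (hM : ∀ x, x ∈ M ↔ σ x = -x)
    (hcompl : IsCompl H M)
    (hHspan : H = Submodule.span ℝ {z : L | ∃ x ∈ M, ∃ y ∈ M, ⁅x, y⁆ = z})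
    (B : LinearMap.BilinForm ℝ L)
    (hBnd : B.Nondegenerate)
    (hBσ : ∀ x y : L, B (σ x) (σ y) = B x y)
    (hBad : ∀ x y z : L, B ⁅x, y⁆ z = B x ⁅y, z⁆) :
    (∀ X : L, (X ∈ M ∧ ∀ h ∈ H, ⁅h, X⁆ = 0) ↔ X ∈ LieAlgebra.center ℝ L) ∧
    (LieAlgebra.center ℝ L).toSubmodule =
      M ⊓ B.orthogonal (Submodule.span ℝ {z : L | ∃ x ∈ H, ∃ y ∈ M, ⁅x, y⁆ = z}) ∧
    (LieAlgebra.center ℝ L).toSubmodule ≤ M :=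
  ⟨SymmetricTriple.mem_neg_and_forall_lie_eq_zero_iff_mem_center hσ hH hM hcompl.codisjoint
      hHspan hBnd.1 hBσ hBad,
    SymmetricTriple.center_eq_inf_orthogonal hσ hH hM hcompl.codisjoint hHspan hBnd.1 hBσ hBad,
    fun _ hX => SymmetricTriple.mem_neg_of_mem_center hσ hH hM hcompl.codisjoint hHspan hBnd.1
      hBσ hBad hX⟩

/-- For a symmetric triple `(g, σ, B)` with eigenspace decomposition
`g = h ⊕ m`, the set `{X ∈ m | ⁅h, X⁆ = 0}` equals the center `z(g)`, and
`z(g) = m ∩ ⁅h,m⁆^⊥`. In particular `z(g) ⊆ m`. -/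
theorem center_of_symmetric_triple
    (L : Type*) [LieRing L] [LieAlgebra ℝ L] [FiniteDimensional ℝ L]
    (σ : L →ₗ⁅ℝ⁆ L) (hσ : ∀ x, σ (σ x) = x)
    (H M : Submodule ℝ L)
    (hH : ∀ x, x ∈ H ↔ σ x = x)
    (hM : ∀ x, x ∈ M ↔ σ x = -x)
    (hcompl : IsCompl H M)
    (hHspan : H = Submodule.span ℝ {z : L | ∃ x ∈ M, ∃ y ∈ M, ⁅x, y⁆ = z})
    (B : LinearMap.BilinForm ℝ L)
    (hBnd : B.Nondegenerate)
    (hBsymm : ∀ x y : L, B x y = B y x)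
    (hBσ : ∀ x y : L, B (σ x) (σ y) = B x y)
    (hBad : ∀ x y z : L, B ⁅x, y⁆ z = B x ⁅y, z⁆) :
    (∀ X : L, (X ∈ M ∧ ∀ h ∈ H, ⁅h, X⁆ = 0) ↔ X ∈ LieAlgebra.center ℝ L) ∧
    (LieAlgebra.center ℝ L).toSubmodule =
      M ⊓ B.orthogonal (Submodule.span ℝ {z : L | ∃ x ∈ H, ∃ y ∈ M, ⁅x, y⁆ = z}) ∧
    (LieAlgebra.center ℝ L).toSubmodule ≤ M :=
  center_of_symmetric_triple_general L σ hσ H M hH hM hcompl hHspan B hBnd hBσ hBad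
end

section
/- Let g be a nonzero finite-dimensional real solvable Lie algebra equipped with a nondegenerate symmetric bilinear form B satisfying B(⁅x,y⁆,z) = B(x,⁅y,z⁆) for all x,y,z ∈ g. Then the center of g is nonzero. -/
/-!
With respect to a nondegenerate invariant form, the orthogonal of the derived algebra `⁅L, L⁆` is
central: if `⁅L, L⁆ ⊥ x` then `B z ⁅y, x⁆ = -B ⁅y, z⁆ x = 0` for all `y z`. In a nontrivial
solvable Lie algebra `⁅L, L⁆` is a proper subspace, so its orthogonal is nonzero.
-/

namespace LinearMap.BilinForm

section Field

variable {K V : Type*} [Field K] [AddCommGroup V] [Module K V] [FiniteDimensional K V]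

lemma eq_top_of_orthogonal_eq_bot {B : LinearMap.BilinForm K V} (hB : B.Nondegenerate)
    {W : Submodule K V} (hW : B.orthogonal W = ⊥) : W = ⊤ := by
  have hdim := finrank_orthogonal hB W
  rw [hW, finrank_bot] at hdim
  exact Submodule.eq_top_of_finrank_eq (le_antisymm (Submodule.finrank_le W) (by omega))

end Field

lemma lieInvariant_of_lie_apply_eq_apply_lie {R L : Type*} [CommRing R] [LieRing L] [Module R L]
    {B : LinearMap.BilinForm R L} (hB : ∀ x y z : L, B ⁅x, y⁆ z = B x ⁅y, z⁆) :
    B.lieInvariant L := fun x y z => by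
  rw [← lie_skew, map_neg, LinearMap.neg_apply, hB]

end LinearMap.BilinForm

namespace LieAlgebra

lemma orthogonal_derivedSeries_one_le_center {R L : Type*} [CommRing R] [LieRing L]
    [LieAlgebra R L] {B : LinearMap.BilinForm R L} (hB : B.SeparatingRight)
    (hBinv : B.lieInvariant L) :
    InvariantForm.orthogonal B hBinv (derivedSeries R L 1) ≤ center R L := by
  intro x hx
  rw [InvariantForm.mem_orthogonal] at hx
  refine (LieModule.mem_maxTrivSubmodule R L L x).2 fun y => hB _ fun z => ?_
  have hyz : B ⁅y, z⁆ x = 0 :=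
    hx _ (LieSubmodule.lie_mem_lie (LieSubmodule.mem_top y) (LieSubmodule.mem_top z))
  rwa [hBinv, neg_eq_zero] at hyz

end LieAlgebra

open LieAlgebra in
theorem center_ne_bot_of_solvable_metric_general
    (L : Type*) [LieRing L] [LieAlgebra ℝ L] [FiniteDimensional ℝ L] [Nontrivial L]
    [LieAlgebra.IsSolvable L]
    (B : LinearMap.BilinForm ℝ L)
    (hBnd : B.Nondegenerate)
    (hBad : ∀ x y z : L, B ⁅x, y⁆ z = B x ⁅y, z⁆) :
    LieAlgebra.center ℝ L ≠ ⊥ := by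
  intro hcenter
  have hBinv := LinearMap.BilinForm.lieInvariant_of_lie_apply_eq_apply_lie hBad
  have horth : InvariantForm.orthogonal B hBinv (derivedSeries ℝ L 1) = ⊥ :=
    eq_bot_iff.2 (hcenter ▸ orthogonal_derivedSeries_one_le_center hBnd.2 hBinv)
  have hderived : derivedSeries ℝ L 1 = ⊤ :=
    (LieSubmodule.toSubmodule_eq_top _).1 <|
      LinearMap.BilinForm.eq_top_of_orthogonal_eq_bot hBnd <|
        (LieSubmodule.toSubmodule_eq_bot _).2 horth
  exact (derivedSeries_lt_top_of_solvable ℝ L).ne hderived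

/-- A nonzero finite-dimensional real solvable Lie algebra carrying a
nondegenerate, symmetric, ad-invariant bilinear form has nonzero center. -/
theorem center_ne_bot_of_solvable_metric
    (L : Type*) [LieRing L] [LieAlgebra ℝ L] [FiniteDimensional ℝ L] [Nontrivial L]
    [LieAlgebra.IsSolvable L]
    (B : LinearMap.BilinForm ℝ L)
    (hBnd : B.Nondegenerate)
    (hBsymm : ∀ x y : L, B x y = B y x)
    (hBad : ∀ x y z : L, B ⁅x, y⁆ z = B x ⁅y, z⁆) :
    LieAlgebra.center ℝ L ≠ ⊥ :=
  center_ne_bot_of_solvable_metric_general L B hBnd hBad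
end

section
/- Let (g,σ,B) be an indecomposable symmetric triple with eigenspace decomposition g = h ⊕ m and dim m > 1. Then the center z(g) of g is totally isotropic with respect to B, i.e. B vanishes on z(g) × z(g). -/
/-!
For central `x` put `x_m = ½ (x - σ x) ∈ m`; it is central because `σ` preserves the center, and
`x - x_m = ½ (x + σ x)` lies in `h = [m, m]`, inside the derived algebra. An invariant form pairs
the center with the derived algebra to zero, so `B (x, y) = B (x_m, y_m)` for central `x, y`.
A central `z ∈ m` spans an `ad(h)`-invariant line of `m`, nondegenerate as soon as `B (z, z) ≠ 0`;
indecomposability and `dim m > 1` rule this out, so `B` vanishes on the diagonal of `z(g) ∩ m`,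
hence on all of `z(g) ∩ m` by polarization.
-/

open LieAlgebra

lemma LieHom.map_mem_center_of_surjective {R L L' : Type*} [CommRing R] [LieRing L]
    [LieAlgebra R L] [LieRing L'] [LieAlgebra R L'] (f : L →ₗ⁅R⁆ L')
    (hf : Function.Surjective f) {z : L} (hz : z ∈ center R L) : f z ∈ center R L' := by
  intro a
  obtain ⟨b, rfl⟩ := hf a
  rw [← f.map_lie, hz b, map_zero]

section Involution

variable {K V F : Type*} [Field K] [AddCommGroup V] [Module K V]
  [FunLike F V V] [LinearMapClass F K V V] {σ : F}

lemma inv_two_smul_sub_apply_mem (hσ : ∀ x, σ (σ x) = x) {M : Submodule K V}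
    (hM : ∀ x, x ∈ M ↔ σ x = -x) (z : V) : (2⁻¹ : K) • (z - σ z) ∈ M := by
  rw [hM, map_smul, map_sub, hσ, ← smul_neg, neg_sub]

lemma sub_inv_two_smul_sub_apply_mem [CharZero K] (hσ : ∀ x, σ (σ x) = x) {H : Submodule K V}
    (hH : ∀ x, x ∈ H ↔ σ x = x) (z : V) : z - (2⁻¹ : K) • (z - σ z) ∈ H := by
  rw [hH, map_sub, map_smul, map_sub, hσ]
  module

end Involution

namespace LinearMap.BilinForm

lemma apply_eq_zero_of_forall_apply_self_eq_zero {R V : Type*} [CommRing R] [NoZeroDivisors R]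
    [NeZero (2 : R)] [AddCommGroup V] [Module R V] {B : LinearMap.BilinForm R V}
    (hB : ∀ x y, B x y = B y x) {N : Submodule R V} (hN : ∀ v ∈ N, B v v = 0) {u v : V}
    (hu : u ∈ N) (hv : v ∈ N) : B u v = 0 := by
  have h := hN _ (N.add_mem hu hv)
  simp only [map_add, LinearMap.add_apply, hN u hu, hN v hv, hB v u] at h
  have h2 : (2 : R) * B u v = 0 := by linear_combination h
  exact (mul_eq_zero.1 h2).resolve_left two_ne_zero

section Invariant

variable {R L : Type*} [CommRing R] [LieRing L] [LieAlgebra R L] {B : LinearMap.BilinForm R L}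

lemma apply_eq_zero_of_mem_center_of_mem_commutator (hB : ∀ x y z : L, B ⁅x, y⁆ z = B x ⁅y, z⁆)
    {z w : L} (hz : z ∈ center R L) (hw : w ∈ ⁅(⊤ : LieIdeal R L), (⊤ : LieIdeal R L)⁆) : B z w = 0 := by
  suffices LieSubmodule.toSubmodule ⁅(⊤ : LieIdeal R L), (⊤ : LieIdeal R L)⁆ ≤ LinearMap.ker (B z) from this hw
  rw [LieSubmodule.lieIdeal_oper_eq_linear_span', Submodule.span_le]
  rintro _ ⟨a, -, b, -, rfl⟩
  rw [SetLike.mem_coe, LinearMap.mem_ker, ← hB, ← lie_skew, hz a, neg_zero, map_zero, LinearMap.zero_apply]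

lemma apply_eq_zero_of_mem_commutator_of_mem_center (hB : ∀ x y z : L, B ⁅x, y⁆ z = B x ⁅y, z⁆)
    {z w : L} (hw : w ∈ ⁅(⊤ : LieIdeal R L), (⊤ : LieIdeal R L)⁆) (hz : z ∈ center R L) : B w z = 0 := by
  suffices LieSubmodule.toSubmodule ⁅(⊤ : LieIdeal R L), (⊤ : LieIdeal R L)⁆ ≤ LinearMap.ker (B.flip z) from this hw
  rw [LieSubmodule.lieIdeal_oper_eq_linear_span', Submodule.span_le]
  rintro _ ⟨a, -, b, -, rfl⟩
  rw [SetLike.mem_coe, LinearMap.mem_ker, flip_apply, hB, hz b, map_zero]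

lemma apply_eq_apply_of_sub_mem_commutator (hB : ∀ x y z : L, B ⁅x, y⁆ z = B x ⁅y, z⁆)
    {x x' y y' : L} (hy : y ∈ center R L) (hx' : x' ∈ center R L)
    (hxx' : x - x' ∈ ⁅(⊤ : LieIdeal R L), (⊤ : LieIdeal R L)⁆) (hyy' : y - y' ∈ ⁅(⊤ : LieIdeal R L), (⊤ : LieIdeal R L)⁆) :
    B x y = B x' y' :=
  calc B x y = B (x - x') y + B x' (y - y') + B x' y' := by
        simp only [map_sub, LinearMap.sub_apply]; ring
    _ = B x' y' := by
        rw [apply_eq_zero_of_mem_commutator_of_mem_center hB hxx' hy,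
          apply_eq_zero_of_mem_center_of_mem_commutator hB hx' hyy', zero_add, zero_add]

end Invariant

lemma apply_self_eq_zero_of_mem_center {K L : Type*} [Field K] [LieRing L] [LieAlgebra K L]
    {B : LinearMap.BilinForm K L} {H M : Submodule K L}
    (hindec : ∀ m' : Submodule K L, m' ≤ M →
      (∀ h ∈ H, ∀ x ∈ m', ⁅h, x⁆ ∈ m') →
      (∀ x ∈ m', (∀ y ∈ m', B x y = 0) → x = 0) →
      m' = ⊥ ∨ m' = M)
    (hdim : 1 < Module.finrank K M) {z : L} (hz : z ∈ center K L) (hzM : z ∈ M) :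
    B z z = 0 := by
  by_contra hzz
  have hz0 : z ≠ 0 := by rintro rfl; simp at hzz
  have hinv : ∀ h ∈ H, ∀ x ∈ K ∙ z, ⁅h, x⁆ ∈ K ∙ z := by
    intro h _ x hx
    obtain ⟨c, rfl⟩ := Submodule.mem_span_singleton.1 hx
    rw [lie_smul, hz h, smul_zero]
    exact zero_mem _
  have hnondeg : ∀ x ∈ K ∙ z, (∀ y ∈ K ∙ z, B x y = 0) → x = 0 := fun x hx hxB =>
    (Submodule.eq_bot_iff _).1 (B.flip.span_singleton_inf_orthogonal_eq_bot hzz) x ⟨hx, hxB⟩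
  rcases hindec _ ((Submodule.span_singleton_le_iff_mem _ _).2 hzM) hinv hnondeg with hbot | htop
  · exact hz0 (Submodule.span_singleton_eq_bot.1 hbot)
  · rw [← htop, finrank_span_singleton hz0] at hdim
    exact lt_irrefl _ hdim

end LinearMap.BilinForm

open LinearMap.BilinForm in
theorem center_totallyIsotropic_of_indecomposable_general
    (L : Type*) [LieRing L] [LieAlgebra ℝ L]
    (σ : L →ₗ⁅ℝ⁆ L) (hσ : ∀ x, σ (σ x) = x)
    (H M : Submodule ℝ L)
    (hH : ∀ x, x ∈ H ↔ σ x = x)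
    (hM : ∀ x, x ∈ M ↔ σ x = -x)
    (hHspan : H = Submodule.span ℝ {z : L | ∃ x ∈ M, ∃ y ∈ M, ⁅x, y⁆ = z})
    (B : LinearMap.BilinForm ℝ L)
    (hBsymm : ∀ x y : L, B x y = B y x)
    (hBad : ∀ x y z : L, B ⁅x, y⁆ z = B x ⁅y, z⁆)
    -- indecomposability: no proper nonzero ad(h)-invariant subspace of m on which B is
    -- nondegenerate
    (hindec : ∀ m' : Submodule ℝ L, m' ≤ M →
      (∀ h ∈ H, ∀ x ∈ m', ⁅h, x⁆ ∈ m') →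
      (∀ x ∈ m', (∀ y ∈ m', B x y = 0) → x = 0) →
      m' = ⊥ ∨ m' = M)
    (hdim : 1 < Module.finrank ℝ M) :
    ∀ x ∈ LieAlgebra.center ℝ L, ∀ y ∈ LieAlgebra.center ℝ L, B x y = 0 := by
  intro x hx y hy
  have hH_le : H ≤ LieSubmodule.toSubmodule ⁅(⊤ : LieIdeal ℝ L), (⊤ : LieIdeal ℝ L)⁆ := by
    rw [hHspan, Submodule.span_le]
    rintro _ ⟨a, -, b, -, rfl⟩
    exact LieSubmodule.lie_mem_lie (LieSubmodule.mem_top a) (LieSubmodule.mem_top b)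
  have hcenter : ∀ z ∈ center ℝ L, (2⁻¹ : ℝ) • (z - σ z) ∈ center ℝ L := fun z hz =>
    (center ℝ L).smul_mem _ <|
      sub_mem hz (σ.map_mem_center_of_surjective (Function.Involutive.surjective hσ) hz)
  have hiso : ∀ z ∈ M ⊓ (center ℝ L).toSubmodule, B z z = 0 := fun z hz =>
    apply_self_eq_zero_of_mem_center hindec hdim hz.2 hz.1
  rw [apply_eq_apply_of_sub_mem_commutator hBad hy (hcenter x hx)
    (hH_le (sub_inv_two_smul_sub_apply_mem hσ hH x))
    (hH_le (sub_inv_two_smul_sub_apply_mem hσ hH y))]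
  exact apply_eq_zero_of_forall_apply_self_eq_zero hBsymm hiso
    ⟨inv_two_smul_sub_apply_mem hσ hM x, hcenter x hx⟩
    ⟨inv_two_smul_sub_apply_mem hσ hM y, hcenter y hy⟩

/-- For an indecomposable symmetric triple `(g, σ, B)` with `dim m > 1`,
the center `z(g)` is totally isotropic with respect to `B`. -/
theorem center_totallyIsotropic_of_indecomposable
    (L : Type*) [LieRing L] [LieAlgebra ℝ L] [FiniteDimensional ℝ L]
    (σ : L →ₗ⁅ℝ⁆ L) (hσ : ∀ x, σ (σ x) = x)
    (H M : Submodule ℝ L)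
    (hH : ∀ x, x ∈ H ↔ σ x = x)
    (hM : ∀ x, x ∈ M ↔ σ x = -x)
    (hcompl : IsCompl H M)
    (hHspan : H = Submodule.span ℝ {z : L | ∃ x ∈ M, ∃ y ∈ M, ⁅x, y⁆ = z})
    (B : LinearMap.BilinForm ℝ L)
    (hBnd : B.Nondegenerate)
    (hBsymm : ∀ x y : L, B x y = B y x)
    (hBσ : ∀ x y : L, B (σ x) (σ y) = B x y)
    (hBad : ∀ x y z : L, B ⁅x, y⁆ z = B x ⁅y, z⁆)
    -- indecomposability: no proper nonzero ad(h)-invariant subspace of m on which B is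
    -- nondegenerate
    (hindec : ∀ m' : Submodule ℝ L, m' ≤ M →
      (∀ h ∈ H, ∀ x ∈ m', ⁅h, x⁆ ∈ m') →
      (∀ x ∈ m', (∀ y ∈ m', B x y = 0) → x = 0) →
      m' = ⊥ ∨ m' = M)
    (hdim : 1 < Module.finrank ℝ M) :
    ∀ x ∈ LieAlgebra.center ℝ L, ∀ y ∈ LieAlgebra.center ℝ L, B x y = 0 :=
  center_totallyIsotropic_of_indecomposable_general L σ hσ H M hH hM hHspan B hBsymm hBad hindec
    hdim
end

section
/- Let g be a finite-dimensional real Lie algebra with an involutive Lie algebra automorphism σ whose (+1)-eigenspace h and (−1)-eigenspace m satisfy g = h ⊕ m and h = ⁅m,m⁆. Let B_m be a nondegenerate symmetric bilinear form on m that is invariant under the action of h, i.e. B_m(⁅h,u⁆,v) + B_m(u,⁅h,v⁆) = 0 for all h ∈ h and u,v ∈ m. Then there exists a unique symmetric bilinear form B on g such that B restricted to m × m equals B_m, B(h,m) = 0, and B is ad(g)-invariant (B(⁅x,y⁆,z) = B(x,⁅y,z⁆) for all x,y,z ∈ g). -/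
/-!
Invariance forces `B h ⁅u, v⁆ = B ⁅h, u⁆ v = Bm ⁅h, u⁆ v` for `h ∈ H`, `u, v ∈ M`, which pins
`B` down on `H = span ⁅M, M⁆`; this gives uniqueness. For existence the formula has to be well
defined. The tensor `F a b u v = Bm ⁅⁅a, b⁆, u⁆ v` on `M` has the symmetries of a curvature tensor
(skew in `a, b` and in `u, v`, first Bianchi identity from Jacobi), hence the pair symmetry
`F a b u v = F u v a b`. Therefore the pairing `Ψ h (u ⊗ v) = Bm ⁅h, u⁆ v` satisfies
`Ψ (β t) t' = Ψ (β t') t` for the bracket `β : M ⊗ M → H`, so it descends along the surjection `β`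
to a symmetric form on `H`. Its orthogonal sum with `Bm` is `B`; invariance is then checked for
`ad y` with `y ∈ H` and with `y ∈ M`, using `H = span ⁅M, M⁆` and the Jacobi identity once more.
-/

open TensorProduct

theorem pair_symm_of_skew_of_bianchi {α G : Type*} [AddCommGroup G] [IsAddTorsionFree G]
    (F : α → α → α → α → G)
    (skew₁ : ∀ a b u v, F b a u v = -F a b u v)
    (skew₂ : ∀ a b u v, F a b v u = -F a b u v)
    (bianchi : ∀ a b u v, F a b u v + F b u a v + F u a b v = 0)
    (a b u v : α) : F a b u v = F u v a b := by
  have B₁ := bianchi a b u v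
  have B₂ := bianchi b u v a
  have B₃ := bianchi u v a b
  have B₄ := bianchi v a b u
  rw [skew₁ a u b v] at B₁
  rw [skew₂ b u a v, skew₂ u v a b, skew₁ b v u a, skew₂ b v a u] at B₂
  rw [skew₁ a v u b, skew₂ a v b u, skew₂ a u b v] at B₃
  rw [skew₁ a v b u, skew₂ a b u v] at B₄
  apply IsAddTorsionFree.nsmul_right_injective two_ne_zero
  linear_combination (norm := module) B₁ + B₂ - B₃ - B₄

theorem LinearMap.exists_symm_apply_eq_of_surjective {R V W N : Type*} [CommRing R]
    [AddCommGroup V] [Module R V] [AddCommGroup W] [Module R W] [AddCommGroup N] [Module R N]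
    {β : V →ₗ[R] W} (hβ : Function.Surjective β) (Ψ : W →ₗ[R] V →ₗ[R] N)
    (hΨ : ∀ t t', Ψ (β t) t' = Ψ (β t') t) :
    ∃ B : W →ₗ[R] W →ₗ[R] N, (∀ w t, B w (β t) = Ψ w t) ∧ ∀ w w', B w w' = B w' w := by
  have hker : LinearMap.ker β ≤ LinearMap.ker Ψ.flip := by
    intro t ht
    ext w
    obtain ⟨t₀, rfl⟩ := hβ w
    simp [hΨ _ t, LinearMap.mem_ker.1 ht]
  set B := ((LinearMap.ker β).liftQ Ψ.flip hker ∘ₗ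
    (β.quotKerEquivOfSurjective hβ).symm.toLinearMap).flip
  have hB : ∀ w t, B w (β t) = Ψ w t := by
    intro w t
    simp [B, quotKerEquivOfSurjective_symm_apply]
  refine ⟨B, hB, fun w w' => ?_⟩
  obtain ⟨t, rfl⟩ := hβ w
  obtain ⟨t', rfl⟩ := hβ w'
  rw [hB, hB, hΨ]

theorem LinearMap.ext_on_codisjoint₂ {R E N : Type*} [CommRing R] [AddCommGroup E]
    [Module R E] [AddCommGroup N] [Module R N] {p q : Submodule R E} (hpq : Codisjoint p q)
    {B B' : E →ₗ[R] E →ₗ[R] N}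
    (hpp : ∀ x ∈ p, ∀ y ∈ p, B x y = B' x y) (hpq' : ∀ x ∈ p, ∀ y ∈ q, B x y = B' x y)
    (hqp : ∀ x ∈ q, ∀ y ∈ p, B x y = B' x y) (hqq : ∀ x ∈ q, ∀ y ∈ q, B x y = B' x y) :
    B = B' :=
  LinearMap.ext_on_codisjoint hpq
    (fun x hx => LinearMap.ext_on_codisjoint hpq (hpp x hx) (hpq' x hx))
    (fun x hx => LinearMap.ext_on_codisjoint hpq (hqp x hx) (hqq x hx))

theorem LinearMap.isSkewAdjoint_of_codisjoint {R E : Type*} [CommRing R] [AddCommGroup E]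
    [Module R E] {p q : Submodule R E} (hpq : Codisjoint p q) {B : LinearMap.BilinForm R E}
    {f : Module.End R E}
    (hpp : ∀ x ∈ p, ∀ y ∈ p, B (f x) y = -B x (f y))
    (hpq' : ∀ x ∈ p, ∀ y ∈ q, B (f x) y = -B x (f y))
    (hqp : ∀ x ∈ q, ∀ y ∈ p, B (f x) y = -B x (f y))
    (hqq : ∀ x ∈ q, ∀ y ∈ q, B (f x) y = -B x (f y)) : B.IsSkewAdjoint f := by
  rw [LinearMap.IsSkewAdjoint, ← LinearMap.coe_neg, LinearMap.isAdjointPair_iff_comp_eq_compl₂]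
  refine LinearMap.ext_on_codisjoint₂ hpq ?_ ?_ ?_ ?_ <;> intro x hx y hy <;>
    simp only [LinearMap.comp_apply, LinearMap.compl₂_apply, LinearMap.neg_apply, map_neg]
  exacts [hpp x hx y hy, hpq' x hx y hy, hqp x hx y hy, hqq x hx y hy]

namespace LinearMap.BilinForm

variable {R E : Type*} [CommRing R] [AddCommGroup E] [Module R E] {p q : Submodule R E}

noncomputable def ofIsCompl (hpq : IsCompl p q) (Bp : LinearMap.BilinForm R p)
    (Bq : LinearMap.BilinForm R q) : LinearMap.BilinForm R E :=
  Bp.compl₁₂ (p.projectionOnto q hpq) (p.projectionOnto q hpq)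
    + Bq.compl₁₂ (q.projectionOnto p hpq.symm) (q.projectionOnto p hpq.symm)

variable (hpq : IsCompl p q) (Bp : LinearMap.BilinForm R p) (Bq : LinearMap.BilinForm R q)

@[simp]
lemma ofIsCompl_apply_left (x y : p) : ofIsCompl hpq Bp Bq x y = Bp x y := by
  simp [ofIsCompl]

@[simp]
lemma ofIsCompl_apply_right (x y : q) : ofIsCompl hpq Bp Bq x y = Bq x y := by
  simp [ofIsCompl]

lemma ofIsCompl_apply_left_right (x : p) (y : q) : ofIsCompl hpq Bp Bq x y = 0 := by
  simp [ofIsCompl]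

lemma ofIsCompl_comm (hp : ∀ x y, Bp x y = Bp y x) (hq : ∀ x y, Bq x y = Bq y x) (x y : E) :
    ofIsCompl hpq Bp Bq x y = ofIsCompl hpq Bp Bq y x := by
  simp [ofIsCompl, hp (p.projectionOnto q hpq x), hq (q.projectionOnto p hpq.symm x)]

end LinearMap.BilinForm

section

variable {R L : Type*} [CommRing R] [LieRing L] [LieAlgebra R L]

def bracketOn (p q r : Submodule R L) (h : ∀ x ∈ p, ∀ y ∈ q, ⁅x, y⁆ ∈ r) :
    p →ₗ[R] q →ₗ[R] r :=
  LinearMap.mk₂ R (fun x y => ⟨⁅(x : L), (y : L)⁆, h x x.2 y y.2⟩)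
    (fun _ _ _ => Subtype.ext (add_lie _ _ _)) (fun _ _ _ => Subtype.ext (smul_lie _ _ _))
    (fun _ _ _ => Subtype.ext (lie_add _ _ _)) (fun _ _ _ => Subtype.ext (lie_smul _ _ _))

@[simp]
lemma coe_bracketOn (p q r : Submodule R L) (h : ∀ x ∈ p, ∀ y ∈ q, ⁅x, y⁆ ∈ r) (x : p) (y : q) :
    (bracketOn p q r h x y : L) = ⁅(x : L), (y : L)⁆ := rfl

namespace SymmetricDecomposition

variable {H M : Submodule R L}

theorem surjective_lift_bracketOn (hMM : ∀ u ∈ M, ∀ v ∈ M, ⁅u, v⁆ ∈ H)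
    (hspan : H ≤ Submodule.span R {z : L | ∃ x ∈ M, ∃ y ∈ M, ⁅x, y⁆ = z}) :
    Function.Surjective (lift (bracketOn M M H hMM)) := by
  have hrange : ∀ z ∈ Submodule.span R {z : L | ∃ x ∈ M, ∃ y ∈ M, ⁅x, y⁆ = z},
      ∃ t, (lift (bracketOn M M H hMM) t : L) = z := by
    intro z hz
    induction hz using Submodule.span_induction with
    | mem _ hz =>
      obtain ⟨x, hx, y, hy, rfl⟩ := hz
      exact ⟨⟨x, hx⟩ ⊗ₜ ⟨y, hy⟩, rfl⟩
    | zero => exact ⟨0, by simp⟩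
    | add _ _ _ _ h₁ h₂ =>
      obtain ⟨t₁, rfl⟩ := h₁
      obtain ⟨t₂, rfl⟩ := h₂
      exact ⟨t₁ + t₂, by simp⟩
    | smul c _ _ h₁ =>
      obtain ⟨t, rfl⟩ := h₁
      exact ⟨c • t, by simp⟩
  rintro ⟨h, hh⟩
  obtain ⟨t, ht⟩ := hrange h (hspan hh)
  exact ⟨t, Subtype.ext ht⟩

variable (hHM : ∀ h ∈ H, ∀ m ∈ M, ⁅h, m⁆ ∈ M) (Bm : LinearMap.BilinForm R M)

noncomputable def actionPairing : H →ₗ[R] M ⊗[R] M →ₗ[R] R :=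
  uncurry (RingHom.id R) M M R ∘ₗ (bracketOn H M M hHM).compr₂ Bm

@[simp]
lemma actionPairing_tmul (h : H) (u v : M) :
    actionPairing hHM Bm h (u ⊗ₜ v) = Bm (bracketOn H M M hHM h u) v := rfl

theorem pair_symm [IsAddTorsionFree R] (hMM : ∀ u ∈ M, ∀ v ∈ M, ⁅u, v⁆ ∈ H)
    (hsymm : ∀ u v, Bm u v = Bm v u)
    (hinv : ∀ h u v, Bm (bracketOn H M M hHM h u) v + Bm u (bracketOn H M M hHM h v) = 0)
    (a b u v : M) :
    Bm (bracketOn H M M hHM (bracketOn M M H hMM a b) u) v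
      = Bm (bracketOn H M M hHM (bracketOn M M H hMM u v) a) b := by
  refine pair_symm_of_skew_of_bianchi
    (fun a b u v => Bm (bracketOn H M M hHM (bracketOn M M H hMM a b) u) v)
    ?skew₁ ?skew₂ ?bianchi a b u v
  case skew₁ =>
    intro a b u v
    have : bracketOn M M H hMM b a = -bracketOn M M H hMM a b :=
      Subtype.ext (lie_skew (b : L) a).symm
    simp [this]
  case skew₂ =>
    intro a b u v
    linear_combination hinv _ u v - hsymm u _
  case bianchi =>
    intro a b u v
    have jacobi : bracketOn H M M hHM (bracketOn M M H hMM a b) u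
        + bracketOn H M M hHM (bracketOn M M H hMM b u) a
        + bracketOn H M M hHM (bracketOn M M H hMM u a) b = 0 := by
      ext
      simp only [Submodule.coe_add, coe_bracketOn, ZeroMemClass.coe_zero]
      rw [← lie_skew ⁅(a : L), (b : L)⁆, ← lie_skew ⁅(b : L), (u : L)⁆,
        ← lie_skew ⁅(u : L), (a : L)⁆]
      linear_combination (norm := module) -lie_jacobi (u : L) a b
    simpa using congrArg (Bm · v) jacobi

theorem actionPairing_lift_comm [IsAddTorsionFree R] (hMM : ∀ u ∈ M, ∀ v ∈ M, ⁅u, v⁆ ∈ H)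
    (hsymm : ∀ u v, Bm u v = Bm v u)
    (hinv : ∀ h u v, Bm (bracketOn H M M hHM h u) v + Bm u (bracketOn H M M hHM h v) = 0)
    (t t' : M ⊗[R] M) :
    actionPairing hHM Bm (lift (bracketOn M M H hMM) t) t'
      = actionPairing hHM Bm (lift (bracketOn M M H hMM) t') t := by
  have : actionPairing hHM Bm ∘ₗ lift (bracketOn M M H hMM)
      = (actionPairing hHM Bm ∘ₗ lift (bracketOn M M H hMM)).flip :=
    ext' fun a b => ext' fun u v => pair_symm hHM Bm hMM hsymm hinv a b u v
  exact LinearMap.congr_fun₂ this t t'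

/-- The conditions that invariance forces on an extension of a form on `M`; the last one
determines it on `H = span ⁅M, M⁆`. -/
structure IsAdmissible (H M : Submodule R L) (B : LinearMap.BilinForm R L) : Prop where
  symm : ∀ x y, B x y = B y x
  orth : ∀ h ∈ H, ∀ m ∈ M, B h m = 0
  apply_lie : ∀ h ∈ H, ∀ u ∈ M, ∀ v ∈ M, B h ⁅u, v⁆ = B ⁅h, u⁆ v

theorem exists_isAdmissible [IsAddTorsionFree R] (hc : IsCompl H M)
    (hHM : ∀ h ∈ H, ∀ m ∈ M, ⁅h, m⁆ ∈ M) (hMM : ∀ u ∈ M, ∀ v ∈ M, ⁅u, v⁆ ∈ H)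
    (hspan : H ≤ Submodule.span R {z : L | ∃ x ∈ M, ∃ y ∈ M, ⁅x, y⁆ = z})
    (Bm : LinearMap.BilinForm R M) (hsymm : ∀ u v, Bm u v = Bm v u)
    (hinv : ∀ h u v, Bm (bracketOn H M M hHM h u) v + Bm u (bracketOn H M M hHM h v) = 0) :
    ∃ B : LinearMap.BilinForm R L, (∀ u v : M, B u v = Bm u v) ∧ IsAdmissible H M B := by
  obtain ⟨BH, hBH, hBHsymm⟩ := LinearMap.exists_symm_apply_eq_of_surjective
    (surjective_lift_bracketOn hMM hspan) (actionPairing hHM Bm)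
    (actionPairing_lift_comm hHM Bm hMM hsymm hinv)
  set B := LinearMap.BilinForm.ofIsCompl hc BH Bm
  refine ⟨B, LinearMap.BilinForm.ofIsCompl_apply_right hc BH Bm, ⟨?_, ?_, ?_⟩⟩
  · exact LinearMap.BilinForm.ofIsCompl_comm hc BH Bm hBHsymm hsymm
  · intro h hh m hm
    exact LinearMap.BilinForm.ofIsCompl_apply_left_right hc BH Bm ⟨h, hh⟩ ⟨m, hm⟩
  · intro h hh u hu v hv
    calc B h ⁅u, v⁆
        = B (⟨h, hh⟩ : H) (lift (bracketOn M M H hMM) (⟨u, hu⟩ ⊗ₜ ⟨v, hv⟩) : H) := rfl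
      _ = Bm (bracketOn H M M hHM ⟨h, hh⟩ ⟨u, hu⟩) ⟨v, hv⟩ := by
        rw [LinearMap.BilinForm.ofIsCompl_apply_left, hBH, actionPairing_tmul]
      _ = B ⁅h, u⁆ v := (LinearMap.BilinForm.ofIsCompl_apply_right hc BH Bm _ _).symm

namespace IsAdmissible

variable {B : LinearMap.BilinForm R L}

lemma orth' (hB : IsAdmissible H M B) {m h : L} (hm : m ∈ M) (hh : h ∈ H) : B m h = 0 := by
  rw [hB.symm, hB.orth h hh m hm]

theorem lie_apply_add_apply_lie_eq_zero_of_mem_H (hB : IsAdmissible H M B)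
    (hHH : ∀ x ∈ H, ∀ y ∈ H, ⁅x, y⁆ ∈ H) (hHM : ∀ h ∈ H, ∀ m ∈ M, ⁅h, m⁆ ∈ M)
    (hspan : H ≤ Submodule.span R {z : L | ∃ x ∈ M, ∃ y ∈ M, ⁅x, y⁆ = z})
    (hMinv : ∀ h ∈ H, ∀ u ∈ M, ∀ v ∈ M, B ⁅h, u⁆ v + B u ⁅h, v⁆ = 0)
    {h x z : L} (hh : h ∈ H) (hx : x ∈ H) (hz : z ∈ H) :
    B ⁅h, x⁆ z + B x ⁅h, z⁆ = 0 := by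
  have hz' := hspan hz
  clear hz
  induction hz' using Submodule.span_induction with
  | mem _ hz =>
    obtain ⟨e, he, f, hf, rfl⟩ := hz
    rw [hB.apply_lie _ (hHH h hh x hx) e he f hf, leibniz_lie, map_add,
      hB.apply_lie x hx _ (hHM h hh e he) f hf, hB.apply_lie x hx e he _ (hHM h hh f hf), lie_lie,
      map_sub, LinearMap.sub_apply]
    linear_combination hMinv h hh _ (hHM x hx e he) f hf
  | zero => simp
  | add _ _ _ _ h₁ h₂ => simp only [lie_add, map_add]; linear_combination h₁ + h₂
  | smul c _ _ h₁ => simp only [lie_smul, map_smul, smul_eq_mul]; linear_combination c * h₁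

theorem isSkewAdjoint_ad_of_mem_H (hB : IsAdmissible H M B) (hc : Codisjoint H M)
    (hHH : ∀ x ∈ H, ∀ y ∈ H, ⁅x, y⁆ ∈ H) (hHM : ∀ h ∈ H, ∀ m ∈ M, ⁅h, m⁆ ∈ M)
    (hspan : H ≤ Submodule.span R {z : L | ∃ x ∈ M, ∃ y ∈ M, ⁅x, y⁆ = z})
    (hMinv : ∀ h ∈ H, ∀ u ∈ M, ∀ v ∈ M, B ⁅h, u⁆ v + B u ⁅h, v⁆ = 0)
    {y : L} (hy : y ∈ H) : B.IsSkewAdjoint (LieAlgebra.ad R L y) := by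
  refine LinearMap.isSkewAdjoint_of_codisjoint hc ?_ ?_ ?_ ?_ <;> intro x hx z hz <;>
    simp only [LieAlgebra.ad_apply]
  · exact eq_neg_of_add_eq_zero_left
      (hB.lie_apply_add_apply_lie_eq_zero_of_mem_H hHH hHM hspan hMinv hy hx hz)
  · rw [hB.orth _ (hHH y hy x hx) z hz, hB.orth x hx _ (hHM y hy z hz), neg_zero]
  · rw [hB.orth' (hHM y hy x hx) hz, hB.orth' hx (hHH y hy z hz), neg_zero]
  · exact eq_neg_of_add_eq_zero_left (hMinv y hy x hx z hz)

theorem isSkewAdjoint_ad_of_mem_M (hB : IsAdmissible H M B) (hc : Codisjoint H M)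
    (hHM : ∀ h ∈ H, ∀ m ∈ M, ⁅h, m⁆ ∈ M) (hMM : ∀ u ∈ M, ∀ v ∈ M, ⁅u, v⁆ ∈ H)
    {y : L} (hy : y ∈ M) : B.IsSkewAdjoint (LieAlgebra.ad R L y) := by
  have hMH : ∀ x ∈ H, ⁅y, x⁆ ∈ M := fun x hx => by
    rw [← lie_skew]
    exact neg_mem (hHM x hx y hy)
  refine LinearMap.isSkewAdjoint_of_codisjoint hc ?_ ?_ ?_ ?_ <;> intro x hx z hz <;>
    simp only [LieAlgebra.ad_apply]
  · rw [hB.orth' (hMH x hx) hz, hB.orth x hx _ (hMH z hz), neg_zero]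
  · rw [hB.apply_lie x hx y hy z hz, ← lie_skew, map_neg, LinearMap.neg_apply]
  · rw [hB.symm, hB.apply_lie z hz y hy x hx, hB.symm x, ← lie_skew z, map_neg,
      LinearMap.neg_apply]
  · rw [hB.orth _ (hMM y hy x hx) z hz, hB.orth' hx (hMM y hy z hz), neg_zero]

theorem lie_invariant (hB : IsAdmissible H M B) (hc : Codisjoint H M)
    (hHH : ∀ x ∈ H, ∀ y ∈ H, ⁅x, y⁆ ∈ H) (hHM : ∀ h ∈ H, ∀ m ∈ M, ⁅h, m⁆ ∈ M)
    (hMM : ∀ u ∈ M, ∀ v ∈ M, ⁅u, v⁆ ∈ H)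
    (hspan : H ≤ Submodule.span R {z : L | ∃ x ∈ M, ∃ y ∈ M, ⁅x, y⁆ = z})
    (hMinv : ∀ h ∈ H, ∀ u ∈ M, ∀ v ∈ M, B ⁅h, u⁆ v + B u ⁅h, v⁆ = 0)
    (x y z : L) : B ⁅x, y⁆ z = B x ⁅y, z⁆ := by
  have hskew :
      H ⊔ M ≤ B.skewAdjointSubmodule.comap (LieAlgebra.ad R L : L →ₗ[R] Module.End R L) :=
    sup_le (fun y hy => (LinearMap.mem_skewAdjointSubmodule _).2
      (hB.isSkewAdjoint_ad_of_mem_H hc hHH hHM hspan hMinv hy))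
      (fun y hy => (LinearMap.mem_skewAdjointSubmodule _).2
      (hB.isSkewAdjoint_ad_of_mem_M hc hHM hMM hy))
  have hy : B.IsSkewAdjoint (LieAlgebra.ad R L y) :=
    (LinearMap.mem_skewAdjointSubmodule _).1 (hskew (hc.eq_top ▸ Submodule.mem_top))
  have := hy x z
  simp only [LieAlgebra.ad_apply, Pi.neg_apply, map_neg] at this
  rw [← lie_skew, map_neg, LinearMap.neg_apply, this, neg_neg]

theorem ext (hB : IsAdmissible H M B) {B' : LinearMap.BilinForm R L} (hB' : IsAdmissible H M B')
    (hc : Codisjoint H M) (hHM : ∀ h ∈ H, ∀ m ∈ M, ⁅h, m⁆ ∈ M)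
    (hspan : H ≤ Submodule.span R {z : L | ∃ x ∈ M, ∃ y ∈ M, ⁅x, y⁆ = z})
    (hMM : ∀ u ∈ M, ∀ v ∈ M, B u v = B' u v) : B = B' := by
  refine LinearMap.ext_on_codisjoint₂ hc (fun x hx y hy => ?_)
    (fun x hx y hy => by rw [hB.orth x hx y hy, hB'.orth x hx y hy])
    (fun x hx y hy => by rw [hB.orth' hx hy, hB'.orth' hx hy]) hMM
  refine LinearMap.eqOn_span' (fun z hz => ?_) (hspan hy)
  obtain ⟨u, hu, v, hv, rfl⟩ := hz
  rw [hB.apply_lie x hx u hu v hv, hB'.apply_lie x hx u hu v hv, hMM _ (hHM x hx u hu) v hv]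

end IsAdmissible

end SymmetricDecomposition

end

theorem unique_invariant_extension_general
    (L : Type*) [LieRing L] [LieAlgebra ℝ L]
    (σ : L →ₗ⁅ℝ⁆ L)
    (H M : Submodule ℝ L)
    (hH : ∀ x, x ∈ H ↔ σ x = x)
    (hcompl : IsCompl H M)
    (hHspan : H = Submodule.span ℝ {z : L | ∃ x ∈ M, ∃ y ∈ M, ⁅x, y⁆ = z})
    (hbracket : ∀ h ∈ H, ∀ m ∈ M, ⁅h, m⁆ ∈ M)
    (Bm : LinearMap.BilinForm ℝ ↥M)
    (hBmsymm : ∀ u v : ↥M, Bm u v = Bm v u)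
    (hBminv : ∀ (h : L) (hh : h ∈ H) (u v : ↥M),
      Bm ⟨⁅h, (u : L)⁆, hbracket h hh u u.2⟩ v
        + Bm u ⟨⁅h, (v : L)⁆, hbracket h hh v v.2⟩ = 0) :
    ∃! B : LinearMap.BilinForm ℝ L,
      (∀ u v : ↥M, B u v = Bm u v) ∧
      (∀ h ∈ H, ∀ m ∈ M, B h m = 0) ∧
      (∀ x y : L, B x y = B y x) ∧
      (∀ x y z : L, B ⁅x, y⁆ z = B x ⁅y, z⁆) := by
  have hMM : ∀ u ∈ M, ∀ v ∈ M, ⁅u, v⁆ ∈ H := fun u hu v hv =>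
    hHspan ▸ Submodule.subset_span ⟨u, hu, v, hv, rfl⟩
  have hHH : ∀ x ∈ H, ∀ y ∈ H, ⁅x, y⁆ ∈ H := fun x hx y hy =>
    (hH _).2 (by rw [LieHom.map_lie, (hH x).1 hx, (hH y).1 hy])
  obtain ⟨B, hBm, hB⟩ := SymmetricDecomposition.exists_isAdmissible hcompl hbracket hMM hHspan.le
    Bm hBmsymm (fun h => hBminv h h.2)
  have hMinv : ∀ h ∈ H, ∀ u ∈ M, ∀ v ∈ M, B ⁅h, u⁆ v + B u ⁅h, v⁆ = 0 :=
    fun h hh u hu v hv => by simpa only [← hBm] using hBminv h hh ⟨u, hu⟩ ⟨v, hv⟩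
  refine ⟨B, ⟨hBm, hB.orth, hB.symm,
    hB.lie_invariant hcompl.codisjoint hHH hbracket hMM hHspan.le hMinv⟩, ?_⟩
  rintro B' ⟨hBm', horth', hsymm', hinv'⟩
  refine (hB.ext ⟨hsymm', horth', fun h _ u _ v _ => (hinv' h u v).symm⟩ hcompl.codisjoint
    hbracket hHspan.le fun u hu v hv => ?_).symm
  rw [hBm ⟨u, hu⟩ ⟨v, hv⟩, hBm' ⟨u, hu⟩ ⟨v, hv⟩]

/-- Given a symmetric decomposition `g = h ⊕ m` with `h = ⁅m,m⁆` and a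
nondegenerate symmetric `ad(h)`-invariant bilinear form `B_m` on `m`, there is a unique
symmetric bilinear form `B` on `g` extending `B_m`, with `B(h,m) = 0`, which is
`ad(g)`-invariant. -/
theorem unique_invariant_extension
    (L : Type*) [LieRing L] [LieAlgebra ℝ L] [FiniteDimensional ℝ L]
    (σ : L →ₗ⁅ℝ⁆ L) (hσ : ∀ x, σ (σ x) = x)
    (H M : Submodule ℝ L)
    (hH : ∀ x, x ∈ H ↔ σ x = x)
    (hM : ∀ x, x ∈ M ↔ σ x = -x)
    (hcompl : IsCompl H M)
    (hHspan : H = Submodule.span ℝ {z : L | ∃ x ∈ M, ∃ y ∈ M, ⁅x, y⁆ = z})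
    (hbracket : ∀ h ∈ H, ∀ m ∈ M, ⁅h, m⁆ ∈ M)
    (Bm : LinearMap.BilinForm ℝ ↥M)
    (hBmsymm : ∀ u v : ↥M, Bm u v = Bm v u)
    (hBmnd : Bm.Nondegenerate)
    (hBminv : ∀ (h : L) (hh : h ∈ H) (u v : ↥M),
      Bm ⟨⁅h, (u : L)⁆, hbracket h hh u u.2⟩ v
        + Bm u ⟨⁅h, (v : L)⁆, hbracket h hh v v.2⟩ = 0) :
    ∃! B : LinearMap.BilinForm ℝ L,
      (∀ u v : ↥M, B u v = Bm u v) ∧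
      (∀ h ∈ H, ∀ m ∈ M, B h m = 0) ∧
      (∀ x y : L, B x y = B y x) ∧
      (∀ x y z : L, B ⁅x, y⁆ z = B x ⁅y, z⁆) :=
  unique_invariant_extension_general L σ H M hH hcompl hHspan hbracket Bm hBmsymm hBminv
end

section
/- Let g be a finite-dimensional real Lie algebra with an involutive Lie algebra automorphism σ whose (+1)-eigenspace h and (−1)-eigenspace m satisfy g = h ⊕ m and h = ⁅m,m⁆, and let B_m be a nondegenerate symmetric bilinear form on m invariant under ad(h). Let B be the unique ad(g)-invariant symmetric bilinear extension of B_m to g with B(h,m) = 0. Then the following are equivalent: (a) B is nondegenerate on g; (b) the representation h → End(m), h ↦ ad(h)|_m, is injective; (c) the only ideal of g contained in h is the zero ideal. -/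
/-!
The radical of `B` is exactly the kernel `𝔨` of the isotropy representation `h → End(m)`.
An `h`-element killing `m` is `B`-orthogonal to `m` by assumption and to `h = ⁅m, m⁆` by invariance;
conversely a radical element has no `m`-component since `B_m` is nondegenerate, and its bracket
with `m` lies in `m` and is `B`-orthogonal to `m`, hence vanishes. Finally `𝔨` is an ideal
(by the Jacobi identity and `g = h ⊕ m`) and contains every ideal inside `h`, because such an
ideal brackets `m` into `h ∩ m = 0`; so `𝔨` is the largest ideal of `g` contained in `h`.
-/

section IsotropyKernel

variable {R L : Type*} [CommRing R] [LieRing L] [LieAlgebra R L] (H M : Submodule R L)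

def isotropyKernel : Submodule R L where
  carrier := {x | x ∈ H ∧ ∀ m ∈ M, ⁅x, m⁆ = 0}
  add_mem' := fun ⟨haH, haM⟩ ⟨hbH, hbM⟩ =>
    ⟨H.add_mem haH hbH, fun m hm => by rw [add_lie, haM m hm, hbM m hm, add_zero]⟩
  zero_mem' := ⟨H.zero_mem, fun m _ => zero_lie m⟩
  smul_mem' := fun c _ ⟨hxH, hxM⟩ =>
    ⟨H.smul_mem c hxH, fun m hm => by rw [smul_lie, hxM m hm, smul_zero]⟩

variable {H M}

theorem mem_isotropyKernel {x : L} : x ∈ isotropyKernel H M ↔ x ∈ H ∧ ∀ m ∈ M, ⁅x, m⁆ = 0 :=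
  Iff.rfl

theorem lie_mem_isotropyKernel (hHH : ∀ x ∈ H, ∀ y ∈ H, ⁅x, y⁆ ∈ H)
    (hHM : ∀ x ∈ H, ∀ m ∈ M, ⁅x, m⁆ ∈ M) (hcodisj : Codisjoint H M) (x : L) {k : L}
    (hk : k ∈ isotropyKernel H M) : ⁅x, k⁆ ∈ isotropyKernel H M := by
  obtain ⟨hkH, hkM⟩ := hk
  obtain ⟨a, b, ha, hb, rfl⟩ := Submodule.codisjoint_iff_exists_add_eq.mp hcodisj x
  have hbk : ⁅b, k⁆ = 0 := by rw [← lie_skew, hkM b hb, neg_zero]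
  rw [add_lie, hbk, add_zero]
  refine ⟨hHH a ha k hkH, fun m hm => ?_⟩
  rw [lie_lie, hkM m hm, lie_zero, zero_sub, neg_eq_zero]
  exact hkM _ (hHM a ha m hm)

theorem LieIdeal.toSubmodule_le_isotropyKernel (hHM : ∀ x ∈ H, ∀ m ∈ M, ⁅x, m⁆ ∈ M)
    (hdisj : Disjoint H M) {I : LieIdeal R L} (hIH : I.toSubmodule ≤ H) :
    I.toSubmodule ≤ isotropyKernel H M := by
  intro x hx
  refine ⟨hIH hx, fun m hm => Submodule.disjoint_def.mp hdisj _ ?_ (hHM x (hIH hx) m hm)⟩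
  rw [← lie_skew]
  exact H.neg_mem (hIH (I.lie_mem hx))

theorem isotropyKernel_eq_bot_iff (hHH : ∀ x ∈ H, ∀ y ∈ H, ⁅x, y⁆ ∈ H)
    (hHM : ∀ x ∈ H, ∀ m ∈ M, ⁅x, m⁆ ∈ M) (hcompl : IsCompl H M) :
    isotropyKernel H M = ⊥ ↔ ∀ I : LieIdeal R L, I.toSubmodule ≤ H → I = ⊥ := by
  constructor
  · intro hK I hIH
    rw [← LieSubmodule.toSubmodule_eq_bot, eq_bot_iff, ← hK]
    exact LieIdeal.toSubmodule_le_isotropyKernel hHM hcompl.disjoint hIH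
  · intro hI
    let K : LieIdeal R L :=
      { isotropyKernel H M with
        lie_mem := lie_mem_isotropyKernel hHH hHM hcompl.codisjoint _ }
    exact (LieSubmodule.toSubmodule_eq_bot (N := K)).mpr (hI K fun _ hx => hx.1)

variable {B : LinearMap.BilinForm R L}

theorem isotropyKernel_le_ker (hBad : ∀ x y z : L, B ⁅x, y⁆ z = B x ⁅y, z⁆)
    (hBHM : ∀ h ∈ H, ∀ m ∈ M, B h m = 0) (hcodisj : Codisjoint H M)
    (hHspan : H ≤ Submodule.span R {z : L | ∃ x ∈ M, ∃ y ∈ M, ⁅x, y⁆ = z}) :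
    isotropyKernel H M ≤ LinearMap.ker B := by
  rintro h ⟨hh, hhM⟩
  rw [LinearMap.mem_ker]
  ext z
  obtain ⟨a, b, ha, hb, rfl⟩ := Submodule.codisjoint_iff_exists_add_eq.mp hcodisj z
  have hspan : Submodule.span R {z : L | ∃ x ∈ M, ∃ y ∈ M, ⁅x, y⁆ = z} ≤ LinearMap.ker (B h) :=
    Submodule.span_le.mpr <| by
      rintro _ ⟨u, hu, v, -, rfl⟩
      rw [SetLike.mem_coe, LinearMap.mem_ker, ← hBad, hhM u hu, map_zero, LinearMap.zero_apply]
  have hBa : B h a = 0 := hspan (hHspan ha)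
  rw [map_add, hBa, hBHM h hh b hb, add_zero, LinearMap.zero_apply]

theorem ker_le_isotropyKernel (hBad : ∀ x y z : L, B ⁅x, y⁆ z = B x ⁅y, z⁆)
    (hBHM : ∀ h ∈ H, ∀ m ∈ M, B h m = 0) (hBmnd : ∀ u ∈ M, (∀ v ∈ M, B u v = 0) → u = 0)
    (hHM : ∀ x ∈ H, ∀ m ∈ M, ⁅x, m⁆ ∈ M) (hcodisj : Codisjoint H M) :
    LinearMap.ker B ≤ isotropyKernel H M := by
  intro x hx
  rw [LinearMap.mem_ker] at hx
  obtain ⟨a, b, ha, hb, rfl⟩ := Submodule.codisjoint_iff_exists_add_eq.mp hcodisj x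
  obtain rfl : b = 0 := hBmnd b hb fun v hv => by
    simpa [hBHM a ha v hv] using LinearMap.congr_fun hx v
  rw [add_zero] at hx ⊢
  refine ⟨ha, fun m hm => hBmnd _ (hHM a ha m hm) fun v _ => ?_⟩
  rw [hBad, hx, LinearMap.zero_apply]

end IsotropyKernel

theorem nondegenerate_iff_faithful_iff_no_ideal_general
    (L : Type*) [LieRing L] [LieAlgebra ℝ L]
    (σ : L →ₗ⁅ℝ⁆ L)
    (H M : Submodule ℝ L)
    (hH : ∀ x, x ∈ H ↔ σ x = x)
    (hM : ∀ x, x ∈ M ↔ σ x = -x)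
    (hcompl : IsCompl H M)
    (hHspan : H = Submodule.span ℝ {z : L | ∃ x ∈ M, ∃ y ∈ M, ⁅x, y⁆ = z})
    (B : LinearMap.BilinForm ℝ L)
    (hBsymm : ∀ x y : L, B x y = B y x)
    (hBad : ∀ x y z : L, B ⁅x, y⁆ z = B x ⁅y, z⁆)
    (hBHM : ∀ h ∈ H, ∀ m ∈ M, B h m = 0)
    -- the restriction of `B` to `m` (i.e. `B_m`) is nondegenerate
    (hBmnd : ∀ u ∈ M, (∀ v ∈ M, B u v = 0) → u = 0) :
    (B.Nondegenerate ↔ ∀ h ∈ H, (∀ m ∈ M, ⁅h, m⁆ = 0) → h = 0) ∧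
    (B.Nondegenerate ↔ ∀ I : LieIdeal ℝ L, I.toSubmodule ≤ H → I = ⊥) := by
  have hHH : ∀ x ∈ H, ∀ y ∈ H, ⁅x, y⁆ ∈ H := fun x hx y hy => by
    rw [hH, LieHom.map_lie, (hH x).1 hx, (hH y).1 hy]
  have hHM : ∀ x ∈ H, ∀ m ∈ M, ⁅x, m⁆ ∈ M := fun x hx m hm => by
    rw [hM, LieHom.map_lie, (hH x).1 hx, (hM m).1 hm, lie_neg]
  have hker : LinearMap.ker B = isotropyKernel H M :=
    le_antisymm (ker_le_isotropyKernel hBad hBHM hBmnd hHM hcompl.codisjoint)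
      (isotropyKernel_le_ker hBad hBHM hcompl.codisjoint hHspan.le)
  have hnd : B.Nondegenerate ↔ isotropyKernel H M = ⊥ := by
    refine (LinearMap.IsRefl.nondegenerate_iff_separatingLeft fun x y h => ?_).trans ?_
    · rwa [hBsymm]
    · rw [LinearMap.separatingLeft_iff_ker_eq_bot, hker]
  have hfaithful : isotropyKernel H M = ⊥ ↔ ∀ h ∈ H, (∀ m ∈ M, ⁅h, m⁆ = 0) → h = 0 := by
    simp only [Submodule.eq_bot_iff, mem_isotropyKernel, and_imp]
  exact ⟨hnd.trans hfaithful, hnd.trans (isotropyKernel_eq_bot_iff hHH hHM hcompl)⟩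

/-- For the unique `ad(g)`-invariant symmetric extension `B` (with
`B(h,m) = 0`) of a nondegenerate invariant form on `m`, the following are equivalent:
(a) `B` is nondegenerate on `g`; (b) `h → End(m)`, `h ↦ ad(h)|_m`, is injective;
(c) the only ideal of `g` contained in `h` is zero. -/
theorem nondegenerate_iff_faithful_iff_no_ideal
    (L : Type*) [LieRing L] [LieAlgebra ℝ L] [FiniteDimensional ℝ L]
    (σ : L →ₗ⁅ℝ⁆ L) (hσ : ∀ x, σ (σ x) = x)
    (H M : Submodule ℝ L)
    (hH : ∀ x, x ∈ H ↔ σ x = x)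
    (hM : ∀ x, x ∈ M ↔ σ x = -x)
    (hcompl : IsCompl H M)
    (hHspan : H = Submodule.span ℝ {z : L | ∃ x ∈ M, ∃ y ∈ M, ⁅x, y⁆ = z})
    (B : LinearMap.BilinForm ℝ L)
    (hBsymm : ∀ x y : L, B x y = B y x)
    (hBad : ∀ x y z : L, B ⁅x, y⁆ z = B x ⁅y, z⁆)
    (hBHM : ∀ h ∈ H, ∀ m ∈ M, B h m = 0)
    -- the restriction of `B` to `m` (i.e. `B_m`) is nondegenerate
    (hBmnd : ∀ u ∈ M, (∀ v ∈ M, B u v = 0) → u = 0) :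
    (B.Nondegenerate ↔ ∀ h ∈ H, (∀ m ∈ M, ⁅h, m⁆ = 0) → h = 0) ∧
    (B.Nondegenerate ↔ ∀ I : LieIdeal ℝ L, I.toSubmodule ≤ H → I = ⊥) :=
  nondegenerate_iff_faithful_iff_no_ideal_general L σ H M hH hM hcompl hHspan B hBsymm hBad hBHM
    hBmnd
end

section
/- (Generalized Witt decomposition.) Let V be a finite-dimensional real vector space, B a nondegenerate symmetric bilinear form on V, and F ⊆ V a linear subspace. Then there exist subspaces E, W, U, E* of V such that V = E ⊕ W ⊕ U ⊕ E* (internal direct sum), E = F ∩ F^⊥, E ⊕ W = F, E ⊕ U = F^⊥, both E and E* are totally isotropic, B(U,W) = 0, and B(E ⊕ E*, U ⊕ W) = 0. -/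
/-!
Put `E = F ⊓ F^⊥` and choose complements `W` of `E` in `F` and `U` of `E` in `F^⊥`. Since `E` is
the radical of `B` on `F` and (because `F^⊥⊥ = F`) also on `F^⊥`, the form is nondegenerate on
`W` and on `U`, hence on their orthogonal sum `P = W ⊕ U`, so `V = P ⊕ P^⊥`. The space
`Z = P^⊥` is nondegenerate, has dimension `2 dim E` and contains the totally isotropic `E`.
For a complement `C` of `E` in `Z` the pairing `E × C → ℝ` is then perfect, so there is a
linear `g : C → E` with `B(c', g c) = B(c, c') / 2`, and the graph `{c - g c}` is a totally
isotropic complement `E*` of `E` in `Z`.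

Nondegeneracy of `B` on a subspace `W` is expressed as `Disjoint W (B.orthogonal W)`.
-/

open Module

namespace Submodule

variable {R M : Type*} [Ring R] [AddCommGroup M] [Module R M] {E C : Submodule R M}

theorem sup_range_subtype_sub_comp (g : C →ₗ[R] E) :
    E ⊔ LinearMap.range (C.subtype - E.subtype ∘ₗ g) = E ⊔ C := by
  refine le_antisymm (sup_le le_sup_left ?_) (sup_le le_sup_left fun c hc => ?_)
  · rintro _ ⟨c, rfl⟩
    exact sub_mem (mem_sup_right c.2) (mem_sup_left (g c).2)
  · have hc' : c = g ⟨c, hc⟩ + (c - g ⟨c, hc⟩) := (add_sub_cancel _ _).symm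
    rw [hc']
    exact add_mem (mem_sup_left (g _).2) (mem_sup_right ⟨⟨c, hc⟩, rfl⟩)

theorem disjoint_range_subtype_sub_comp (hEC : Disjoint E C) (g : C →ₗ[R] E) :
    Disjoint E (LinearMap.range (C.subtype - E.subtype ∘ₗ g)) := by
  rw [disjoint_def]
  rintro _ hx ⟨c, rfl⟩
  have hcE : (c : M) ∈ E := by simpa using add_mem hx (g c).2
  have hc : c = 0 := Subtype.ext (disjoint_def.mp hEC c hcE c.2)
  simp [hc]

theorem finrank_sup_of_disjoint {K V : Type*} [DivisionRing K] [AddCommGroup V] [Module K V]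
    [FiniteDimensional K V] {p q : Submodule K V} (h : Disjoint p q) :
    finrank K ↥(p ⊔ q) = finrank K p + finrank K q := by
  rw [← finrank_sup_add_finrank_inf_eq, h.eq_bot, finrank_bot, add_zero]

end Submodule

theorem DirectSum.isInternal_fin_four_of_isCompl {R M : Type*} [Ring R] [AddCommGroup M]
    [Module R M] {a b c d : Submodule R M} (had : Disjoint a d) (hbc : Disjoint b c)
    (h : IsCompl (a ⊔ d) (b ⊔ c)) : DirectSum.IsInternal ![a, b, c, d] := by
  rw [DirectSum.isInternal_submodule_iff_iSupIndep_and_iSup_eq_top]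
  have disjoint_of_le {i : Fin 4} {x y z : Submodule R M}
      (hx : Disjoint (![a, b, c, d] i) (x ⊔ (y ⊔ z)))
      (hle : ∀ j ≠ i, ![a, b, c, d] j = x ∨ ![a, b, c, d] j = y ∨ ![a, b, c, d] j = z) :
      Disjoint (![a, b, c, d] i) (⨆ (j) (_ : j ≠ i), ![a, b, c, d] j) := by
    refine hx.mono_right (iSup₂_le fun j hj => ?_)
    rcases hle j hj with h | h | h <;> rw [h]
    exacts [le_sup_left, le_sup_of_le_right le_sup_left, le_sup_of_le_right le_sup_right]
  refine ⟨iSupIndep_def.mpr fun i => ?_, ?_⟩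
  · fin_cases i
    · refine disjoint_of_le (had.disjoint_sup_right_of_disjoint_sup_left h.disjoint) ?_
      intro j hj; fin_cases j <;> simp_all
    · refine disjoint_of_le (hbc.disjoint_sup_right_of_disjoint_sup_left h.symm.disjoint) ?_
      intro j hj; fin_cases j <;> simp_all
    · refine disjoint_of_le (hbc.symm.disjoint_sup_right_of_disjoint_sup_left
        (sup_comm b c ▸ h.symm.disjoint)) ?_
      intro j hj; fin_cases j <;> simp_all
    · refine disjoint_of_le (had.symm.disjoint_sup_right_of_disjoint_sup_left
        (sup_comm a d ▸ h.disjoint)) ?_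
      intro j hj; fin_cases j <;> simp_all
  · rw [eq_top_iff, ← h.sup_eq_top]
    refine sup_le (sup_le ?_ ?_) (sup_le ?_ ?_) <;>
      [exact le_iSup ![a, b, c, d] 0; exact le_iSup ![a, b, c, d] 3;
        exact le_iSup ![a, b, c, d] 1; exact le_iSup ![a, b, c, d] 2]

namespace LinearMap.BilinForm

section CommSemiring

variable {R M : Type*} [CommSemiring R] [AddCommMonoid M] [Module R M]
  {B : LinearMap.BilinForm R M}

theorem orthogonal_sup (N L : Submodule R M) :
    B.orthogonal (N ⊔ L) = B.orthogonal N ⊓ B.orthogonal L := by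
  refine le_antisymm (le_inf (orthogonal_le le_sup_left) (orthogonal_le le_sup_right)) ?_
  rintro x ⟨hN, hL⟩ y hy
  obtain ⟨n, hn, l, hl, rfl⟩ := Submodule.mem_sup.mp hy
  simp [LinearMap.add_apply, hN n hn, hL l hl]

theorem radical_le_orthogonal_sup (hB : B.IsRefl) {F W U : Submodule R M} (hWF : W ≤ F)
    (hUF : U ≤ B.orthogonal F) : F ⊓ B.orthogonal F ≤ B.orthogonal (W ⊔ U) := by
  rw [orthogonal_sup]
  exact fun e he => ⟨fun w hw => he.2 w (hWF hw), fun u hu => hB _ _ (hUF hu e he.1)⟩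

end CommSemiring

section CommRing

variable {R M : Type*} [CommRing R] [AddCommGroup M] [Module R M]
  {B : LinearMap.BilinForm R M}

theorem disjoint_orthogonal_of_radical_compl (hB : B.IsRefl) {F W : Submodule R M}
    (hW : Disjoint (F ⊓ B.orthogonal F) W) (hWF : F ⊓ B.orthogonal F ⊔ W = F) :
    Disjoint W (B.orthogonal W) := by
  rw [disjoint_iff_inf_le]
  intro x ⟨hxW, hxW'⟩
  have hxF : x ∈ F := hWF ▸ Submodule.mem_sup_right hxW
  have hxE : x ∈ B.orthogonal (F ⊓ B.orthogonal F) := fun e he => hB x e (he.2 x hxF)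
  have hxF' : x ∈ B.orthogonal F := by
    rw [← hWF, orthogonal_sup]
    exact ⟨hxE, hxW'⟩
  exact hW.le_bot ⟨⟨hxF, hxF'⟩, hxW⟩

theorem disjoint_orthogonal_sup (hB : B.IsRefl) {W U : Submodule R M}
    (hWU : W ≤ B.orthogonal U) (hW : Disjoint W (B.orthogonal W))
    (hU : Disjoint U (B.orthogonal U)) : Disjoint (W ⊔ U) (B.orthogonal (W ⊔ U)) := by
  rw [Submodule.disjoint_def, orthogonal_sup]
  rintro _ hv ⟨hvW, hvU⟩
  obtain ⟨w, hw, u, hu, rfl⟩ := Submodule.mem_sup.mp hv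
  have hwU : w ∈ B.orthogonal U := hWU hw
  have huW : u ∈ B.orthogonal W := fun w' hw' => hB _ _ (hWU hw' u hu)
  have hw0 : w = 0 := Submodule.disjoint_def.mp hW w hw (by simpa using sub_mem hvW huW)
  have hu0 : u = 0 := Submodule.disjoint_def.mp hU u hu (by simpa using sub_mem hvU hwU)
  simp [hw0, hu0]

end CommRing

variable {K V : Type*} [Field K] [AddCommGroup V] [Module K V] {B : LinearMap.BilinForm K V}
  {Z E C : Submodule K V}

theorem bijective_dualMap_flip_comp [FiniteDimensional K V] (hZ : Disjoint Z (B.orthogonal Z))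
    (hE : E ≤ B.orthogonal E) (hECZ : E ⊔ C = Z) (hdim : finrank K E = finrank K C) :
    Function.Bijective (C.subtype.dualMap ∘ₗ B.flip ∘ₗ E.subtype) := by
  have hinj : Function.Injective (C.subtype.dualMap ∘ₗ B.flip ∘ₗ E.subtype) := by
    rw [← LinearMap.ker_eq_bot, eq_bot_iff]
    intro e he
    have heZ : (e : V) ∈ B.orthogonal (E ⊔ C) := by
      rw [orthogonal_sup]
      exact ⟨hE e.2, fun c hc => LinearMap.congr_fun he ⟨c, hc⟩⟩
    rw [hECZ] at heZ
    exact Subtype.ext (Submodule.disjoint_def.mp hZ e (hECZ ▸ Submodule.mem_sup_left e.2) heZ)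
  refine ⟨hinj, (LinearMap.injective_iff_surjective_of_finrank_eq_finrank ?_).mp hinj⟩
  rw [Subspace.dual_finrank_eq, hdim]

theorem range_subtype_sub_comp_le_orthogonal [NeZero (2 : K)] (hB : B.IsSymm)
    (hE : E ≤ B.orthogonal E) (g : C →ₗ[K] E) (hg : ∀ c c' : C, B c' (g c) = 2⁻¹ * B c c') :
    LinearMap.range (C.subtype - E.subtype ∘ₗ g) ≤
      B.orthogonal (LinearMap.range (C.subtype - E.subtype ∘ₗ g)) := by
  rintro _ ⟨c', rfl⟩ _ ⟨c, rfl⟩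
  change B (c - g c) (c' - g c') = 0
  have hgg : B (g c) (g c') = 0 := hE (g c').2 _ (g c).2
  rw [map_sub, map_sub, LinearMap.sub_apply, LinearMap.sub_apply, hgg, hg, hB.eq (g c), hg,
    hB.eq c']
  field_simp
  ring

theorem exists_isotropic_compl [NeZero (2 : K)] [FiniteDimensional K V] (hB : B.IsSymm)
    (hZ : Disjoint Z (B.orthogonal Z)) (hEZ : E ≤ Z) (hE : E ≤ B.orthogonal E)
    (hdim : finrank K Z = 2 * finrank K E) :
    ∃ E' : Submodule K V, E' ≤ B.orthogonal E' ∧ Disjoint E E' ∧ E ⊔ E' = Z := by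
  obtain ⟨C, hEC, hECZ⟩ := IsModularLattice.exists_disjoint_and_sup_eq hEZ
  have hdimC : finrank K E = finrank K C := by
    have := Submodule.finrank_sup_of_disjoint hEC
    rw [hECZ] at this
    omega
  let A := LinearEquiv.ofBijective _ (bijective_dualMap_flip_comp hZ hE hECZ hdimC)
  let halfB : C →ₗ[K] Dual K C := (2⁻¹ : K) • C.subtype.dualMap ∘ₗ B.domRestrict C
  let g : C →ₗ[K] E := A.symm.toLinearMap ∘ₗ halfB
  have hg (c c' : C) : B c' (g c) = 2⁻¹ * B c c' :=
    LinearMap.congr_fun (A.apply_symm_apply (halfB c)) c'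
  exact ⟨_, range_subtype_sub_comp_le_orthogonal hB hE g hg,
    Submodule.disjoint_range_subtype_sub_comp hEC g,
    (Submodule.sup_range_subtype_sub_comp g).trans hECZ⟩

variable {F W U : Submodule K V}

theorem disjoint_orthogonal_sup_of_radical_compl [FiniteDimensional K V] (hBnd : B.Nondegenerate)
    (hB : B.IsRefl) (hW : Disjoint (F ⊓ B.orthogonal F) W) (hWF : F ⊓ B.orthogonal F ⊔ W = F)
    (hU : Disjoint (F ⊓ B.orthogonal F) U) (hUF : F ⊓ B.orthogonal F ⊔ U = B.orthogonal F) :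
    Disjoint (W ⊔ U) (B.orthogonal (W ⊔ U)) := by
  have hradical : B.orthogonal F ⊓ B.orthogonal (B.orthogonal F) = F ⊓ B.orthogonal F := by
    rw [orthogonal_orthogonal hBnd hB, inf_comm]
  have hWU : W ≤ B.orthogonal U := fun w hw u hu =>
    hB _ _ ((le_sup_right.trans hUF.le) hu w ((le_sup_right.trans hWF.le) hw))
  exact disjoint_orthogonal_sup hB hWU (disjoint_orthogonal_of_radical_compl hB hW hWF)
    (disjoint_orthogonal_of_radical_compl hB (hradical ▸ hU) (hradical ▸ hUF))

theorem finrank_orthogonal_sup_of_radical_compl [FiniteDimensional K V] (hBnd : B.Nondegenerate)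
    (hW : Disjoint (F ⊓ B.orthogonal F) W) (hWF : F ⊓ B.orthogonal F ⊔ W = F)
    (hU : Disjoint (F ⊓ B.orthogonal F) U) (hUF : F ⊓ B.orthogonal F ⊔ U = B.orthogonal F)
    (hWU : Disjoint W U) :
    finrank K (B.orthogonal (W ⊔ U)) = 2 * finrank K ↥(F ⊓ B.orthogonal F) := by
  have hdimF := Submodule.finrank_sup_of_disjoint hW
  have hdimF' := Submodule.finrank_sup_of_disjoint hU
  rw [hWF] at hdimF
  rw [hUF, finrank_orthogonal hBnd] at hdimF'
  rw [finrank_orthogonal hBnd, Submodule.finrank_sup_of_disjoint hWU]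
  have := F.finrank_le
  omega

end LinearMap.BilinForm

open LinearMap.BilinForm

/-- **generalized Witt decomposition.** Given a nondegenerate symmetric
bilinear form `B` on a finite-dimensional real vector space `V` and a subspace `F`, there is
a decomposition `V = E ⊕ W ⊕ U ⊕ E*` with `E = F ∩ F^⊥`, `E ⊕ W = F`, `E ⊕ U = F^⊥`, `E` and
`E*` totally isotropic, `U ⟂ W` and `(E ⊕ E*) ⟂ (U ⊕ W)`. -/
theorem generalized_witt_decomposition
    (V : Type*) [AddCommGroup V] [Module ℝ V] [FiniteDimensional ℝ V]
    (B : LinearMap.BilinForm ℝ V)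
    (hBnd : B.Nondegenerate)
    (hBsymm : ∀ x y : V, B x y = B y x)
    (F : Submodule ℝ V) :
    ∃ E W U E' : Submodule ℝ V,
      DirectSum.IsInternal (![E, W, U, E'] : Fin 4 → Submodule ℝ V) ∧
      E = F ⊓ B.orthogonal F ∧
      E ⊔ W = F ∧
      E ⊔ U = B.orthogonal F ∧
      (∀ x ∈ E, ∀ y ∈ E, B x y = 0) ∧
      (∀ x ∈ E', ∀ y ∈ E', B x y = 0) ∧
      (∀ x ∈ U, ∀ y ∈ W, B x y = 0) ∧
      (∀ x ∈ E ⊔ E', ∀ y ∈ U ⊔ W, B x y = 0) := by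
  have hB : B.IsSymm := ⟨hBsymm⟩
  obtain ⟨W, hW, hWF⟩ := IsModularLattice.exists_disjoint_and_sup_eq
    (inf_le_left : F ⊓ B.orthogonal F ≤ F)
  obtain ⟨U, hU, hUF⟩ := IsModularLattice.exists_disjoint_and_sup_eq
    (inf_le_right : F ⊓ B.orthogonal F ≤ B.orthogonal F)
  have hWle : W ≤ F := le_sup_right.trans hWF.le
  have hUle : U ≤ B.orthogonal F := le_sup_right.trans hUF.le
  have hWU : Disjoint W U :=
    disjoint_iff_inf_le.mpr ((le_inf inf_le_left (inf_le_inf hWle hUle)).trans hW.symm.le_bot)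
  have hP := disjoint_orthogonal_sup_of_radical_compl hBnd hB.isRefl hW hWF hU hUF
  have hZ : Disjoint (B.orthogonal (W ⊔ U)) (B.orthogonal (B.orthogonal (W ⊔ U))) := by
    rw [orthogonal_orthogonal hBnd hB.isRefl]
    exact hP.symm
  obtain ⟨E', hE', hEE', hEE'Z⟩ := exists_isotropic_compl hB hZ
    (radical_le_orthogonal_sup hB.isRefl hWle hUle) (inf_le_right.trans (orthogonal_le inf_le_left))
    (finrank_orthogonal_sup_of_radical_compl hBnd hW hWF hU hUF hWU)
  have hPZ := (isCompl_orthogonal_iff_disjoint hB.isRefl).mpr hP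
  refine ⟨_, W, U, E', DirectSum.isInternal_fin_four_of_isCompl hEE' hWU (hEE'Z ▸ hPZ.symm), rfl,
    hWF, hUF, fun x hx y hy => hy.2 x hx.1, fun x hx y hy => hE' hy x hx,
    fun u hu w hw => hB.eq u w ▸ hUle hu w (hWle hw), fun x hx y hy => ?_⟩
  rw [hEE'Z] at hx
  exact hB.eq y x ▸ hx y (by rwa [sup_comm])
end

section
/- Let V be a finite-dimensional real vector space, B a nondegenerate symmetric bilinear form on V, F ⊆ V a subspace, and E := F ∩ F^⊥. Let Γ := {γ ∈ O(V,B) : γ(F) = F}, and let Γ_d := {γ ∈ Γ : γ restricts to the identity on E and the maps induced by γ on the quotients F/E and F^⊥/E are the identity}. Then Γ_d is a normal subgroup of Γ, and for every (F,V,B)-adapted decomposition V = E ⊕ W ⊕ U ⊕ E*, the subgroup Γ_b := {γ ∈ Γ : γ(W) = W, γ(U) = U, γ(E*) = E*} satisfies Γ_d ∩ Γ_b = {1} and Γ = Γ_d · Γ_b; consequently Γ is isomorphic to the semidirect product Γ_d ⋊ Γ_b (with Γ_b acting by conjugation). -/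
/-!
Every `γ ∈ Γ` preserves `E = F ∩ F^⊥` as well as `F` and `F^⊥`, so with respect to
`V = E ⊕ W ⊕ U ⊕ E'` it is block triangular. Since `B` pairs `E` only with `E'` and `W`, `U`
only with themselves, the diagonal blocks of `γ` already preserve `B`; hence the block-diagonal
part `ρ` of `γ` lies in `Γ_b`, and `γ ρ⁻¹`, which differs from the identity only by the
off-diagonal blocks, lies in `Γ_d`. Conversely an element of `Γ_d ∩ Γ_b` fixes `E`, fixes `W`
and `U` (it moves them only inside `E`, which meets them trivially), and fixes `E'` because `E'`
pairs nondegenerately with the fixed subspace `E`.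
-/

namespace Subgroup

theorem exists_mulEquiv_semidirectProduct {A : Type*} [Group A] {G N H : Subgroup A}
    (hN : N ≤ G) (hH : H ≤ G) (hnormal : ∀ g ∈ G, ∀ n ∈ N, g * n * g⁻¹ ∈ N)
    (hdisj : N ⊓ H = ⊥) (hmul : ∀ g ∈ G, ∃ n ∈ N, ∃ h ∈ H, g = n * h) :
    ∃ φ : H →* MulAut N, Nonempty (G ≃* N ⋊[φ] H) := by
  have : (N.subgroupOf G).Normal := ⟨fun n hn g => hnormal g g.2 n hn⟩
  have hc : (N.subgroupOf G).IsComplement' (H.subgroupOf G) := by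
    refine isComplement'_of_disjoint_and_mul_eq_univ ?_ ?_
    · rw [disjoint_def]
      intro g hgN hgH
      have hg : (g : A) ∈ N ⊓ H := ⟨hgN, hgH⟩
      rw [hdisj, mem_bot] at hg
      exact Subtype.ext hg
    · refine Set.eq_univ_of_forall fun g => ?_
      obtain ⟨n, hn, h, hh, hg⟩ := hmul g g.2
      exact ⟨⟨n, hN hn⟩, hn, ⟨h, hH hh⟩, hh, Subtype.ext hg.symm⟩
  exact ⟨_, ⟨(SemidirectProduct.mulEquivSubgroup hc).symm.trans
    (SemidirectProduct.congr' (subgroupOfEquivOfLe hN) (subgroupOfEquivOfLe hH))⟩⟩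

end Subgroup

namespace DirectSum.IsInternal

variable {ι R M : Type*} [DecidableEq ι] [Ring R] [AddCommGroup M] [Module R M]
  {A : ι → Submodule R M}

noncomputable def proj (h : IsInternal A) (i : ι) : M →ₗ[R] M :=
  (A i).subtype ∘ₗ component R ι (fun i => A i) i ∘ₗ
    (LinearEquiv.ofBijective (coeLinearMap A) h).symm.toLinearMap

theorem proj_mem (h : IsInternal A) (i : ι) (x : M) : h.proj i x ∈ A i :=
  (component R ι (fun i => A i) i _).2

theorem proj_apply_of_mem (h : IsInternal A) {i : ι} {x : M} (hx : x ∈ A i) :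
    h.proj i x = x := by
  simp [proj, ← apply_eq_component, h.ofBijective_coeLinearMap_of_mem hx]

theorem proj_apply_of_mem_of_ne (h : IsInternal A) {i j : ι} {x : M} (hx : x ∈ A i)
    (hij : i ≠ j) : h.proj j x = 0 := by
  simp [proj, ← apply_eq_component, h.ofBijective_coeLinearMap_of_mem_ne hij hx]

theorem proj_proj_of_ne (h : IsInternal A) {i j : ι} (hij : i ≠ j) (x : M) :
    h.proj j (h.proj i x) = 0 :=
  h.proj_apply_of_mem_of_ne (h.proj_mem i x) hij

theorem eq_zero_of_mem_of_mem (h : IsInternal A) {i j : ι} (hij : i ≠ j) {x : M} (hi : x ∈ A i)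
    (hj : x ∈ A j) : x = 0 := by
  rw [← h.proj_apply_of_mem hj, h.proj_apply_of_mem_of_ne hi hij]

theorem sub_proj_mem_of_mem_sup (h : IsInternal A) {i j : ι} (hij : i ≠ j) {x : M}
    (hx : x ∈ A i ⊔ A j) : x - h.proj j x ∈ A i := by
  obtain ⟨a, ha, b, hb, rfl⟩ := Submodule.mem_sup.1 hx
  rwa [map_add, h.proj_apply_of_mem_of_ne ha hij, h.proj_apply_of_mem hb, zero_add,
    add_sub_cancel_right]

theorem proj_eq_zero_of_mem_sup (h : IsInternal A) {i j k : ι} (hik : i ≠ k) (hjk : j ≠ k)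
    {x : M} (hx : x ∈ A i ⊔ A j) : h.proj k x = 0 := by
  obtain ⟨a, ha, b, hb, rfl⟩ := Submodule.mem_sup.1 hx
  rw [map_add, h.proj_apply_of_mem_of_ne ha hik, h.proj_apply_of_mem_of_ne hb hjk, add_zero]

variable [Fintype ι]

theorem sum_proj (h : IsInternal A) (x : M) : ∑ i, h.proj i x = x := by
  set e := LinearEquiv.ofBijective (coeLinearMap A) h
  calc ∑ i, h.proj i x = coeLinearMap A (∑ i, of (fun i => A i) i (e.symm x i)) := by
        simp [map_sum, coeLinearMap_of, proj, e, ← apply_eq_component]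
    _ = x := by rw [sum_univ_of]; exact e.apply_symm_apply x

theorem linearMap_ext (h : IsInternal A) {N : Type*} [AddCommGroup N] [Module R N]
    {f g : M →ₗ[R] N}
    (hfg : ∀ i, ∀ x ∈ A i, f x = g x) : f = g := by
  ext x
  rw [← h.sum_proj x, map_sum, map_sum]
  exact Finset.sum_congr rfl fun i _ => hfg i _ (h.proj_mem i x)

noncomputable def blockDiag (h : IsInternal A) (f : M →ₗ[R] M) : M →ₗ[R] M :=
  ∑ i, h.proj i ∘ₗ f ∘ₗ h.proj i

theorem blockDiag_apply_of_mem (h : IsInternal A) (f : M →ₗ[R] M) {i : ι} {x : M}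
    (hx : x ∈ A i) :
    h.blockDiag f x = h.proj i (f x) := by
  rw [blockDiag, LinearMap.sum_apply, Finset.sum_eq_single i]
  · simp [h.proj_apply_of_mem hx]
  · intro j _ hji
    simp [h.proj_apply_of_mem_of_ne hx hji.symm]
  · simp

theorem proj_blockDiag (h : IsInternal A) (f : M →ₗ[R] M) (i : ι) (x : M) :
    h.proj i (h.blockDiag f x) = h.proj i (f (h.proj i x)) := by
  rw [blockDiag, LinearMap.sum_apply, map_sum, Finset.sum_eq_single i]
  · simp [h.proj_apply_of_mem (h.proj_mem i _)]
  · intro j _ hji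
    simp [h.proj_proj_of_ne hji]
  · simp

theorem blockDiag_mem (h : IsInternal A) (f : M →ₗ[R] M) (i : ι) {x : M} (hx : x ∈ A i) :
    h.blockDiag f x ∈ A i := by
  rw [h.blockDiag_apply_of_mem f hx]
  exact h.proj_mem i _

theorem sub_blockDiag_mem (h : IsInternal A) {f : M →ₗ[R] M} {i j : ι} (hij : i ≠ j)
    (hi : ∀ x ∈ A i, f x ∈ A i) (hj : ∀ x ∈ A j, f x ∈ A i ⊔ A j) {x : M}
    (hx : x ∈ A i ⊔ A j) : f x - h.blockDiag f x ∈ A i := by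
  suffices A i ⊔ A j ≤ (A i).comap (f - h.blockDiag f) from this hx
  refine sup_le (fun y hy => ?_) (fun y hy => ?_) <;>
    simp only [Submodule.mem_comap, LinearMap.sub_apply]
  · rw [h.blockDiag_apply_of_mem f hy, h.proj_apply_of_mem (hi y hy), sub_self]
    exact zero_mem _
  · rw [h.blockDiag_apply_of_mem f hy]
    exact h.sub_proj_mem_of_mem_sup hij (hj y hy)

end DirectSum.IsInternal

namespace LinearEquiv

variable {R M : Type*} [Ring R] [AddCommGroup M] [Module R M]

theorem apply_mem_iff_of_map_eq {γ : M ≃ₗ[R] M} {S : Submodule R M}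
    (hS : S.map (γ : M →ₗ[R] M) = S) {x : M} : γ x ∈ S ↔ x ∈ S := by
  conv_lhs => rw [← hS]
  rw [Submodule.mem_map_equiv, symm_apply_apply]

theorem symm_apply_mem_iff_of_map_eq {γ : M ≃ₗ[R] M} {S : Submodule R M}
    (hS : S.map (γ : M →ₗ[R] M) = S) {x : M} : γ.symm x ∈ S ↔ x ∈ S := by
  rw [← apply_mem_iff_of_map_eq hS, apply_symm_apply]

theorem map_eq_of_map_le {K V : Type*} [DivisionRing K] [AddCommGroup V] [Module K V]
    [FiniteDimensional K V] (γ : V ≃ₗ[K] V) {S : Submodule K V}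
    (hS : S.map (γ : V →ₗ[K] V) ≤ S) :
    S.map (γ : V →ₗ[K] V) = S :=
  Submodule.eq_of_le_of_finrank_eq hS (γ.finrank_map_eq S)

theorem conj_sub_mem {γ δ : M ≃ₗ[R] M} {S T : Submodule R M}
    (hS : S.map (γ : M →ₗ[R] M) = S) (hT : T.map (γ : M →ₗ[R] M) = T)
    (hδ : ∀ x ∈ S, δ x - x ∈ T) {x : M} (hx : x ∈ S) : (γ * δ * γ⁻¹) x - x ∈ T := by
  have h := apply_mem_iff_of_map_eq hT |>.2 (hδ _ (symm_apply_mem_iff_of_map_eq hS |>.2 hx))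
  rwa [map_sub, apply_symm_apply] at h

theorem mul_inv_sub_mem {γ ρ : M ≃ₗ[R] M} {S T : Submodule R M}
    (hS : S.map (ρ : M →ₗ[R] M) = S)
    (hγρ : ∀ x ∈ S, γ x - ρ x ∈ T) {x : M} (hx : x ∈ S) : (γ * ρ⁻¹) x - x ∈ T := by
  have h := hγρ _ (symm_apply_mem_iff_of_map_eq hS |>.2 hx)
  rwa [apply_symm_apply] at h

end LinearEquiv

namespace LinearMap.BilinForm

variable {R V : Type*} [CommRing R] [AddCommGroup V] [Module R V] {B : LinearMap.BilinForm R V}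

theorem map_orthogonal_eq {γ : V ≃ₗ[R] V} (hγ : ∀ x y, B (γ x) (γ y) = B x y)
    {F : Submodule R V} (hF : F.map (γ : V →ₗ[R] V) = F) :
    (B.orthogonal F).map (γ : V →ₗ[R] V) = B.orthogonal F := by
  ext y
  simp only [Submodule.mem_map_equiv, mem_orthogonal_iff]
  constructor
  · intro h n hn
    rw [← γ.apply_symm_apply n, ← γ.apply_symm_apply y, hγ]
    exact h _ (LinearEquiv.symm_apply_mem_iff_of_map_eq hF |>.2 hn)
  · intro h n hn
    rw [← hγ, γ.apply_symm_apply]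
    exact h _ (LinearEquiv.apply_mem_iff_of_map_eq hF |>.2 hn)

theorem map_inf_orthogonal_eq {γ : V ≃ₗ[R] V} (hγ : ∀ x y, B (γ x) (γ y) = B x y)
    {F : Submodule R V} (hF : F.map (γ : V →ₗ[R] V) = F) :
    (F ⊓ B.orthogonal F).map (γ : V →ₗ[R] V) = F ⊓ B.orthogonal F := by
  rw [Submodule.map_inf _ γ.injective, hF, map_orthogonal_eq hγ hF]

theorem injective_of_isometry (hB : B.Nondegenerate) {f : V →ₗ[R] V}
    (hf : ∀ x y, B (f x) (f y) = B x y) : Function.Injective f :=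
  (injective_iff_map_eq_zero f).2 fun x hx => hB.1 x fun y => by
    rw [← hf, hx, map_zero, LinearMap.zero_apply]

/-- The defining condition of `Γ_d`: `δ` induces the identity on `E`, `F/E` and `F^⊥/E`. -/
def ActsTriviallyOnSubquotients (B : LinearMap.BilinForm R V) (F E : Submodule R V)
    (δ : V ≃ₗ[R] V) : Prop :=
  (∀ x ∈ E, δ x = x) ∧ (∀ x ∈ F, δ x - x ∈ E) ∧ (∀ x ∈ B.orthogonal F, δ x - x ∈ E)

theorem ActsTriviallyOnSubquotients.conj {F E : Submodule R V} {γ δ : V ≃ₗ[R] V}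
    (hE : E = F ⊓ B.orthogonal F) (hγ : ∀ x y, B (γ x) (γ y) = B x y)
    (hγF : F.map (γ : V →ₗ[R] V) = F) (hδ : ActsTriviallyOnSubquotients B F E δ) :
    ActsTriviallyOnSubquotients B F E (γ * δ * γ⁻¹) := by
  have hγF' := map_orthogonal_eq hγ hγF
  have hγE : E.map (γ : V →ₗ[R] V) = E := hE ▸ map_inf_orthogonal_eq hγ hγF
  refine ⟨fun x hx => ?_, fun x hx => γ.conj_sub_mem hγF hγE hδ.2.1 hx,
    fun x hx => γ.conj_sub_mem hγF' hγE hδ.2.2 hx⟩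
  have hδE : ∀ x ∈ E, δ x - x ∈ (⊥ : Submodule R V) := fun x hx => by
    rw [Submodule.mem_bot, sub_eq_zero, hδ.1 x hx]
  exact sub_eq_zero.1 (γ.conj_sub_mem hγE (Submodule.map_bot _) hδE hx)

end LinearMap.BilinForm

structure IsAdaptedDecomposition {R V : Type*} [CommRing R] [AddCommGroup V] [Module R V]
    (B : LinearMap.BilinForm R V) (F E W U E' : Submodule R V) : Prop where
  eq_inf_orthogonal : E = F ⊓ B.orthogonal F
  sup_W : E ⊔ W = F
  sup_U : E ⊔ U = B.orthogonal F
  isInternal : DirectSum.IsInternal ![E, W, U, E']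
  isotropic_E' : ∀ x ∈ E', ∀ y ∈ E', B x y = 0
  orthogonal_E_E'_U_W : ∀ x ∈ E ⊔ E', ∀ y ∈ U ⊔ W, B x y = 0

namespace IsAdaptedDecomposition

open LinearMap.BilinForm

section CommRing

variable {R V : Type*} [CommRing R] [AddCommGroup V] [Module R V] {B : LinearMap.BilinForm R V}
  {F E W U E' : Submodule R V}

theorem E_le_F (hd : IsAdaptedDecomposition B F E W U E') : E ≤ F :=
  hd.sup_W ▸ le_sup_left

theorem W_le_F (hd : IsAdaptedDecomposition B F E W U E') : W ≤ F :=
  hd.sup_W ▸ le_sup_right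

theorem E_le_orthogonal (hd : IsAdaptedDecomposition B F E W U E') : E ≤ B.orthogonal F :=
  hd.sup_U ▸ le_sup_left

theorem U_le_orthogonal (hd : IsAdaptedDecomposition B F E W U E') : U ≤ B.orthogonal F :=
  hd.sup_U ▸ le_sup_right

theorem proj_eq_zero_of_mem_F (hd : IsAdaptedDecomposition B F E W U E') {x : V} (hx : x ∈ F) :
    hd.isInternal.proj 2 x = 0 ∧ hd.isInternal.proj 3 x = 0 := by
  rw [← hd.sup_W] at hx
  exact ⟨hd.isInternal.proj_eq_zero_of_mem_sup (i := 0) (j := 1) (by decide) (by decide) hx,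
    hd.isInternal.proj_eq_zero_of_mem_sup (i := 0) (j := 1) (by decide) (by decide) hx⟩

theorem proj_eq_zero_of_mem_orthogonal (hd : IsAdaptedDecomposition B F E W U E') {x : V}
    (hx : x ∈ B.orthogonal F) :
    hd.isInternal.proj 1 x = 0 ∧ hd.isInternal.proj 3 x = 0 := by
  rw [← hd.sup_U] at hx
  exact ⟨hd.isInternal.proj_eq_zero_of_mem_sup (i := 0) (j := 2) (by decide) (by decide) hx,
    hd.isInternal.proj_eq_zero_of_mem_sup (i := 0) (j := 2) (by decide) (by decide) hx⟩

theorem apply_eq_add_proj (hd : IsAdaptedDecomposition B F E W U E') (hB : B.IsSymm)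
    (x y : V) :
    B x y = B (hd.isInternal.proj 0 x) (hd.isInternal.proj 3 y) +
      B (hd.isInternal.proj 1 x) (hd.isInternal.proj 1 y) +
      B (hd.isInternal.proj 2 x) (hd.isInternal.proj 2 y) +
      B (hd.isInternal.proj 3 x) (hd.isInternal.proj 0 y) := by
  set π := hd.isInternal.proj
  have hFF' : ∀ a ∈ F, ∀ b ∈ B.orthogonal F, B a b = 0 := fun a ha b hb =>
    mem_orthogonal_iff.1 hb a ha
  have hF'F : ∀ a ∈ B.orthogonal F, ∀ b ∈ F, B a b = 0 := fun a ha b hb => by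
    rw [hB.eq]; exact hFF' b hb a ha
  have hE'UW : ∀ a ∈ E', ∀ b ∈ U ⊔ W, B a b = 0 ∧ B b a = 0 := fun a ha b hb => by
    have hab := hd.orthogonal_E_E'_U_W a (Submodule.mem_sup_right ha) b hb
    exact ⟨hab, by rw [hB.eq, hab]⟩
  have hE'W (a : V) (ha : a ∈ E') (b : V) (hb : b ∈ W) := hE'UW a ha b (Submodule.mem_sup_right hb)
  have hE'U (a : V) (ha : a ∈ E') (b : V) (hb : b ∈ U) := hE'UW a ha b (Submodule.mem_sup_left hb)
  have m0 (z : V) : π 0 z ∈ E := hd.isInternal.proj_mem 0 z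
  have m1 (z : V) : π 1 z ∈ W := hd.isInternal.proj_mem 1 z
  have m2 (z : V) : π 2 z ∈ U := hd.isInternal.proj_mem 2 z
  have m3 (z : V) : π 3 z ∈ E' := hd.isInternal.proj_mem 3 z
  conv_lhs => rw [← hd.isInternal.sum_proj x, ← hd.isInternal.sum_proj y]
  simp only [Fin.sum_univ_four, map_add, LinearMap.add_apply]
  rw [hFF' _ (hd.E_le_F (m0 x)) _ (hd.E_le_orthogonal (m0 y)),
    hF'F _ (hd.E_le_orthogonal (m0 x)) _ (hd.W_le_F (m1 y)),
    hFF' _ (hd.E_le_F (m0 x)) _ (hd.U_le_orthogonal (m2 y)),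
    hFF' _ (hd.W_le_F (m1 x)) _ (hd.E_le_orthogonal (m0 y)),
    hFF' _ (hd.W_le_F (m1 x)) _ (hd.U_le_orthogonal (m2 y)),
    (hE'W _ (m3 y) _ (m1 x)).2,
    hF'F _ (hd.U_le_orthogonal (m2 x)) _ (hd.E_le_F (m0 y)),
    hF'F _ (hd.U_le_orthogonal (m2 x)) _ (hd.W_le_F (m1 y)),
    (hE'U _ (m3 y) _ (m2 x)).2, (hE'W _ (m3 x) _ (m1 y)).1, (hE'U _ (m3 x) _ (m2 y)).1,
    hd.isotropic_E' _ (m3 x) _ (m3 y)]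
  ring

theorem apply_eq_of_mem_E_left (hd : IsAdaptedDecomposition B F E W U E') (hB : B.IsSymm)
    {x : V} (hx : x ∈ E) (y : V) : B x y = B x (hd.isInternal.proj 3 y) := by
  obtain ⟨h2, h3⟩ := hd.proj_eq_zero_of_mem_F (hd.E_le_F hx)
  have h1 := (hd.proj_eq_zero_of_mem_orthogonal (hd.E_le_orthogonal hx)).1
  rw [hd.apply_eq_add_proj hB, h1, h2, h3, hd.isInternal.proj_apply_of_mem (i := 0) hx]
  simp

theorem apply_eq_of_mem_E_right (hd : IsAdaptedDecomposition B F E W U E') (hB : B.IsSymm)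
    (x : V) {y : V} (hy : y ∈ E) : B x y = B (hd.isInternal.proj 3 x) y := by
  obtain ⟨h2, h3⟩ := hd.proj_eq_zero_of_mem_F (hd.E_le_F hy)
  have h1 := (hd.proj_eq_zero_of_mem_orthogonal (hd.E_le_orthogonal hy)).1
  rw [hd.apply_eq_add_proj hB, h1, h2, h3, hd.isInternal.proj_apply_of_mem (i := 0) hy]
  simp

theorem apply_eq_of_mem_F (hd : IsAdaptedDecomposition B F E W U E') (hB : B.IsSymm)
    {x y : V} (hx : x ∈ F) (hy : y ∈ F) :
    B x y = B (hd.isInternal.proj 1 x) (hd.isInternal.proj 1 y) := by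
  obtain ⟨hx2, hx3⟩ := hd.proj_eq_zero_of_mem_F hx
  rw [hd.apply_eq_add_proj hB, hx2, hx3, (hd.proj_eq_zero_of_mem_F hy).2]
  simp

theorem apply_eq_of_mem_orthogonal (hd : IsAdaptedDecomposition B F E W U E') (hB : B.IsSymm)
    {x y : V} (hx : x ∈ B.orthogonal F) (hy : y ∈ B.orthogonal F) :
    B x y = B (hd.isInternal.proj 2 x) (hd.isInternal.proj 2 y) := by
  obtain ⟨hx1, hx3⟩ := hd.proj_eq_zero_of_mem_orthogonal hx
  rw [hd.apply_eq_add_proj hB, hx1, hx3, (hd.proj_eq_zero_of_mem_orthogonal hy).2]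
  simp

theorem eq_zero_of_mem_E' (hd : IsAdaptedDecomposition B F E W U E') (hB : B.IsSymm)
    (hnd : B.Nondegenerate) {x : V} (hx : x ∈ E') (hxE : ∀ e ∈ E, B e x = 0) : x = 0 := by
  refine hnd.2 x fun y => ?_
  have h := hd.isInternal
  rw [hd.apply_eq_add_proj hB, h.proj_apply_of_mem (i := 3) hx,
    h.proj_apply_of_mem_of_ne (i := 3) (j := 0) hx (by decide),
    h.proj_apply_of_mem_of_ne (i := 3) (j := 1) hx (by decide),
    h.proj_apply_of_mem_of_ne (i := 3) (j := 2) hx (by decide), hxE _ (h.proj_mem 0 y)]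
  simp

theorem eq_one_of_actsTrivially (hd : IsAdaptedDecomposition B F E W U E') (hB : B.IsSymm)
    (hnd : B.Nondegenerate) {δ : V ≃ₗ[R] V} (hδB : ∀ x y, B (δ x) (δ y) = B x y)
    (hδ : ActsTriviallyOnSubquotients B F E δ) (hW : W.map (δ : V →ₗ[R] V) = W)
    (hU : U.map (δ : V →ₗ[R] V) = U) (hE' : E'.map (δ : V →ₗ[R] V) = E') : δ = 1 := by
  have fixW : ∀ x ∈ W, δ x = x := fun x hx => sub_eq_zero.1 <|
    hd.isInternal.eq_zero_of_mem_of_mem (i := 0) (j := 1) (by decide) (hδ.2.1 x (hd.W_le_F hx))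
      (sub_mem (δ.apply_mem_iff_of_map_eq hW |>.2 hx) hx)
  have fixU : ∀ x ∈ U, δ x = x := fun x hx => sub_eq_zero.1 <|
    hd.isInternal.eq_zero_of_mem_of_mem (i := 0) (j := 2) (by decide)
      (hδ.2.2 x (hd.U_le_orthogonal hx)) (sub_mem (δ.apply_mem_iff_of_map_eq hU |>.2 hx) hx)
  have fixE' : ∀ x ∈ E', δ x = x := fun x hx => sub_eq_zero.1 <|
    hd.eq_zero_of_mem_E' hB hnd (sub_mem (δ.apply_mem_iff_of_map_eq hE' |>.2 hx) hx)
      fun e he => by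
        rw [map_sub, sub_eq_zero]
        conv_lhs => rw [← hδ.1 e he]
        exact hδB e x
  have hid : (δ : V →ₗ[R] V) = LinearMap.id := hd.isInternal.linearMap_ext fun i => by
    fin_cases i
    exacts [hδ.1, fixW, fixU, fixE']
  exact LinearEquiv.ext (LinearMap.congr_fun hid)

theorem blockDiag_isometry (hd : IsAdaptedDecomposition B F E W U E') (hB : B.IsSymm)
    {f : V →ₗ[R] V} (hf : ∀ x y, B (f x) (f y) = B x y) (hfE : ∀ x ∈ E, f x ∈ E)
    (hfF : ∀ x ∈ F, f x ∈ F) (hfF' : ∀ x ∈ B.orthogonal F, f x ∈ B.orthogonal F) (x y : V) :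
    B (hd.isInternal.blockDiag f x) (hd.isInternal.blockDiag f y) = B x y := by
  have h := hd.isInternal
  have hfE0 (z : V) : f (h.proj 0 z) ∈ E := hfE _ (h.proj_mem 0 z)
  have hfW (z : V) : f (h.proj 1 z) ∈ F := hfF _ (hd.W_le_F (h.proj_mem 1 z))
  have hfU (z : V) : f (h.proj 2 z) ∈ B.orthogonal F :=
    hfF' _ (hd.U_le_orthogonal (h.proj_mem 2 z))
  have t0 : B (h.proj 0 (f (h.proj 0 x))) (h.proj 3 (f (h.proj 3 y))) =
      B (h.proj 0 x) (h.proj 3 y) := by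
    rw [h.proj_apply_of_mem (i := 0) (hfE0 x), ← hd.apply_eq_of_mem_E_left hB (hfE0 x), hf]
  have t1 : B (h.proj 1 (f (h.proj 1 x))) (h.proj 1 (f (h.proj 1 y))) =
      B (h.proj 1 x) (h.proj 1 y) := by
    rw [← hd.apply_eq_of_mem_F hB (hfW x) (hfW y), hf]
  have t2 : B (h.proj 2 (f (h.proj 2 x))) (h.proj 2 (f (h.proj 2 y))) =
      B (h.proj 2 x) (h.proj 2 y) := by
    rw [← hd.apply_eq_of_mem_orthogonal hB (hfU x) (hfU y), hf]
  have t3 : B (h.proj 3 (f (h.proj 3 x))) (h.proj 0 (f (h.proj 0 y))) =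
      B (h.proj 3 x) (h.proj 0 y) := by
    rw [h.proj_apply_of_mem (i := 0) (hfE0 y), ← hd.apply_eq_of_mem_E_right hB _ (hfE0 y), hf]
  rw [hd.apply_eq_add_proj hB, hd.apply_eq_add_proj hB x y]
  simp only [h.proj_blockDiag, t0, t1, t2, t3]

end CommRing

variable {K V : Type*} [Field K] [AddCommGroup V] [Module K V] {B : LinearMap.BilinForm K V}
  {F E W U E' : Submodule K V}

theorem exists_isometry_preserving_mul_inv_actsTrivially [FiniteDimensional K V]
    (hd : IsAdaptedDecomposition B F E W U E') (hB : B.IsSymm) (hnd : B.Nondegenerate)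
    {γ : V ≃ₗ[K] V} (hγ : ∀ x y, B (γ x) (γ y) = B x y)
    (hγF : F.map (γ : V →ₗ[K] V) = F) :
    ∃ ρ : V ≃ₗ[K] V, (∀ x y, B (ρ x) (ρ y) = B x y) ∧ F.map (ρ : V →ₗ[K] V) = F ∧
      W.map (ρ : V →ₗ[K] V) = W ∧ U.map (ρ : V →ₗ[K] V) = U ∧
      E'.map (ρ : V →ₗ[K] V) = E' ∧
      ActsTriviallyOnSubquotients B F E (γ * ρ⁻¹) := by
  have h := hd.isInternal
  have hγF' := map_orthogonal_eq hγ hγF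
  have hγE : E.map (γ : V →ₗ[K] V) = E :=
    hd.eq_inf_orthogonal ▸ map_inf_orthogonal_eq hγ hγF
  have hγE_mem (x : V) (hx : x ∈ E) : γ x ∈ E := γ.apply_mem_iff_of_map_eq hγE |>.2 hx
  have hρB := hd.blockDiag_isometry hB hγ hγE_mem (fun x => (γ.apply_mem_iff_of_map_eq hγF).2)
    (fun x => (γ.apply_mem_iff_of_map_eq hγF').2)
  set ρ := LinearEquiv.ofInjectiveEndo (h.blockDiag γ) (injective_of_isometry hnd hρB)
  have hρ (i : Fin 4) : (![E, W, U, E'] i).map (ρ : V →ₗ[K] V) = ![E, W, U, E'] i :=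
    ρ.map_eq_of_map_le <| Submodule.map_le_iff_le_comap.2 fun x hx => h.blockDiag_mem _ i hx
  have hρF : F.map (ρ : V →ₗ[K] V) = F := by
    rw [← hd.sup_W, Submodule.map_sup]; exact congr_arg₂ _ (hρ 0) (hρ 1)
  have hρF' : (B.orthogonal F).map (ρ : V →ₗ[K] V) = B.orthogonal F := by
    rw [← hd.sup_U, Submodule.map_sup]; exact congr_arg₂ _ (hρ 0) (hρ 2)
  have hγρE (x : V) (hx : x ∈ E) : γ x - ρ x ∈ (⊥ : Submodule K V) := by
    rw [Submodule.mem_bot, sub_eq_zero]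
    exact ((h.blockDiag_apply_of_mem _ (i := 0) hx).trans (h.proj_apply_of_mem (hγE_mem x hx))).symm
  have hγρF (x : V) (hx : x ∈ F) : γ x - ρ x ∈ E := by
    rw [← hd.sup_W] at hx
    refine h.sub_blockDiag_mem (i := 0) (j := 1) (by decide) hγE_mem (fun y hy => ?_) hx
    rw [show ![E, W, U, E'] 0 ⊔ ![E, W, U, E'] 1 = F from hd.sup_W]
    exact γ.apply_mem_iff_of_map_eq hγF |>.2 (hd.W_le_F hy)
  have hγρF' (x : V) (hx : x ∈ B.orthogonal F) : γ x - ρ x ∈ E := by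
    rw [← hd.sup_U] at hx
    refine h.sub_blockDiag_mem (i := 0) (j := 2) (by decide) hγE_mem (fun y hy => ?_) hx
    rw [show ![E, W, U, E'] 0 ⊔ ![E, W, U, E'] 2 = B.orthogonal F from hd.sup_U]
    exact γ.apply_mem_iff_of_map_eq hγF' |>.2 (hd.U_le_orthogonal hy)
  refine ⟨ρ, hρB, hρF, hρ 1, hρ 2, hρ 3, fun x hx => ?_,
    fun x hx => LinearEquiv.mul_inv_sub_mem hρF hγρF hx,
    fun x hx => LinearEquiv.mul_inv_sub_mem hρF' hγρF' hx⟩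
  exact sub_eq_zero.1 (Submodule.mem_bot K |>.1 (LinearEquiv.mul_inv_sub_mem (hρ 0) hγρE hx))

end IsAdaptedDecomposition

theorem gamma_is_semidirect_product_general
    (V : Type*) [AddCommGroup V] [Module ℝ V] [FiniteDimensional ℝ V]
    (B : LinearMap.BilinForm ℝ V)
    (hBnd : B.Nondegenerate)
    (hBsymm : ∀ x y : V, B x y = B y x)
    (F : Submodule ℝ V)
    (E W U E' : Submodule ℝ V)
    (hE : E = F ⊓ B.orthogonal F)
    (hW : E ⊔ W = F)
    (hU : E ⊔ U = B.orthogonal F)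
    (hinternal : DirectSum.IsInternal (![E, W, U, E'] : Fin 4 → Submodule ℝ V))
    (hE'iso : ∀ x ∈ E', ∀ y ∈ E', B x y = 0)
    (hEE'UW : ∀ x ∈ E ⊔ E', ∀ y ∈ U ⊔ W, B x y = 0)
    (G Gd Gb : Subgroup (V ≃ₗ[ℝ] V))
    (hG : ∀ γ : V ≃ₗ[ℝ] V, γ ∈ G ↔
      ((∀ x y : V, B (γ x) (γ y) = B x y) ∧ Submodule.map (γ : V →ₗ[ℝ] V) F = F))
    (hGd : ∀ γ : V ≃ₗ[ℝ] V, γ ∈ Gd ↔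
      (γ ∈ G ∧ (∀ x ∈ E, γ x = x) ∧ (∀ x ∈ F, γ x - x ∈ E) ∧
        (∀ x ∈ B.orthogonal F, γ x - x ∈ E)))
    (hGb : ∀ γ : V ≃ₗ[ℝ] V, γ ∈ Gb ↔
      (γ ∈ G ∧ Submodule.map (γ : V →ₗ[ℝ] V) W = W ∧
        Submodule.map (γ : V →ₗ[ℝ] V) U = U ∧
        Submodule.map (γ : V →ₗ[ℝ] V) E' = E')) :
    Gd ≤ G ∧ Gb ≤ G ∧
    (∀ γ ∈ G, ∀ δ ∈ Gd, γ * δ * γ⁻¹ ∈ Gd) ∧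
    Gd ⊓ Gb = ⊥ ∧
    (∀ γ ∈ G, ∃ δ ∈ Gd, ∃ ρ ∈ Gb, γ = δ * ρ) ∧
    (∃ φ : ↥Gb →* MulAut ↥Gd, Nonempty (↥G ≃* (SemidirectProduct ↥Gd ↥Gb φ))) := by
  have hd : IsAdaptedDecomposition B F E W U E' := ⟨hE, hW, hU, hinternal, hE'iso, hEE'UW⟩
  have hB : B.IsSymm := ⟨hBsymm⟩
  have hGdG : Gd ≤ G := fun δ hδ => ((hGd δ).1 hδ).1
  have hGbG : Gb ≤ G := fun ρ hρ => ((hGb ρ).1 hρ).1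
  have hnormal : ∀ γ ∈ G, ∀ δ ∈ Gd, γ * δ * γ⁻¹ ∈ Gd := by
    intro γ hγ δ hδ
    obtain ⟨hδG, hδ⟩ := (hGd δ).1 hδ
    obtain ⟨hγB, hγF⟩ := (hG γ).1 hγ
    exact (hGd _).2 ⟨mul_mem (mul_mem hγ hδG) (inv_mem hγ),
      LinearMap.BilinForm.ActsTriviallyOnSubquotients.conj hE hγB hγF hδ⟩
  have hdisj : Gd ⊓ Gb = ⊥ := by
    refine eq_bot_iff.2 fun δ hδ => ?_
    obtain ⟨hδG, hδ1⟩ := (hGd δ).1 hδ.1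
    obtain ⟨-, hδW, hδU, hδE'⟩ := (hGb δ).1 hδ.2
    exact hd.eq_one_of_actsTrivially hB hBnd ((hG δ).1 hδG).1 hδ1 hδW hδU hδE'
  have hfactor : ∀ γ ∈ G, ∃ δ ∈ Gd, ∃ ρ ∈ Gb, γ = δ * ρ := by
    intro γ hγ
    obtain ⟨hγB, hγF⟩ := (hG γ).1 hγ
    obtain ⟨ρ, hρB, hρF, hρW, hρU, hρE', hγρ⟩ :=
      hd.exists_isometry_preserving_mul_inv_actsTrivially hB hBnd hγB hγF
    have hρ : ρ ∈ Gb := (hGb ρ).2 ⟨(hG ρ).2 ⟨hρB, hρF⟩, hρW, hρU, hρE'⟩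
    exact ⟨γ * ρ⁻¹, (hGd _).2 ⟨mul_mem hγ (inv_mem (hGbG hρ)), hγρ⟩, ρ, hρ, by group⟩
  exact ⟨hGdG, hGbG, hnormal, hdisj, hfactor,
    Subgroup.exists_mulEquiv_semidirectProduct hGdG hGbG hnormal hdisj hfactor⟩

/-- Let `Γ` be the stabilizer of `F` in `O(V,B)`, `Γ_d` the subgroup acting
trivially on `E = F ∩ F^⊥`, `F/E` and `F^⊥/E`, and `Γ_b` the subgroup preserving the pieces
of a fixed `(F,V,B)`-adapted decomposition `V = E ⊕ W ⊕ U ⊕ E*`.  Then `Γ_d` is normal in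
`Γ`, `Γ_d ∩ Γ_b = 1`, `Γ = Γ_d · Γ_b`, and `Γ ≅ Γ_d ⋊ Γ_b`. -/
theorem gamma_is_semidirect_product
    (V : Type*) [AddCommGroup V] [Module ℝ V] [FiniteDimensional ℝ V]
    (B : LinearMap.BilinForm ℝ V)
    (hBnd : B.Nondegenerate)
    (hBsymm : ∀ x y : V, B x y = B y x)
    (F : Submodule ℝ V)
    (E W U E' : Submodule ℝ V)
    (hE : E = F ⊓ B.orthogonal F)
    (hW : E ⊔ W = F)
    (hU : E ⊔ U = B.orthogonal F)
    (hinternal : DirectSum.IsInternal (![E, W, U, E'] : Fin 4 → Submodule ℝ V))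
    (hEiso : ∀ x ∈ E, ∀ y ∈ E, B x y = 0)
    (hE'iso : ∀ x ∈ E', ∀ y ∈ E', B x y = 0)
    (hUW : ∀ x ∈ U, ∀ y ∈ W, B x y = 0)
    (hEE'UW : ∀ x ∈ E ⊔ E', ∀ y ∈ U ⊔ W, B x y = 0)
    (G Gd Gb : Subgroup (V ≃ₗ[ℝ] V))
    (hG : ∀ γ : V ≃ₗ[ℝ] V, γ ∈ G ↔
      ((∀ x y : V, B (γ x) (γ y) = B x y) ∧ Submodule.map (γ : V →ₗ[ℝ] V) F = F))
    (hGd : ∀ γ : V ≃ₗ[ℝ] V, γ ∈ Gd ↔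
      (γ ∈ G ∧ (∀ x ∈ E, γ x = x) ∧ (∀ x ∈ F, γ x - x ∈ E) ∧
        (∀ x ∈ B.orthogonal F, γ x - x ∈ E)))
    (hGb : ∀ γ : V ≃ₗ[ℝ] V, γ ∈ Gb ↔
      (γ ∈ G ∧ Submodule.map (γ : V →ₗ[ℝ] V) W = W ∧
        Submodule.map (γ : V →ₗ[ℝ] V) U = U ∧
        Submodule.map (γ : V →ₗ[ℝ] V) E' = E')) :
    Gd ≤ G ∧ Gb ≤ G ∧
    (∀ γ ∈ G, ∀ δ ∈ Gd, γ * δ * γ⁻¹ ∈ Gd) ∧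
    Gd ⊓ Gb = ⊥ ∧
    (∀ γ ∈ G, ∃ δ ∈ Gd, ∃ ρ ∈ Gb, γ = δ * ρ) ∧
    (∃ φ : ↥Gb →* MulAut ↥Gd, Nonempty (↥G ≃* (SemidirectProduct ↥Gd ↥Gb φ))) :=
  gamma_is_semidirect_product_general V B hBnd hBsymm F E W U E' hE hW hU hinternal hE'iso hEE'UW G
    Gd Gb hG hGd hGb
end

section
/- Let (g,σ,B) be an indecomposable solvable symmetric triple with eigenspace decomposition g = h ⊕ m and dim m > 1, and let z := z(g) denote the center of g (which lies in m). Then there exist subspaces W and z* of m such that m = z ⊕ W ⊕ z* (internal direct sum), ⁅h,m⁆ = z ⊕ W, B restricted to W is nondegenerate, z* is totally isotropic, B(W, z) = 0, B(W, z*) = 0, and the pairing z × z* → ℝ, (a,b) ↦ B(a,b), is nondegenerate. -/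
/-!
The involution makes `h ⟂ m`, so `B` is nondegenerate on `m`. A central `c` has `c + σ c ∈ h`
central, hence orthogonal to `h = [m, m]` by invariance, so `c + σ c = 0` and `z ⊆ m`. Invariance
also identifies the orthogonal of `⁅h, m⁆` inside `m` with `z`, and indecomposability with
`dim m > 1` rules out a central `c` with `B c c ≠ 0`; so `z` is totally isotropic and
`⁅h, m⁆ = m ∩ z^⊥`. The rest is linear algebra in `(m, B)`: a complement `W` of `z` in `z^⊥` is
nondegenerate, `z` lies in the nondegenerate space `W^⊥` of dimension `2 dim z`, and a complement
`C` of `z` there becomes totally isotropic after replacing `c` by `c - φ c`, where `φ : C → z` is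
defined by `B (φ c) c' = B c c' / 2`.
-/

open Module Submodule

theorem exists_disjoint_sup_eq_of_le {α : Type*} [Lattice α] [BoundedOrder α] [IsModularLattice α]
    [ComplementedLattice α] {a b : α} (hab : a ≤ b) : ∃ c, Disjoint a c ∧ a ⊔ c = b := by
  obtain ⟨d, hd⟩ := exists_isCompl a
  exact ⟨d ⊓ b, hd.disjoint.mono_right inf_le_left,
    by rw [← sup_inf_assoc_of_le _ hab, hd.sup_eq_top, top_inf_eq]⟩

namespace Submodule

variable {R M : Type*} [Ring R] [AddCommGroup M] [Module R M] {Z C : Submodule R M}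

theorem sup_range_subtype_sub_eq (φ : C →ₗ[R] Z) :
    Z ⊔ LinearMap.range (C.subtype - Z.subtype ∘ₗ φ) = Z ⊔ C := by
  refine le_antisymm (sup_le le_sup_left ?_) (sup_le le_sup_left fun c hc => ?_)
  · rintro _ ⟨c, rfl⟩
    exact sub_mem (mem_sup_right c.2) (mem_sup_left (φ c).2)
  · have hc' : c = (C.subtype - Z.subtype ∘ₗ φ) ⟨c, hc⟩ + φ ⟨c, hc⟩ := by simp
    rw [hc']
    exact add_mem (mem_sup_right (LinearMap.mem_range_self _ _)) (mem_sup_left (φ _).2)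

theorem disjoint_range_subtype_sub (hZC : Disjoint Z C) (φ : C →ₗ[R] Z) :
    Disjoint Z (LinearMap.range (C.subtype - Z.subtype ∘ₗ φ)) := by
  rw [disjoint_def]
  rintro _ hZ ⟨c, rfl⟩
  have hcZ : (c : M) ∈ Z := by
    simpa using add_mem hZ (φ c).2
  obtain rfl : c = 0 := Subtype.ext (disjoint_def.mp hZC _ hcZ c.2)
  simp

end Submodule

namespace LinearMap.BilinForm

variable {K V : Type*} [Field K] [AddCommGroup V] [Module K V] {B : LinearMap.BilinForm K V}

theorem orthogonal_sup_s11 (N P : Submodule K V) :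
    B.orthogonal (N ⊔ P) = B.orthogonal N ⊓ B.orthogonal P := by
  refine le_antisymm (le_inf (orthogonal_le le_sup_left) (orthogonal_le le_sup_right)) ?_
  rintro x ⟨hxN, hxP⟩ _ hy
  obtain ⟨n, hn, p, hp, rfl⟩ := mem_sup.mp hy
  simp [hxN n hn, hxP p hp]

theorem le_orthogonal_comm (hB : B.IsRefl) {N P : Submodule K V} :
    N ≤ B.orthogonal P ↔ P ≤ B.orthogonal N :=
  ⟨fun h _ hp _ hn => hB _ _ (h hn _ hp), fun h _ hn _ hp => hB _ _ (h hp _ hn)⟩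

theorem map_subtype_orthogonal_restrict (M : Submodule K V) (N : Submodule K M) :
    ((B.restrict M).orthogonal N).map M.subtype = M ⊓ B.orthogonal (N.map M.subtype) := by
  ext x
  simp [mem_orthogonal_iff, and_comm]

theorem disjoint_orthogonal_of_isCompl (hB : B.IsRefl) (hnd : B.Nondegenerate)
    {H M : Submodule K V} (hHM : IsCompl H M) (horth : M ≤ B.orthogonal H) :
    Disjoint H (B.orthogonal H) := by
  rw [disjoint_iff_inf_le]
  calc H ⊓ B.orthogonal H ≤ B.orthogonal M ⊓ B.orthogonal H :=
        inf_le_inf_right _ ((le_orthogonal_comm hB).mp horth)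
    _ = ⊥ := by rw [← orthogonal_sup_s11, hHM.symm.sup_eq_top, orthogonal_top_eq_bot hnd]

variable [FiniteDimensional K V]

theorem exists_linearMap_apply_eq {Z C : Submodule K V}
    (hsep : ∀ a ∈ Z, (∀ c ∈ C, B a c = 0) → a = 0) (hdim : finrank K C = finrank K Z)
    (g : C →ₗ[K] Module.Dual K C) : ∃ φ : C →ₗ[K] Z, ∀ c c' : C, B (φ c) c' = g c c' := by
  set r : Z →ₗ[K] Module.Dual K C := B.compl₁₂ Z.subtype C.subtype
  have hr : Function.Injective r := by
    refine (injective_iff_map_eq_zero r).mpr fun a ha => Subtype.ext (hsep a a.2 fun c hc => ?_)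
    exact LinearMap.congr_fun ha ⟨c, hc⟩
  have hr' : Function.Surjective r := by
    refine (injective_iff_surjective_of_finrank_eq_finrank ?_).mp hr
    rw [Subspace.dual_finrank_eq, hdim]
  refine ⟨(LinearEquiv.ofBijective r ⟨hr, hr'⟩).symm.toLinearMap ∘ₗ g, fun c c' => ?_⟩
  have := (LinearEquiv.ofBijective r ⟨hr, hr'⟩).apply_symm_apply (g c)
  exact LinearMap.congr_fun this c'

theorem disjoint_orthogonal_of_sup_eq_orthogonal (hB : B.IsRefl) (hnd : B.Nondegenerate)
    {Z W : Submodule K V} (hZW : Disjoint Z W) (hsup : Z ⊔ W = B.orthogonal Z) :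
    Disjoint W (B.orthogonal W) := by
  have h : W ⊓ B.orthogonal W ≤ Z := calc
    W ⊓ B.orthogonal W ≤ B.orthogonal Z ⊓ B.orthogonal W :=
        inf_le_inf_right _ (hsup ▸ le_sup_right)
    _ = Z := by rw [← orthogonal_sup_s11, hsup, orthogonal_orthogonal hnd hB]
  exact disjoint_iff_inf_le.mpr ((le_inf inf_le_left h).trans hZW.symm.le_bot)

theorem exists_isotropic_complement [NeZero (2 : K)] (hB : B.IsSymm) {Z U : Submodule K V}
    (hU : Disjoint U (B.orthogonal U)) (hZU : Z ≤ U) (hZ : Z ≤ B.orthogonal Z)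
    (hdim : finrank K U = finrank K Z + finrank K Z) :
    ∃ Zs, Zs ≤ B.orthogonal Zs ∧ Disjoint Z Zs ∧ Z ⊔ Zs = U := by
  obtain ⟨C, hZC, hZCU⟩ := exists_disjoint_sup_eq_of_le hZU
  have hCdim : finrank K C = finrank K Z := by
    have := finrank_sup_add_finrank_inf_eq Z C
    rw [hZCU, hZC.eq_bot, finrank_bot] at this
    omega
  have hsep : ∀ a ∈ Z, (∀ c ∈ C, B a c = 0) → a = 0 := by
    refine fun a haZ haC => disjoint_def.mp hU a (hZU haZ) ?_
    rw [← hZCU, orthogonal_sup_s11]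
    exact ⟨hZ haZ, fun c hc => hB.isRefl _ _ (haC c hc)⟩
  obtain ⟨φ, hφ⟩ := exists_linearMap_apply_eq hsep hCdim
    ((2⁻¹ : K) • B.compl₁₂ C.subtype C.subtype)
  have hφ2 : ∀ c c' : C, 2 * B (φ c) c' = B c c' := fun c c' => by
    simp [hφ, two_ne_zero]
  refine ⟨LinearMap.range (C.subtype - Z.subtype ∘ₗ φ), ?_, disjoint_range_subtype_sub hZC φ,
    (sup_range_subtype_sub_eq φ).trans hZCU⟩
  rintro _ ⟨c, rfl⟩ _ ⟨c', rfl⟩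
  have hφφ : B (φ c') (φ c) = 0 := hZ (φ c).2 _ (φ c').2
  have h2 : (2 : K) * B (c' - φ c') (c - φ c) = 0 := by
    simp only [LinearMap.sub_apply, map_sub, hφφ]
    linear_combination -hφ2 c' c - hφ2 c c' + 2 * hB.eq (φ c) c' - hB.eq c c'
  exact (mul_eq_zero.mp h2).resolve_left two_ne_zero

theorem exists_adapted_decomposition [NeZero (2 : K)] (hB : B.IsSymm) (hnd : B.Nondegenerate)
    {Z : Submodule K V} (hZ : Z ≤ B.orthogonal Z) :
    ∃ W Zs : Submodule K V, Disjoint Z W ∧ Disjoint (Z ⊔ W) Zs ∧ Z ⊔ W ⊔ Zs = ⊤ ∧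
      Z ⊔ W = B.orthogonal Z ∧ Disjoint W (B.orthogonal W) ∧ Zs ≤ B.orthogonal Zs ∧
      Zs ≤ B.orthogonal W ∧ Disjoint Z (B.orthogonal Zs) ∧ Disjoint Zs (B.orthogonal Z) := by
  obtain ⟨W, hZW, hsup⟩ := exists_disjoint_sup_eq_of_le hZ
  have hW := disjoint_orthogonal_of_sup_eq_orthogonal hB.isRefl hnd hZW hsup
  set U := B.orthogonal W
  have hWU : IsCompl W U := (isCompl_orthogonal_iff_disjoint hB.isRefl).mpr hW
  have hU : Disjoint U (B.orthogonal U) := by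
    rw [orthogonal_orthogonal hnd hB.isRefl]
    exact hW.symm
  have hZU : Z ≤ U := (le_orthogonal_comm hB.isRefl).mp (hsup ▸ le_sup_right)
  have hdim : finrank K U = finrank K Z + finrank K Z := by
    have hZW_dim := finrank_sup_add_finrank_inf_eq Z W
    rw [hsup, hZW.eq_bot, finrank_bot, finrank_orthogonal hnd] at hZW_dim
    have hU_dim : finrank K U = finrank K V - finrank K W := finrank_orthogonal hnd W
    have := W.finrank_le
    omega
  obtain ⟨Zs, hZs, hZZs, hZZsU⟩ := exists_isotropic_complement hB hU hZU hZ hdim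
  have hZsU : Zs ≤ U := hZZsU ▸ le_sup_right
  have hUorth : B.orthogonal Z ⊓ B.orthogonal Zs = B.orthogonal U := by
    rw [← hZZsU, orthogonal_sup_s11]
  refine ⟨W, Zs, hZW, ?_, ?_, hsup, hW, hZs, hZsU, ?_, ?_⟩
  · have hZWU : (Z ⊔ W) ⊓ U = Z := by
      rw [sup_inf_assoc_of_le _ hZU, hWU.inf_eq_bot, sup_bot_eq]
    rw [disjoint_iff_inf_le]
    calc (Z ⊔ W) ⊓ Zs ≤ (Z ⊔ W) ⊓ U ⊓ Zs := le_inf (inf_le_inf_left _ hZsU) inf_le_right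
      _ = Z ⊓ Zs := by rw [hZWU]
      _ ≤ ⊥ := hZZs.le_bot
  · rw [sup_right_comm, hZZsU, sup_comm, hWU.sup_eq_top]
  · refine disjoint_iff_inf_le.mpr (le_trans ?_ hU.le_bot)
    exact le_inf (inf_le_left.trans hZU) (hUorth ▸ inf_le_inf_right _ hZ)
  · refine disjoint_iff_inf_le.mpr (le_trans ?_ hU.le_bot)
    exact le_inf (inf_le_left.trans hZsU) (hUorth ▸ le_inf inf_le_right (inf_le_left.trans hZs))

theorem inf_orthogonal_inf_orthogonal (hB : B.IsRefl) {M N : Submodule K V}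
    (hM : (B.restrict M).Nondegenerate) (hNM : N ≤ M) :
    M ⊓ B.orthogonal (M ⊓ B.orthogonal N) = N := by
  obtain ⟨N, rfl⟩ : ∃ N' : Submodule K M, N'.map M.subtype = N :=
    ⟨N.comap M.subtype, by rw [map_comap_subtype, inf_eq_right.mpr hNM]⟩
  have hBM : (B.restrict M).IsRefl := fun x y => hB x y
  rw [← map_subtype_orthogonal_restrict, ← map_subtype_orthogonal_restrict,
    orthogonal_orthogonal hM hBM]

theorem exists_adapted_decomposition_of_le [NeZero (2 : K)] (hB : B.IsSymm) {M Z : Submodule K V}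
    (hM : (B.restrict M).Nondegenerate) (hZM : Z ≤ M) (hZ : ∀ x ∈ Z, ∀ y ∈ Z, B x y = 0) :
    ∃ W Zs : Submodule K V, W ≤ M ∧ Zs ≤ M ∧ Disjoint Z W ∧ Disjoint (Z ⊔ W) Zs ∧
      Z ⊔ W ⊔ Zs = M ∧ Z ⊔ W = M ⊓ B.orthogonal Z ∧
      (∀ x ∈ W, (∀ y ∈ W, B x y = 0) → x = 0) ∧ (∀ x ∈ Zs, ∀ y ∈ Zs, B x y = 0) ∧
      (∀ x ∈ W, ∀ y ∈ Z, B x y = 0) ∧ (∀ x ∈ W, ∀ y ∈ Zs, B x y = 0) ∧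
      (∀ a ∈ Z, (∀ b ∈ Zs, B a b = 0) → a = 0) ∧ (∀ b ∈ Zs, (∀ a ∈ Z, B a b = 0) → b = 0) := by
  obtain ⟨Z, rfl⟩ : ∃ Z' : Submodule K M, Z'.map M.subtype = Z :=
    ⟨Z.comap M.subtype, by rw [map_comap_subtype, inf_eq_right.mpr hZM]⟩
  have hZ' : Z ≤ (B.restrict M).orthogonal Z := fun x hx y hy =>
    hZ _ (mem_map_of_mem hy) _ (mem_map_of_mem hx)
  obtain ⟨W, Zs, hZW, hZWZs, hsup, hZWorth, hW, hZs, hZsW, hZZs, hZsZ⟩ :=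
    exists_adapted_decomposition (hB.restrict M) hM hZ'
  have hinj := M.injective_subtype
  refine ⟨W.map M.subtype, Zs.map M.subtype, map_subtype_le _ _, map_subtype_le _ _,
    disjoint_map hinj hZW, ?_, ?_, ?_, ?_, ?_, ?_, ?_, ?_, ?_⟩
  · rw [← Submodule.map_sup]
    exact disjoint_map hinj hZWZs
  · rw [← Submodule.map_sup, ← Submodule.map_sup, hsup, map_subtype_top]
  · rw [← Submodule.map_sup, hZWorth, map_subtype_orthogonal_restrict]
  · rintro _ ⟨x, hx, rfl⟩ hxW
    have hx' : x ∈ (B.restrict M).orthogonal W := fun y hy =>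
      (hB.restrict M).eq x y ▸ hxW _ (mem_map_of_mem hy)
    rw [disjoint_def.mp hW x hx hx', map_zero]
  · rintro _ ⟨x, hx, rfl⟩ _ ⟨y, hy, rfl⟩
    exact hZs hy x hx
  · rintro _ ⟨x, hx, rfl⟩ _ ⟨y, hy, rfl⟩
    have hx' : x ∈ (B.restrict M).orthogonal Z := hZWorth ▸ mem_sup_right hx
    exact (hB.restrict M).eq y x ▸ hx' y hy
  · rintro _ ⟨x, hx, rfl⟩ _ ⟨y, hy, rfl⟩
    exact hZsW hy x hx
  · rintro _ ⟨a, ha, rfl⟩ hb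
    have ha' : a ∈ (B.restrict M).orthogonal Zs := fun b hb' =>
      (hB.restrict M).eq a b ▸ hb _ (mem_map_of_mem hb')
    rw [disjoint_def.mp hZZs a ha ha', map_zero]
  · rintro _ ⟨b, hb, rfl⟩ ha
    have hb' : b ∈ (B.restrict M).orthogonal Z := fun a ha' => ha _ (mem_map_of_mem ha')
    rw [disjoint_def.mp hZsZ b hb hb', map_zero]

end LinearMap.BilinForm

theorem LinearMap.BilinForm.IsSymm.apply_eq_zero_of_forall_apply_self_eq_zero
    {K V : Type*} [Field K] [NeZero (2 : K)] [AddCommGroup V] [Module K V]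
    {B : LinearMap.BilinForm K V} (hB : B.IsSymm) {Z : Submodule K V}
    (hZ : ∀ x ∈ Z, B x x = 0) : ∀ x ∈ Z, ∀ y ∈ Z, B x y = 0 := by
  intro x hx y hy
  have h2 : (2 : K) * B x y = 0 := by
    have := hZ _ (add_mem hx hy)
    simp only [map_add, LinearMap.add_apply, hZ x hx, hZ y hy, hB.eq y x] at this
    linear_combination this
  exact (mul_eq_zero.mp h2).resolve_left two_ne_zero

namespace LieAlgebra

open LinearMap.BilinForm Submodule

variable {K L : Type*} [Field K] [LieRing L] [LieAlgebra K L]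
  {B : LinearMap.BilinForm K L} {H M : Submodule K L}

theorem le_orthogonal_of_eigenspaces [NeZero (2 : K)] {σ : L → L}
    (hBσ : ∀ x y, B (σ x) (σ y) = B x y) (hH : ∀ x, x ∈ H ↔ σ x = x)
    (hM : ∀ x, x ∈ M ↔ σ x = -x) : M ≤ B.orthogonal H := by
  intro y hy x hx
  have h2 : (2 : K) * B x y = 0 := by
    have := hBσ x y
    rw [(hH x).mp hx, (hM y).mp hy, map_neg] at this
    linear_combination -this
  exact (mul_eq_zero.mp h2).resolve_left two_ne_zero

theorem span_lie_le_orthogonal_center (hBad : ∀ x y z, B ⁅x, y⁆ z = B x ⁅y, z⁆)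
    (S T : Submodule K L) :
    span K {x | ∃ a ∈ S, ∃ b ∈ T, ⁅a, b⁆ = x} ≤ B.orthogonal (center K L).toSubmodule := by
  rw [span_le]
  rintro _ ⟨a, -, b, -, rfl⟩ c hc
  have hca : ⁅c, a⁆ = 0 := by
    rw [← lie_skew, (LieModule.mem_maxTrivSubmodule K L L c).mp hc, neg_zero]
  rw [← hBad, hca, map_zero, LinearMap.zero_apply]

theorem mem_center_of_forall_lie_eq_zero (hsup : H ⊔ M = ⊤)
    (hHspan : H = span K {z | ∃ x ∈ M, ∃ y ∈ M, ⁅x, y⁆ = z}) {x : L}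
    (hx : ∀ m ∈ M, ⁅m, x⁆ = 0) : x ∈ center K L := by
  have hxM : ∀ m ∈ M, ⁅x, m⁆ = 0 := fun m hm => by rw [← lie_skew, hx m hm, neg_zero]
  have hM : M ≤ LinearMap.ker (ad K L x) := hxM
  have hH : H ≤ LinearMap.ker (ad K L x) := by
    rw [hHspan, span_le]
    rintro _ ⟨a, ha, b, hb, rfl⟩
    change ⁅x, ⁅a, b⁆⁆ = 0
    rw [leibniz_lie, hxM a ha, hxM b hb, zero_lie, lie_zero, add_zero]
  refine (LieModule.mem_maxTrivSubmodule K L L x).mpr fun y => ?_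
  have hy : y ∈ LinearMap.ker (ad K L x) := sup_le hH hM (hsup ▸ mem_top)
  rwa [LinearMap.mem_ker, ad_apply, ← lie_skew, neg_eq_zero] at hy

theorem center_le_of_involution (σ : L →ₗ⁅K⁆ L) (hσ : ∀ x, σ (σ x) = x) (hH : ∀ x, x ∈ H ↔ σ x = x)
    (hM : ∀ x, x ∈ M ↔ σ x = -x) (hHM : IsCompl H M)
    (hHspan : H = span K {z | ∃ x ∈ M, ∃ y ∈ M, ⁅x, y⁆ = z}) (hB : B.IsRefl)
    (hnd : B.Nondegenerate) (horth : M ≤ B.orthogonal H)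
    (hBad : ∀ x y z, B ⁅x, y⁆ z = B x ⁅y, z⁆) : (center K L).toSubmodule ≤ M := by
  intro c hc
  have hσc : σ c ∈ center K L := (LieModule.mem_maxTrivSubmodule K L L _).mpr fun y => by
    rw [← hσ y, ← σ.map_lie, (LieModule.mem_maxTrivSubmodule K L L c).mp hc, map_zero]
  have hsum_mem : c + σ c ∈ H := (hH _).mpr (by rw [map_add, hσ, add_comm])
  have hsum_orth : c + σ c ∈ B.orthogonal H :=
    (le_orthogonal_comm hB).mp (hHspan ▸ span_lie_le_orthogonal_center hBad M M) (add_mem hc hσc)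
  have hsum_eq :=
    disjoint_def.mp (disjoint_orthogonal_of_isCompl hB hnd hHM horth) _ hsum_mem hsum_orth
  exact (hM c).mpr (eq_neg_of_add_eq_zero_right hsum_eq)

theorem mem_center_of_mem_orthogonal_span_lie (hHM : IsCompl H M)
    (hHspan : H = span K {z | ∃ x ∈ M, ∃ y ∈ M, ⁅x, y⁆ = z}) (hB : B.IsRefl)
    (hnd : B.Nondegenerate) (horth : M ≤ B.orthogonal H)
    (hBad : ∀ x y z, B ⁅x, y⁆ z = B x ⁅y, z⁆) {x : L} (hxM : x ∈ M)
    (hx : x ∈ B.orthogonal (span K {z | ∃ h ∈ H, ∃ m ∈ M, ⁅h, m⁆ = z})) : x ∈ center K L := by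
  refine mem_center_of_forall_lie_eq_zero hHM.sup_eq_top hHspan fun m hm => ?_
  have hH : ⁅m, x⁆ ∈ H := hHspan ▸ subset_span ⟨m, hm, x, hxM, rfl⟩
  have hH_orth : ⁅m, x⁆ ∈ B.orthogonal H := fun h hh => by
    rw [← hBad]
    exact hx _ (subset_span ⟨h, hh, m, hm, rfl⟩)
  exact disjoint_def.mp (disjoint_orthogonal_of_isCompl hB hnd hHM horth) _ hH hH_orth

theorem span_lie_eq_inf_orthogonal_center [FiniteDimensional K L] (σ : L →ₗ⁅K⁆ L)
    (hH : ∀ x, x ∈ H ↔ σ x = x) (hM : ∀ x, x ∈ M ↔ σ x = -x) (hHM : IsCompl H M)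
    (hHspan : H = span K {z | ∃ x ∈ M, ∃ y ∈ M, ⁅x, y⁆ = z}) (hB : B.IsRefl)
    (hnd : B.Nondegenerate) (hMnd : (B.restrict M).Nondegenerate) (horth : M ≤ B.orthogonal H)
    (hBad : ∀ x y z, B ⁅x, y⁆ z = B x ⁅y, z⁆) (hZM : (center K L).toSubmodule ≤ M) :
    span K {z | ∃ h ∈ H, ∃ m ∈ M, ⁅h, m⁆ = z} = M ⊓ B.orthogonal (center K L).toSubmodule := by
  have hKM : span K {z | ∃ h ∈ H, ∃ m ∈ M, ⁅h, m⁆ = z} ≤ M := by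
    rw [span_le]
    rintro _ ⟨h, hh, m, hm, rfl⟩
    exact (hM _).mpr (by rw [σ.map_lie, (hH h).mp hh, (hM m).mp hm, lie_neg])
  have hcenter : M ⊓ B.orthogonal (span K {z | ∃ h ∈ H, ∃ m ∈ M, ⁅h, m⁆ = z}) =
      (center K L).toSubmodule :=
    le_antisymm
      (fun x hx => mem_center_of_mem_orthogonal_span_lie hHM hHspan hB hnd horth hBad hx.1 hx.2)
      (le_inf hZM ((le_orthogonal_comm hB).mp (span_lie_le_orthogonal_center hBad H M)))
  rw [← hcenter, inf_orthogonal_inf_orthogonal hB hMnd hKM]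

theorem apply_self_eq_zero_of_mem_center
    (hindec : ∀ m' : Submodule K L, m' ≤ M → (∀ h ∈ H, ∀ x ∈ m', ⁅h, x⁆ ∈ m') →
      (∀ x ∈ m', (∀ y ∈ m', B x y = 0) → x = 0) → m' = ⊥ ∨ m' = M)
    (hdim : 1 < Module.finrank K M) (hZM : (center K L).toSubmodule ≤ M) {c : L}
    (hc : c ∈ center K L) : B c c = 0 := by
  by_contra hcc
  have hc0 : c ≠ 0 := by
    rintro rfl
    simp at hcc
  have hinv : ∀ h ∈ H, ∀ x ∈ K ∙ c, ⁅h, x⁆ ∈ K ∙ c := fun h _ x hx => by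
    obtain ⟨t, rfl⟩ := mem_span_singleton.mp hx
    rw [lie_smul, (LieModule.mem_maxTrivSubmodule K L L c).mp hc h, smul_zero]
    exact zero_mem _
  have hnd : ∀ x ∈ K ∙ c, (∀ y ∈ K ∙ c, B x y = 0) → x = 0 := fun x hx hxc => by
    obtain ⟨t, rfl⟩ := mem_span_singleton.mp hx
    have ht := hxc c (mem_span_singleton_self c)
    rw [map_smul, LinearMap.smul_apply, smul_eq_mul, mul_eq_zero] at ht
    rw [ht.resolve_right hcc, zero_smul]
  rcases hindec (K ∙ c) ((span_singleton_le_iff_mem c M).mpr (hZM hc)) hinv hnd with h | h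
  · exact hc0 (span_singleton_eq_bot.mp h)
  · have := finrank_span_singleton (K := K) hc0
    rw [h] at this
    omega

end LieAlgebra

open LinearMap.BilinForm LieAlgebra in
theorem first_adapted_decomposition_general
    (L : Type*) [LieRing L] [LieAlgebra ℝ L] [FiniteDimensional ℝ L]
    (σ : L →ₗ⁅ℝ⁆ L) (hσ : ∀ x, σ (σ x) = x)
    (H M : Submodule ℝ L)
    (hH : ∀ x, x ∈ H ↔ σ x = x)
    (hM : ∀ x, x ∈ M ↔ σ x = -x)
    (hcompl : IsCompl H M)
    (hHspan : H = Submodule.span ℝ {z : L | ∃ x ∈ M, ∃ y ∈ M, ⁅x, y⁆ = z})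
    (B : LinearMap.BilinForm ℝ L)
    (hBnd : B.Nondegenerate)
    (hBsymm : ∀ x y : L, B x y = B y x)
    (hBσ : ∀ x y : L, B (σ x) (σ y) = B x y)
    (hBad : ∀ x y z : L, B ⁅x, y⁆ z = B x ⁅y, z⁆)
    (hindec : ∀ m' : Submodule ℝ L, m' ≤ M →
      (∀ h ∈ H, ∀ x ∈ m', ⁅h, x⁆ ∈ m') →
      (∀ x ∈ m', (∀ y ∈ m', B x y = 0) → x = 0) →
      m' = ⊥ ∨ m' = M)
    (hdim : 1 < Module.finrank ℝ M) :
    ∃ W Zstar : Submodule ℝ L,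
      W ≤ M ∧ Zstar ≤ M ∧
      -- m = z ⊕ W ⊕ z* as an internal direct sum
      Disjoint (LieAlgebra.center ℝ L).toSubmodule W ∧
      Disjoint ((LieAlgebra.center ℝ L).toSubmodule ⊔ W) Zstar ∧
      (LieAlgebra.center ℝ L).toSubmodule ⊔ W ⊔ Zstar = M ∧
      -- ⁅h,m⁆ = z ⊕ W
      Submodule.span ℝ {x : L | ∃ h ∈ H, ∃ m ∈ M, ⁅h, m⁆ = x}
        = (LieAlgebra.center ℝ L).toSubmodule ⊔ W ∧
      -- B restricted to W is nondegenerate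
      (∀ x ∈ W, (∀ y ∈ W, B x y = 0) → x = 0) ∧
      -- z* is totally isotropic
      (∀ x ∈ Zstar, ∀ y ∈ Zstar, B x y = 0) ∧
      -- W ⟂ z and W ⟂ z*
      (∀ x ∈ W, ∀ y ∈ LieAlgebra.center ℝ L, B x y = 0) ∧
      (∀ x ∈ W, ∀ y ∈ Zstar, B x y = 0) ∧
      -- z and z* are nondegenerately paired by B
      (∀ a ∈ LieAlgebra.center ℝ L, (∀ b ∈ Zstar, B a b = 0) → a = 0) ∧
      (∀ b ∈ Zstar, (∀ a ∈ LieAlgebra.center ℝ L, B a b = 0) → b = 0) := by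
  have hB : B.IsSymm := ⟨hBsymm⟩
  have horth : M ≤ B.orthogonal H := le_orthogonal_of_eigenspaces hBσ hH hM
  have hMnd : (B.restrict M).Nondegenerate :=
    B.nondegenerate_restrict_of_disjoint_orthogonal hB.isRefl <|
      disjoint_orthogonal_of_isCompl hB.isRefl hBnd hcompl.symm
        ((le_orthogonal_comm hB.isRefl).mp horth)
  have hZM := center_le_of_involution σ hσ hH hM hcompl hHspan hB.isRefl hBnd horth hBad
  have hZ := hB.apply_eq_zero_of_forall_apply_self_eq_zero fun c hc =>
    apply_self_eq_zero_of_mem_center hindec hdim hZM hc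
  have hspan := span_lie_eq_inf_orthogonal_center σ hH hM hcompl hHspan hB.isRefl hBnd hMnd
    horth hBad hZM
  obtain ⟨W, Zs, hWM, hZsM, hZW, hZWZs, hsup, hZWorth, hrest⟩ :=
    exists_adapted_decomposition_of_le hB hMnd hZM hZ
  exact ⟨W, Zs, hWM, hZsM, hZW, hZWZs, hsup, hspan.trans hZWorth.symm, hrest⟩

/-- Every indecomposable solvable symmetric triple with `dim m > 1` admits
an adapted decomposition `m = z ⊕ W ⊕ z*` with `⁅h,m⁆ = z ⊕ W`, `B|_W` nondegenerate, `z*`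
totally isotropic, `W ⟂ z`, `W ⟂ z*`, and `B` pairing `z` with `z*` nondegenerately. -/
theorem first_adapted_decomposition
    (L : Type*) [LieRing L] [LieAlgebra ℝ L] [FiniteDimensional ℝ L]
    [LieAlgebra.IsSolvable L]
    (σ : L →ₗ⁅ℝ⁆ L) (hσ : ∀ x, σ (σ x) = x)
    (H M : Submodule ℝ L)
    (hH : ∀ x, x ∈ H ↔ σ x = x)
    (hM : ∀ x, x ∈ M ↔ σ x = -x)
    (hcompl : IsCompl H M)
    (hHspan : H = Submodule.span ℝ {z : L | ∃ x ∈ M, ∃ y ∈ M, ⁅x, y⁆ = z})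
    (B : LinearMap.BilinForm ℝ L)
    (hBnd : B.Nondegenerate)
    (hBsymm : ∀ x y : L, B x y = B y x)
    (hBσ : ∀ x y : L, B (σ x) (σ y) = B x y)
    (hBad : ∀ x y z : L, B ⁅x, y⁆ z = B x ⁅y, z⁆)
    (hindec : ∀ m' : Submodule ℝ L, m' ≤ M →
      (∀ h ∈ H, ∀ x ∈ m', ⁅h, x⁆ ∈ m') →
      (∀ x ∈ m', (∀ y ∈ m', B x y = 0) → x = 0) →
      m' = ⊥ ∨ m' = M)
    (hdim : 1 < Module.finrank ℝ M) :
    ∃ W Zstar : Submodule ℝ L,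
      W ≤ M ∧ Zstar ≤ M ∧
      -- m = z ⊕ W ⊕ z* as an internal direct sum
      Disjoint (LieAlgebra.center ℝ L).toSubmodule W ∧
      Disjoint ((LieAlgebra.center ℝ L).toSubmodule ⊔ W) Zstar ∧
      (LieAlgebra.center ℝ L).toSubmodule ⊔ W ⊔ Zstar = M ∧
      -- ⁅h,m⁆ = z ⊕ W
      Submodule.span ℝ {x : L | ∃ h ∈ H, ∃ m ∈ M, ⁅h, m⁆ = x}
        = (LieAlgebra.center ℝ L).toSubmodule ⊔ W ∧
      -- B restricted to W is nondegenerate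
      (∀ x ∈ W, (∀ y ∈ W, B x y = 0) → x = 0) ∧
      -- z* is totally isotropic
      (∀ x ∈ Zstar, ∀ y ∈ Zstar, B x y = 0) ∧
      -- W ⟂ z and W ⟂ z*
      (∀ x ∈ W, ∀ y ∈ LieAlgebra.center ℝ L, B x y = 0) ∧
      (∀ x ∈ W, ∀ y ∈ Zstar, B x y = 0) ∧
      -- z and z* are nondegenerately paired by B
      (∀ a ∈ LieAlgebra.center ℝ L, (∀ b ∈ Zstar, B a b = 0) → a = 0) ∧
      (∀ b ∈ Zstar, (∀ a ∈ LieAlgebra.center ℝ L, B a b = 0) → b = 0) :=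
  first_adapted_decomposition_general L σ hσ H M hH hM hcompl hHspan B hBnd hBsymm hBσ hBad hindec
    hdim
end

section
/- Let g be a finite-dimensional real nilpotent Lie algebra with dim g ≥ 2 which admits a nondegenerate symmetric bilinear form B satisfying B(⁅x,y⁆,z) = B(x,⁅y,z⁆) for all x,y,z ∈ g. Then the center of g has dimension at least 2. -/
/-!
For an invariant nondegenerate form the centre is the orthogonal complement of the derived
algebra `[L, L]`, so `dim 𝔷(L) = dim L - dim [L, L]`. If `[L, L]` had codimension at most one,
then `L = K x + [L, L]` would give `[L, L] = [L, [L, L]]`, which forces `[L, L] = 0` when `L` is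
nilpotent; but then `𝔷(L) = L` has dimension at least two.
-/

open Module LieModule

theorem Submodule.exists_span_singleton_sup_eq_top_of_finrank_le {K V : Type*} [DivisionRing K]
    [AddCommGroup V] [Module K V] [FiniteDimensional K V] (W : Submodule K V)
    (hW : finrank K V ≤ finrank K W + 1) : ∃ x : V, K ∙ x ⊔ W = ⊤ := by
  have hquot : finrank K (V ⧸ W) ≤ 1 := by
    have := W.finrank_quotient_add_finrank
    omega
  obtain ⟨v, hv⟩ := finrank_le_one_iff.mp hquot
  obtain ⟨x, rfl⟩ := W.mkQ_surjective v
  refine ⟨x, eq_top_iff.mpr fun y _ ↦ ?_⟩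
  obtain ⟨c, hc⟩ := hv (W.mkQ y)
  have hy : y - c • x ∈ W := by
    rw [← map_smul, Submodule.mkQ_apply, Submodule.mkQ_apply, Submodule.Quotient.eq] at hc
    simpa using W.neg_mem hc
  exact Submodule.mem_sup.mpr
    ⟨c • x, Submodule.smul_mem _ c (Submodule.mem_span_singleton_self x), _, hy,
      add_sub_cancel _ _⟩

namespace LieSubmodule

variable {R L M : Type*} [CommRing R] [LieRing L] [LieAlgebra R L]
  [AddCommGroup M] [Module R M] [LieRingModule L M]

theorem le_lowerCentralSeries_of_le_lie_top {N : LieSubmodule R L M}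
    (h : N ≤ ⁅(⊤ : LieIdeal R L), N⁆) (k : ℕ) : N ≤ lowerCentralSeries R L M k := by
  induction k with
  | zero => exact le_top
  | succ k ih => exact h.trans (lowerCentralSeries_succ R L M k ▸ mono_lie_right ⊤ ih)

theorem eq_bot_of_le_lie_top [LieModule R L M] [IsNilpotent L M] {N : LieSubmodule R L M}
    (h : N ≤ ⁅(⊤ : LieIdeal R L), N⁆) : N = ⊥ := by
  obtain ⟨k, hk⟩ := IsNilpotent.nilpotent R L M
  exact le_bot_iff.mp (hk ▸ le_lowerCentralSeries_of_le_lie_top h k)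

end LieSubmodule

namespace LieAlgebra

section CommRing

variable {R L : Type*} [CommRing R] [LieRing L] [LieAlgebra R L]

theorem derived_le_lie_top_of_span_sup_eq_top {I : LieIdeal R L} {x : L}
    (hxI : R ∙ x ⊔ I.toSubmodule = ⊤) :
    ⁅(⊤ : LieIdeal R L), ⊤⁆ ≤ ⁅(⊤ : LieIdeal R L), I⁆ := by
  rw [LieSubmodule.lie_le_iff]
  rintro a - b -
  obtain ⟨s, y, hy, rfl⟩ := LieSubmodule.exists_smul_add_of_span_sup_eq_top hxI a
  obtain ⟨t, z, hz, rfl⟩ := LieSubmodule.exists_smul_add_of_span_sup_eq_top hxI b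
  have hxx : ⁅s • x, t • x⁆ = (0 : L) := by simp
  have hexpand : ⁅s • x + y, t • x + z⁆ = ⁅s • x + y, z⁆ - ⁅t • x, y⁆ := by
    rw [lie_add, add_lie, hxx, zero_add, ← lie_skew, sub_eq_add_neg, add_comm]
  rw [hexpand]
  exact sub_mem (LieSubmodule.lie_mem_lie (LieSubmodule.mem_top _) hz)
    (LieSubmodule.lie_mem_lie (LieSubmodule.mem_top _) hy)

theorem derived_eq_bot_of_span_sup_eq_top [LieRing.IsNilpotent L] {x : L}
    (hx : R ∙ x ⊔ (⁅(⊤ : LieIdeal R L), ⊤⁆ : LieIdeal R L).toSubmodule = ⊤) :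
    (⁅(⊤ : LieIdeal R L), ⊤⁆ : LieIdeal R L) = ⊥ :=
  LieSubmodule.eq_bot_of_le_lie_top (derived_le_lie_top_of_span_sup_eq_top hx)

theorem center_eq_orthogonal_derived (B : LinearMap.BilinForm R L)
    (hB : LinearMap.SeparatingRight B) (hBad : ∀ x y z : L, B ⁅x, y⁆ z = B x ⁅y, z⁆) :
    (center R L).toSubmodule =
      B.orthogonal (⁅(⊤ : LieIdeal R L), ⊤⁆ : LieIdeal R L).toSubmodule := by
  ext x
  simp only [LieSubmodule.mem_toSubmodule, mem_maxTrivSubmodule,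
    LinearMap.BilinForm.mem_orthogonal_iff]
  constructor
  · intro hx d hd
    rw [← LieSubmodule.mem_toSubmodule, LieSubmodule.lieIdeal_oper_eq_linear_span'] at hd
    induction hd using Submodule.span_induction with
    | mem d hd =>
      obtain ⟨a, -, b, -, rfl⟩ := hd
      rw [hBad, hx, map_zero]
    | zero => simp
    | add d e _ _ hd he => simp [hd, he]
    | smul c d _ hd => simp [hd]
  · intro hx y
    refine hB _ fun z ↦ ?_
    rw [← hBad]
    exact hx _ (LieSubmodule.lie_mem_lie (LieSubmodule.mem_top z) (LieSubmodule.mem_top y))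

end CommRing

section Field

variable {K L : Type*} [Field K] [LieRing L] [LieAlgebra K L] [FiniteDimensional K L]

theorem finrank_center_add_finrank_derived (B : LinearMap.BilinForm K L) (hB : B.Nondegenerate)
    (hBad : ∀ x y z : L, B ⁅x, y⁆ z = B x ⁅y, z⁆) :
    finrank K (center K L).toSubmodule +
      finrank K (⁅(⊤ : LieIdeal K L), ⊤⁆ : LieIdeal K L).toSubmodule = finrank K L := by
  rw [center_eq_orthogonal_derived B hB.2 hBad, LinearMap.BilinForm.finrank_orthogonal hB]
  have := Submodule.finrank_le (⁅(⊤ : LieIdeal K L), ⊤⁆ : LieIdeal K L).toSubmodule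
  omega

end Field

end LieAlgebra

theorem center_dim_ge_two_of_nilpotent_metric_general
    (L : Type*) [LieRing L] [LieAlgebra ℝ L] [FiniteDimensional ℝ L]
    [LieRing.IsNilpotent L]
    (hdim : 2 ≤ Module.finrank ℝ L)
    (B : LinearMap.BilinForm ℝ L)
    (hBnd : B.Nondegenerate)
    (hBad : ∀ x y z : L, B ⁅x, y⁆ z = B x ⁅y, z⁆) :
    2 ≤ Module.finrank ℝ (LieAlgebra.center ℝ L).toSubmodule := by
  have hsum := LieAlgebra.finrank_center_add_finrank_derived B hBnd hBad
  by_contra! hcenter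
  obtain ⟨x, hx⟩ := Submodule.exists_span_singleton_sup_eq_top_of_finrank_le
    (⁅(⊤ : LieIdeal ℝ L), ⊤⁆ : LieIdeal ℝ L).toSubmodule (by omega)
  rw [LieAlgebra.derived_eq_bot_of_span_sup_eq_top hx, LieSubmodule.bot_toSubmodule,
    finrank_bot] at hsum
  omega

/-- A finite-dimensional real nilpotent Lie algebra of dimension at least 2
carrying a nondegenerate, symmetric, ad-invariant bilinear form has center of dimension at
least 2. -/
theorem center_dim_ge_two_of_nilpotent_metric
    (L : Type*) [LieRing L] [LieAlgebra ℝ L] [FiniteDimensional ℝ L]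
    [LieRing.IsNilpotent L]
    (hdim : 2 ≤ Module.finrank ℝ L)
    (B : LinearMap.BilinForm ℝ L)
    (hBnd : B.Nondegenerate)
    (hBsymm : ∀ x y : L, B x y = B y x)
    (hBad : ∀ x y z : L, B ⁅x, y⁆ z = B x ⁅y, z⁆) :
    2 ≤ Module.finrank ℝ (LieAlgebra.center ℝ L).toSubmodule :=
  center_dim_ge_two_of_nilpotent_metric_general L hdim B hBnd hBad
end

section
/- Let (g,σ,B) be a symmetric triple with eigenspace decomposition g = h ⊕ m, and suppose m = z ⊕ W ⊕ z* is a direct sum of subspaces such that z = z(g) is the center of g and is totally isotropic, B(z,W) = 0, ⁅h, z ⊕ W⁆ ⊆ z, and ⁅h, z*⁆ ⊆ z ⊕ W. Then: (1) ⁅W,W⁆ = 0, so z ⊕ W is an abelian subalgebra of g; (2) ⁅⁅z*,W⁆, h⁆ = 0, i.e. the subspace ⁅z*,W⁆ of h is central in h; (3) ⁅⁅z*,z*⁆, h⁆ ⊆ ⁅z*,W⁆; consequently ⁅⁅h,h⁆, h⁆ = 0, i.e. the holonomy algebra h is abelian or two-step nilpotent. -/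
/-!
Since `σ` is an automorphism preserving `B`, the eigenspaces `h` and `m` are `B`-orthogonal and
`⁅m, m⁆ ⊆ h`. By invariance, `B(x, ⁅w, w'⁆) = B(⁅x, w⁆, w')` for `w, w' ∈ W`: for `x ∈ h` this
lies in `B(z, W) = 0`, for `x ∈ m` in `B(h, m) = 0`, so nondegeneracy gives `⁅W, W⁆ = 0` and
`v := z ⊕ W` is abelian. Everything else is the Jacobi identity
`⁅⁅a, x⁆, h⁆ = ⁅a, ⁅x, h⁆⁆ - ⁅x, ⁅a, h⁆⁆`: for `x ∈ v` both terms vanish because `⁅h, v⁆ ⊆ z` and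
`⁅h, z*⁆ ⊆ v`, while for `x ∈ z*` both terms lie in `⁅z*, v⁆ = ⁅z*, W⁆`. Expanding
`h = ⁅m, m⁆` along `m = v ⊕ z*` then shows `⁅h, h⁆ ⊆ ⁅z*, W⁆`, which is central in `h`.
-/

open LieAlgebra

section LieBrackets

variable {R L : Type*} [CommRing R] [LieRing L] [LieAlgebra R L]

lemma lie_eq_zero_of_mem_center_left {c : L} (hc : c ∈ center R L) (y : L) : ⁅c, y⁆ = 0 := by
  rw [← lie_skew, hc y, neg_zero]

lemma LieHom.map_lie_eq_of_map_eq_neg (σ : L →ₗ⁅R⁆ L) {x y : L} (hx : σ x = -x)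
    (hy : σ y = -y) : σ ⁅x, y⁆ = ⁅x, y⁆ := by
  rw [LieHom.map_lie, hx, hy, neg_lie, lie_neg, neg_neg]

variable (R) in
def bracketSpan (A B : Submodule R L) : Submodule R L :=
  Submodule.span R {x : L | ∃ a ∈ A, ∃ b ∈ B, ⁅a, b⁆ = x}

lemma lie_mem_of_mem_bracketSpan {A B N : Submodule R L} {u y : L}
    (hu : u ∈ bracketSpan R A B) (h : ∀ a ∈ A, ∀ b ∈ B, ⁅⁅a, b⁆, y⁆ ∈ N) : ⁅u, y⁆ ∈ N := by
  induction hu using Submodule.span_induction with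
  | mem x hx =>
    obtain ⟨a, ha, b, hb, rfl⟩ := hx
    exact h a ha b hb
  | zero => simp
  | add x x' _ _ hx hx' => simpa only [add_lie] using N.add_mem hx hx'
  | smul r x _ hx => simpa only [smul_lie] using N.smul_mem r hx

lemma lie_mem_bracketSpan_of_mem_center_sup {A W : Submodule R L} {a x : L} (ha : a ∈ A)
    (hx : x ∈ (center R L).toSubmodule ⊔ W) : ⁅a, x⁆ ∈ bracketSpan R A W := by
  obtain ⟨c, hc, w, hw, rfl⟩ := Submodule.mem_sup.mp hx
  rw [lie_add, show ⁅a, c⁆ = 0 from hc a, zero_add]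
  exact Submodule.subset_span ⟨a, ha, w, hw, rfl⟩

lemma lie_eq_zero_of_mem_center_sup {W : Submodule R L} (hW : ∀ w ∈ W, ∀ w' ∈ W, ⁅w, w'⁆ = 0) :
    ∀ x ∈ (center R L).toSubmodule ⊔ W, ∀ y ∈ (center R L).toSubmodule ⊔ W, ⁅x, y⁆ = 0 := by
  intro x hx y hy
  obtain ⟨c, hc, w, hw, rfl⟩ := Submodule.mem_sup.mp hx
  obtain ⟨c', hc', w', hw', rfl⟩ := Submodule.mem_sup.mp hy
  rw [add_lie, lie_eq_zero_of_mem_center_left hc, lie_add, hc' w, hW w hw w' hw', add_zero,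
    zero_add]

lemma lie_lie_eq_zero_of_lie_mem_center {V : Submodule R L}
    (hV : ∀ v ∈ V, ∀ v' ∈ V, ⁅v, v'⁆ = 0) {a x h : L} (hx : x ∈ V)
    (hhx : ⁅h, x⁆ ∈ center R L) (hha : ⁅h, a⁆ ∈ V) : ⁅⁅a, x⁆, h⁆ = 0 := by
  rw [lie_lie, ← lie_skew x h, ← lie_skew a h, lie_neg, lie_neg, hhx a, hV x hx _ hha,
    neg_zero, sub_zero]

lemma lie_lie_mem_bracketSpan {A W : Submodule R L} {a b h : L} (ha : a ∈ A) (hb : b ∈ A)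
    (hha : ⁅h, a⁆ ∈ (center R L).toSubmodule ⊔ W) (hhb : ⁅h, b⁆ ∈ (center R L).toSubmodule ⊔ W) :
    ⁅⁅a, b⁆, h⁆ ∈ bracketSpan R A W := by
  rw [lie_lie, ← lie_skew b h, ← lie_skew a h, lie_neg, lie_neg]
  exact sub_mem (neg_mem (lie_mem_bracketSpan_of_mem_center_sup ha hhb))
    (neg_mem (lie_mem_bracketSpan_of_mem_center_sup hb hha))

lemma lie_lie_mem_bracketSpan_of_mem_sup {A W : Submodule R L}
    (hW : ∀ w ∈ W, ∀ w' ∈ W, ⁅w, w'⁆ = 0) {h x y : L}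
    (hhV : ∀ v ∈ (center R L).toSubmodule ⊔ W, ⁅h, v⁆ ∈ (center R L).toSubmodule)
    (hhA : ∀ a ∈ A, ⁅h, a⁆ ∈ (center R L).toSubmodule ⊔ W)
    (hx : x ∈ (center R L).toSubmodule ⊔ W ⊔ A) (hy : y ∈ (center R L).toSubmodule ⊔ W ⊔ A) :
    ⁅⁅x, y⁆, h⁆ ∈ bracketSpan R A W := by
  have hV := lie_eq_zero_of_mem_center_sup hW
  obtain ⟨v, hv, a, ha, rfl⟩ := Submodule.mem_sup.mp hx
  obtain ⟨v', hv', b, hb, rfl⟩ := Submodule.mem_sup.mp hy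
  have hvb : ⁅⁅v, b⁆, h⁆ = 0 := by
    rw [← lie_skew v b, neg_lie, lie_lie_eq_zero_of_lie_mem_center hV hv (hhV v hv) (hhA b hb),
      neg_zero]
  have hav : ⁅⁅a, v'⁆, h⁆ = 0 :=
    lie_lie_eq_zero_of_lie_mem_center hV hv' (hhV v' hv') (hhA a ha)
  rw [add_lie, lie_add, lie_add, hV v hv v' hv', add_lie, add_lie, add_lie, zero_lie, hvb, hav,
    zero_add, zero_add, zero_add]
  exact lie_lie_mem_bracketSpan ha hb (hhA a ha) (hhA b hb)

end LieBrackets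

lemma LinearMap.BilinForm.apply_eq_zero_of_map_eq_self_of_map_eq_neg {R M : Type*} [CommRing R]
    [IsAddTorsionFree R] [AddCommGroup M] [Module R M] {B : LinearMap.BilinForm R M} {σ : M → M}
    (hB : ∀ x y, B (σ x) (σ y) = B x y) {p q : M} (hp : σ p = p) (hq : σ q = -q) :
    B p q = 0 := by
  have h := hB p q
  rwa [hp, hq, map_neg, neg_eq_iff_eq_neg, self_eq_neg] at h

lemma lie_eq_zero_of_forall_lie_mem_center {R L : Type*} [CommRing R] [IsAddTorsionFree R]
    [LieRing L] [LieAlgebra R L] (σ : L →ₗ⁅R⁆ L) {H M W : Submodule R L}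
    (hM : ∀ x, x ∈ M ↔ σ x = -x) (hHM : H ⊔ M = ⊤)
    {B : LinearMap.BilinForm R L} (hB : B.SeparatingRight)
    (hBσ : ∀ x y : L, B (σ x) (σ y) = B x y) (hBad : ∀ x y z : L, B ⁅x, y⁆ z = B x ⁅y, z⁆)
    (hWM : W ≤ M) (hZW : ∀ x ∈ center R L, ∀ y ∈ W, B x y = 0)
    (hHW : ∀ h ∈ H, ∀ w ∈ W, ⁅h, w⁆ ∈ center R L) {w w' : L} (hw : w ∈ W) (hw' : w' ∈ W) :
    ⁅w, w'⁆ = 0 := by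
  refine hB _ fun x ↦ ?_
  obtain ⟨p, hp, q, hq, rfl⟩ := Submodule.mem_sup.mp (hHM ▸ Submodule.mem_top : x ∈ H ⊔ M)
  have hqw : σ ⁅q, w⁆ = ⁅q, w⁆ := σ.map_lie_eq_of_map_eq_neg ((hM q).1 hq) ((hM w).1 (hWM hw))
  rw [← hBad, add_lie, map_add, LinearMap.add_apply, hZW _ (hHW p hp w hw) w' hw',
    LinearMap.BilinForm.apply_eq_zero_of_map_eq_self_of_map_eq_neg hBσ hqw
      ((hM w').1 (hWM hw')), add_zero]

theorem holonomy_two_step_nilpotent_general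
    (L : Type*) [LieRing L] [LieAlgebra ℝ L]
    (σ : L →ₗ⁅ℝ⁆ L)
    (H M : Submodule ℝ L)
    (hM : ∀ x, x ∈ M ↔ σ x = -x)
    (hcompl : IsCompl H M)
    (hHspan : H = Submodule.span ℝ {z : L | ∃ x ∈ M, ∃ y ∈ M, ⁅x, y⁆ = z})
    (B : LinearMap.BilinForm ℝ L)
    (hBnd : B.Nondegenerate)
    (hBσ : ∀ x y : L, B (σ x) (σ y) = B x y)
    (hBad : ∀ x y z : L, B ⁅x, y⁆ z = B x ⁅y, z⁆)
    (W Zstar : Submodule ℝ L)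
    (hWM : W ≤ M)
    -- m = z ⊕ W ⊕ z* as an internal direct sum
    (hsum : (LieAlgebra.center ℝ L).toSubmodule ⊔ W ⊔ Zstar = M)
    -- z is totally isotropic and B(z,W) = 0
    (hZW : ∀ x ∈ LieAlgebra.center ℝ L, ∀ y ∈ W, B x y = 0)
    -- ⁅h, z ⊕ W⁆ ⊆ z and ⁅h, z*⁆ ⊆ z ⊕ W
    (hbr₁ : ∀ h ∈ H, ∀ x ∈ (LieAlgebra.center ℝ L).toSubmodule ⊔ W,
      ⁅h, x⁆ ∈ (LieAlgebra.center ℝ L).toSubmodule)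
    (hbr₂ : ∀ h ∈ H, ∀ x ∈ Zstar,
      ⁅h, x⁆ ∈ (LieAlgebra.center ℝ L).toSubmodule ⊔ W) :
    -- (1) ⁅W,W⁆ = 0, hence z ⊕ W is an abelian subalgebra
    (∀ x ∈ W, ∀ y ∈ W, ⁅x, y⁆ = (0 : L)) ∧
    (∀ x ∈ (LieAlgebra.center ℝ L).toSubmodule ⊔ W,
      ∀ y ∈ (LieAlgebra.center ℝ L).toSubmodule ⊔ W, ⁅x, y⁆ = (0 : L)) ∧
    -- (2) ⁅z*,W⁆ is central in h
    (∀ a ∈ Zstar, ∀ w ∈ W, ∀ h ∈ H, ⁅⁅a, w⁆, h⁆ = (0 : L)) ∧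
    -- (3) ⁅⁅z*,z*⁆, h⁆ ⊆ ⁅z*,W⁆
    (∀ a ∈ Zstar, ∀ b ∈ Zstar, ∀ h ∈ H,
      ⁅⁅a, b⁆, h⁆ ∈ Submodule.span ℝ {x : L | ∃ c ∈ Zstar, ∃ w ∈ W, ⁅c, w⁆ = x}) ∧
    -- consequently h is abelian or two-step nilpotent
    (∀ h₁ ∈ H, ∀ h₂ ∈ H, ∀ h₃ ∈ H, ⁅⁅h₁, h₂⁆, h₃⁆ = (0 : L)) := by
  have hW : ∀ w ∈ W, ∀ w' ∈ W, ⁅w, w'⁆ = 0 := fun w hw w' hw' ↦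
    lie_eq_zero_of_forall_lie_mem_center σ hM hcompl.sup_eq_top hBnd.2 hBσ hBad hWM hZW
      (fun h hh w hw ↦ hbr₁ h hh w (Submodule.mem_sup_right hw)) hw hw'
  have hcentral : ∀ a ∈ Zstar, ∀ w ∈ W, ∀ h ∈ H, ⁅⁅a, w⁆, h⁆ = 0 := fun a ha w hw h hh ↦
    lie_lie_eq_zero_of_lie_mem_center (lie_eq_zero_of_mem_center_sup hW)
      (Submodule.mem_sup_right hw) (hbr₁ h hh w (Submodule.mem_sup_right hw)) (hbr₂ h hh a ha)
  have hderived : ∀ h₁ ∈ H, ∀ h₂ ∈ H, ⁅h₁, h₂⁆ ∈ bracketSpan ℝ Zstar W := by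
    intro h₁ hh₁ h₂ hh₂
    rw [hHspan] at hh₁
    exact lie_mem_of_mem_bracketSpan hh₁ fun x hx y hy ↦
      lie_lie_mem_bracketSpan_of_mem_sup hW (hbr₁ h₂ hh₂) (hbr₂ h₂ hh₂) (hsum ▸ hx) (hsum ▸ hy)
  refine ⟨hW, lie_eq_zero_of_mem_center_sup hW, hcentral,
    fun a ha b hb h hh ↦ lie_lie_mem_bracketSpan ha hb (hbr₂ h hh a ha) (hbr₂ h hh b hb), ?_⟩
  intro h₁ hh₁ h₂ hh₂ h₃ hh₃
  exact (Submodule.mem_bot ℝ).1 <| lie_mem_of_mem_bracketSpan (hderived h₁ hh₁ h₂ hh₂)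
    fun a ha w hw ↦ (Submodule.mem_bot ℝ).2 (hcentral a ha w hw h₃ hh₃)

/-- For a symmetric triple with a decomposition `m = z ⊕ W ⊕ z*`
(`z = z(g)` totally isotropic, `B(z,W)=0`, `⁅h, z ⊕ W⁆ ⊆ z`, `⁅h, z*⁆ ⊆ z ⊕ W`):
(1) `⁅W,W⁆ = 0`, so `z ⊕ W` is abelian; (2) `⁅z*,W⁆` is central in `h`;
(3) `⁅⁅z*,z*⁆,h⁆ ⊆ ⁅z*,W⁆`; consequently `h` is abelian or two-step nilpotent. -/
theorem holonomy_two_step_nilpotent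
    (L : Type*) [LieRing L] [LieAlgebra ℝ L] [FiniteDimensional ℝ L]
    (σ : L →ₗ⁅ℝ⁆ L) (hσ : ∀ x, σ (σ x) = x)
    (H M : Submodule ℝ L)
    (hH : ∀ x, x ∈ H ↔ σ x = x)
    (hM : ∀ x, x ∈ M ↔ σ x = -x)
    (hcompl : IsCompl H M)
    (hHspan : H = Submodule.span ℝ {z : L | ∃ x ∈ M, ∃ y ∈ M, ⁅x, y⁆ = z})
    (B : LinearMap.BilinForm ℝ L)
    (hBnd : B.Nondegenerate)
    (hBsymm : ∀ x y : L, B x y = B y x)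
    (hBσ : ∀ x y : L, B (σ x) (σ y) = B x y)
    (hBad : ∀ x y z : L, B ⁅x, y⁆ z = B x ⁅y, z⁆)
    (W Zstar : Submodule ℝ L)
    (hWM : W ≤ M) (hZstarM : Zstar ≤ M)
    -- m = z ⊕ W ⊕ z* as an internal direct sum
    (hdisj₁ : Disjoint (LieAlgebra.center ℝ L).toSubmodule W)
    (hdisj₂ : Disjoint ((LieAlgebra.center ℝ L).toSubmodule ⊔ W) Zstar)
    (hsum : (LieAlgebra.center ℝ L).toSubmodule ⊔ W ⊔ Zstar = M)
    -- z is totally isotropic and B(z,W) = 0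
    (hZiso : ∀ x ∈ LieAlgebra.center ℝ L, ∀ y ∈ LieAlgebra.center ℝ L, B x y = 0)
    (hZW : ∀ x ∈ LieAlgebra.center ℝ L, ∀ y ∈ W, B x y = 0)
    -- ⁅h, z ⊕ W⁆ ⊆ z and ⁅h, z*⁆ ⊆ z ⊕ W
    (hbr₁ : ∀ h ∈ H, ∀ x ∈ (LieAlgebra.center ℝ L).toSubmodule ⊔ W,
      ⁅h, x⁆ ∈ (LieAlgebra.center ℝ L).toSubmodule)
    (hbr₂ : ∀ h ∈ H, ∀ x ∈ Zstar,
      ⁅h, x⁆ ∈ (LieAlgebra.center ℝ L).toSubmodule ⊔ W) :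
    -- (1) ⁅W,W⁆ = 0, hence z ⊕ W is an abelian subalgebra
    (∀ x ∈ W, ∀ y ∈ W, ⁅x, y⁆ = (0 : L)) ∧
    (∀ x ∈ (LieAlgebra.center ℝ L).toSubmodule ⊔ W,
      ∀ y ∈ (LieAlgebra.center ℝ L).toSubmodule ⊔ W, ⁅x, y⁆ = (0 : L)) ∧
    -- (2) ⁅z*,W⁆ is central in h
    (∀ a ∈ Zstar, ∀ w ∈ W, ∀ h ∈ H, ⁅⁅a, w⁆, h⁆ = (0 : L)) ∧
    -- (3) ⁅⁅z*,z*⁆, h⁆ ⊆ ⁅z*,W⁆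
    (∀ a ∈ Zstar, ∀ b ∈ Zstar, ∀ h ∈ H,
      ⁅⁅a, b⁆, h⁆ ∈ Submodule.span ℝ {x : L | ∃ c ∈ Zstar, ∃ w ∈ W, ⁅c, w⁆ = x}) ∧
    -- consequently h is abelian or two-step nilpotent
    (∀ h₁ ∈ H, ∀ h₂ ∈ H, ∀ h₃ ∈ H, ⁅⁅h₁, h₂⁆, h₃⁆ = (0 : L)) :=
  holonomy_two_step_nilpotent_general L σ H M hM hcompl hHspan B hBnd hBσ hBad W Zstar hWM hsum hZW
    hbr₁ hbr₂
end

section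
/- Let (g,σ,B) be a symmetric triple with g = h ⊕ m and an adapted decomposition m = z ⊕ W ⊕ z* with maximal center, so that z = z(g) is totally isotropic, B(z,W) = B(z*,W) = 0, B restricted to W is positive definite, ⁅h, z ⊕ W⁆ ⊆ z, and ⁅h, z*⁆ ⊆ z ⊕ W. For a,b ∈ z* define F(a,b) : W → W by F(a,b)(w) = pr_W(⁅a, ⁅b, w⁆⁆), where pr_W is the projection of m onto W along z ⊕ z*. Then for all a,b,c,d ∈ z*: (1) F(a,b) is self-adjoint with respect to B restricted to W, i.e. B(F(a,b)w, w') = B(w, F(a,b)w') for all w,w' ∈ W; (2) F(a,b) = F(b,a); (3) F(a,b) ∘ F(c,d) = F(c,d) ∘ F(a,b). -/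
/-!
Because `[𝔪, 𝔪] ⊆ 𝔥` is `B`-orthogonal to `𝔪` while `ad 𝔥` maps `W` into the center, which is
orthogonal to `W`, nondegeneracy of `B` forces `W` to be abelian. Invariance of `B` then moves
`ad a ∘ ad b` from one side of `B|_W` to the other. Since `[𝔥, W] ⊆ 𝔷` and `[𝔥, [𝔷*, W]] = 0`,
the Jacobi identity shows that the operators `ad a ∘ ad b` (`a, b ∈ 𝔷*`) commute on `W` modulo
the center, which `pr_W` kills.
-/

theorem LieHom.map_lie_eq_self_of_map_eq_neg {R L : Type*} [CommRing R] [LieRing L]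
    [LieAlgebra R L] (σ : L →ₗ⁅R⁆ L) {x y : L} (hx : σ x = -x) (hy : σ y = -y) :
    σ ⁅x, y⁆ = ⁅x, y⁆ := by
  rw [σ.map_lie, hx, hy, neg_lie, lie_neg, neg_neg]

theorem LinearMap.BilinForm.apply_eq_zero_of_map_eq_neg_of_map_eq_self {R M : Type*}
    [CommRing R] [IsAddTorsionFree R] [AddCommGroup M] [Module R M]
    (B : LinearMap.BilinForm R M) (σ : M → M) (hBσ : ∀ x y, B (σ x) (σ y) = B x y)
    {x y : M} (hx : σ x = -x) (hy : σ y = y) : B x y = 0 := by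
  have h := hBσ x y
  rw [hx, hy, map_neg, LinearMap.neg_apply] at h
  exact self_eq_neg.mp h.symm

theorem Submodule.sub_apply_mem_of_mem_sup {R M : Type*} [Ring R] [AddCommGroup M] [Module R M]
    {Z W : Submodule R M} {p : M →ₗ[R] M} (hpZ : ∀ z ∈ Z, p z = 0) (hpW : ∀ w ∈ W, p w = w)
    {x : M} (hx : x ∈ Z ⊔ W) : x - p x ∈ Z := by
  obtain ⟨z, hz, w, hw, rfl⟩ := Submodule.mem_sup.mp hx
  rwa [map_add, hpZ z hz, hpW w hw, zero_add, add_sub_cancel_right]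

section

variable {R L : Type*} [CommRing R] [LieRing L] [LieAlgebra R L]

theorem LieAlgebra.lie_eq_zero_of_mem_center {z : L}
    (hz : z ∈ (LieAlgebra.center R L).toSubmodule) (x : L) : ⁅x, z⁆ = 0 :=
  (LieModule.mem_maxTrivSubmodule R L L z).mp hz x

theorem LieAlgebra.lie_apply_eq_of_mem_center_sup {W : Submodule R L} {p : L →ₗ[R] L}
    (hpZ : ∀ z ∈ (LieAlgebra.center R L).toSubmodule, p z = 0) (hpW : ∀ w ∈ W, p w = w)
    {x : L} (hx : x ∈ (LieAlgebra.center R L).toSubmodule ⊔ W) (y : L) :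
    ⁅y, p x⁆ = ⁅y, x⁆ := by
  rw [eq_comm, ← sub_eq_zero, ← lie_sub]
  exact lie_eq_zero_of_mem_center (Submodule.sub_apply_mem_of_mem_sup hpZ hpW hx) y

theorem LinearMap.BilinForm.apply_apply_eq_of_mem_center_sup {W : Submodule R L}
    {p : L →ₗ[R] L} (hpZ : ∀ z ∈ (LieAlgebra.center R L).toSubmodule, p z = 0)
    (hpW : ∀ w ∈ W, p w = w) {B : LinearMap.BilinForm R L}
    (hWZ : ∀ w ∈ W, ∀ z ∈ LieAlgebra.center R L, B w z = 0)
    {x : L} (hx : x ∈ (LieAlgebra.center R L).toSubmodule ⊔ W) {v : L} (hv : v ∈ W) :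
    B v (p x) = B v x := by
  rw [eq_comm, ← sub_eq_zero, ← map_sub]
  exact hWZ v hv _ (Submodule.sub_apply_mem_of_mem_sup hpZ hpW hx)

theorem LinearMap.BilinForm.apply_lie_lie_eq_of_lie_eq_zero {B : LinearMap.BilinForm R L}
    (hBad : ∀ x y z : L, B ⁅x, y⁆ z = B x ⁅y, z⁆) {w w' : L} (h : ⁅w, w'⁆ = 0) (a b : L) :
    B ⁅a, ⁅b, w⁆⁆ w' = B w ⁅a, ⁅b, w'⁆⁆ :=
  calc B ⁅a, ⁅b, w⁆⁆ w' = B a ⁅⁅b, w⁆, w'⁆ := hBad _ _ _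
    _ = -B ⁅a, w⁆ ⁅b, w'⁆ := by rw [lie_lie, h, lie_zero, zero_sub, map_neg, hBad]
    _ = B w ⁅a, ⁅b, w'⁆⁆ := by
      rw [← hBad w a, ← lie_skew a w, map_neg, LinearMap.neg_apply, neg_neg]

theorem LieAlgebra.lie_eq_zero_of_orthogonal_center {H M W : Submodule R L} (hHM : H ⊔ M = ⊤)
    {B : LinearMap.BilinForm R L} (hB : B.SeparatingLeft)
    (hBad : ∀ x y z : L, B ⁅x, y⁆ z = B x ⁅y, z⁆)
    (hMM : ∀ x ∈ M, ∀ y ∈ M, ⁅x, y⁆ ∈ H) (hMH : ∀ x ∈ M, ∀ h ∈ H, B x h = 0) (hWM : W ≤ M)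
    (hHW : ∀ h ∈ H, ∀ w ∈ W, ⁅h, w⁆ ∈ LieAlgebra.center R L)
    (hWZ : ∀ w ∈ W, ∀ z ∈ LieAlgebra.center R L, B w z = 0)
    {w w' : L} (hw : w ∈ W) (hw' : w' ∈ W) : ⁅w, w'⁆ = 0 := by
  refine hB _ fun n => ?_
  obtain ⟨h, hh, m, hm, rfl⟩ := Submodule.mem_sup.mp (hHM ▸ Submodule.mem_top : n ∈ H ⊔ M)
  rw [hBad, lie_add, map_add, ← lie_skew, map_neg, hWZ w hw _ (hHW h hh w' hw'),
    hMH w (hWM hw) _ (hMM w' (hWM hw') m hm), neg_zero, add_zero]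

/-- The bracket relations of `𝔤 = 𝔥 ⊕ 𝔷 ⊕ W ⊕ 𝔷*`, where `𝔷` is the center and
`H`, `W`, `Zstar` stand for `𝔥`, `W`, `𝔷*`. -/
structure AdaptedBrackets (H W Zstar : Submodule R L) : Prop where
  zstar_lie_zstar : ∀ a ∈ Zstar, ∀ b ∈ Zstar, ⁅a, b⁆ ∈ H
  zstar_lie_W : ∀ a ∈ Zstar, ∀ w ∈ W, ⁅a, w⁆ ∈ H
  W_lie_W : ∀ w ∈ W, ∀ w' ∈ W, ⁅w, w'⁆ = 0
  H_lie_center_sup_W : ∀ h ∈ H, ∀ x ∈ (LieAlgebra.center R L).toSubmodule ⊔ W,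
    ⁅h, x⁆ ∈ (LieAlgebra.center R L).toSubmodule
  H_lie_zstar : ∀ h ∈ H, ∀ a ∈ Zstar, ⁅h, a⁆ ∈ (LieAlgebra.center R L).toSubmodule ⊔ W

namespace AdaptedBrackets

open LieAlgebra

variable {H W Zstar : Submodule R L} {a b c d w : L}

theorem H_lie_W (hA : AdaptedBrackets H W Zstar) {h : L} (hh : h ∈ H) (hw : w ∈ W) :
    ⁅h, w⁆ ∈ (center R L).toSubmodule :=
  hA.H_lie_center_sup_W h hh w (Submodule.mem_sup_right hw)

theorem W_lie_center_sup_W (hA : AdaptedBrackets H W Zstar) {x : L} (hw : w ∈ W)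
    (hx : x ∈ (center R L).toSubmodule ⊔ W) : ⁅w, x⁆ = 0 := by
  obtain ⟨z, hz, u, hu, rfl⟩ := Submodule.mem_sup.mp hx
  rw [lie_add, lie_eq_zero_of_mem_center hz, hA.W_lie_W w hw u hu, add_zero]

theorem zstar_lie_zstar_lie_W (hA : AdaptedBrackets H W Zstar) (ha : a ∈ Zstar)
    (hb : b ∈ Zstar) (hw : w ∈ W) : ⁅a, ⁅b, w⁆⁆ ∈ (center R L).toSubmodule ⊔ W := by
  rw [← lie_skew]
  exact neg_mem (hA.H_lie_zstar _ (hA.zstar_lie_W b hb w hw) a ha)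

theorem H_lie_zstar_lie_W (hA : AdaptedBrackets H W Zstar) {h : L} (hh : h ∈ H)
    (hd : d ∈ Zstar) (hw : w ∈ W) : ⁅h, ⁅d, w⁆⁆ = 0 := by
  rw [leibniz_lie, lie_eq_zero_of_mem_center (hA.H_lie_W hh hw) d, add_zero, ← neg_eq_zero,
    lie_skew, hA.W_lie_center_sup_W hw (hA.H_lie_zstar h hh d hd)]

theorem lie_lie_lie_comm_left (hA : AdaptedBrackets H W Zstar) (ha : a ∈ Zstar)
    (hb : b ∈ Zstar) (hc : c ∈ Zstar) (hw : w ∈ W) :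
    ⁅a, ⁅b, ⁅c, w⁆⁆⁆ = ⁅b, ⁅a, ⁅c, w⁆⁆⁆ := by
  rw [leibniz_lie a b, hA.H_lie_zstar_lie_W (hA.zstar_lie_zstar a ha b hb) hc hw, zero_add]

theorem lie_lie_lie_comm_right (hA : AdaptedBrackets H W Zstar) (hb : b ∈ Zstar)
    (hc : c ∈ Zstar) (hw : w ∈ W) (a : L) :
    ⁅a, ⁅b, ⁅c, w⁆⁆⁆ = ⁅a, ⁅c, ⁅b, w⁆⁆⁆ := by
  rw [leibniz_lie b c, lie_add,
    lie_eq_zero_of_mem_center (hA.H_lie_W (hA.zstar_lie_zstar b hb c hc) hw) a, zero_add]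

theorem lie_lie_lie_lie_sub_mem_center (hA : AdaptedBrackets H W Zstar) (ha : a ∈ Zstar)
    (hb : b ∈ Zstar) (hc : c ∈ Zstar) (hd : d ∈ Zstar) (hw : w ∈ W) :
    ⁅a, ⁅b, ⁅c, ⁅d, w⁆⁆⁆⁆ - ⁅c, ⁅d, ⁅a, ⁅b, w⁆⁆⁆⁆ ∈ (center R L).toSubmodule := by
  rw [hA.lie_lie_lie_comm_left hb hc hd hw, hA.lie_lie_lie_comm_right hb hd hw c,
    leibniz_lie a c, hA.lie_lie_lie_comm_left ha hd hb hw, add_sub_cancel_right]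
  exact hA.H_lie_center_sup_W _ (hA.zstar_lie_zstar a ha c hc) _
    (hA.zstar_lie_zstar_lie_W hd hb hw)

variable {p : L →ₗ[R] L}

theorem proj_lie_lie_comm (hA : AdaptedBrackets H W Zstar)
    (hpZ : ∀ z ∈ (center R L).toSubmodule, p z = 0) (ha : a ∈ Zstar) (hb : b ∈ Zstar)
    (hw : w ∈ W) : p ⁅a, ⁅b, w⁆⁆ = p ⁅b, ⁅a, w⁆⁆ := by
  rw [leibniz_lie, map_add, hpZ _ (hA.H_lie_W (hA.zstar_lie_zstar a ha b hb) hw), zero_add]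

theorem proj_lie_lie_proj_comm (hA : AdaptedBrackets H W Zstar)
    (hpZ : ∀ z ∈ (center R L).toSubmodule, p z = 0) (hpW : ∀ w ∈ W, p w = w)
    (ha : a ∈ Zstar) (hb : b ∈ Zstar) (hc : c ∈ Zstar) (hd : d ∈ Zstar) (hw : w ∈ W) :
    p ⁅a, ⁅b, p ⁅c, ⁅d, w⁆⁆⁆⁆ = p ⁅c, ⁅d, p ⁅a, ⁅b, w⁆⁆⁆⁆ := by
  rw [lie_apply_eq_of_mem_center_sup hpZ hpW (hA.zstar_lie_zstar_lie_W hc hd hw),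
    lie_apply_eq_of_mem_center_sup hpZ hpW (hA.zstar_lie_zstar_lie_W ha hb hw),
    ← sub_eq_zero, ← map_sub]
  exact hpZ _ (hA.lie_lie_lie_lie_sub_mem_center ha hb hc hd hw)

theorem apply_proj_lie_lie_symm (hA : AdaptedBrackets H W Zstar)
    (hpZ : ∀ z ∈ (center R L).toSubmodule, p z = 0) (hpW : ∀ w ∈ W, p w = w)
    {B : LinearMap.BilinForm R L} (hBsymm : ∀ x y : L, B x y = B y x)
    (hBad : ∀ x y z : L, B ⁅x, y⁆ z = B x ⁅y, z⁆)
    (hWZ : ∀ w ∈ W, ∀ z ∈ center R L, B w z = 0)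
    (ha : a ∈ Zstar) (hb : b ∈ Zstar) {w' : L} (hw : w ∈ W) (hw' : w' ∈ W) :
    B (p ⁅a, ⁅b, w⁆⁆) w' = B w (p ⁅a, ⁅b, w'⁆⁆) := by
  have hX := hA.zstar_lie_zstar_lie_W ha hb hw
  have hX' := hA.zstar_lie_zstar_lie_W ha hb hw'
  rw [hBsymm, B.apply_apply_eq_of_mem_center_sup hpZ hpW hWZ hX hw',
    B.apply_apply_eq_of_mem_center_sup hpZ hpW hWZ hX' hw, ← hBsymm,
    B.apply_lie_lie_eq_of_lie_eq_zero hBad (hA.W_lie_W w hw w' hw')]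

end AdaptedBrackets

end

theorem F_operators_selfadjoint_commute_general
    (L : Type*) [LieRing L] [LieAlgebra ℝ L]
    (σ : L →ₗ⁅ℝ⁆ L)
    (H M : Submodule ℝ L)
    (hH : ∀ x, x ∈ H ↔ σ x = x)
    (hM : ∀ x, x ∈ M ↔ σ x = -x)
    (hcompl : IsCompl H M)
    (B : LinearMap.BilinForm ℝ L)
    (hBnd : B.Nondegenerate)
    (hBsymm : ∀ x y : L, B x y = B y x)
    (hBσ : ∀ x y : L, B (σ x) (σ y) = B x y)
    (hBad : ∀ x y z : L, B ⁅x, y⁆ z = B x ⁅y, z⁆)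
    -- adapted decomposition m = z ⊕ W ⊕ z* with maximal center
    (W Zstar : Submodule ℝ L)
    (hWM : W ≤ M) (hZstarM : Zstar ≤ M)
    (hWZ : ∀ w ∈ W, ∀ z ∈ LieAlgebra.center ℝ L, B w z = 0)
    (hbr₁ : ∀ h ∈ H, ∀ x ∈ (LieAlgebra.center ℝ L).toSubmodule ⊔ W,
      ⁅h, x⁆ ∈ (LieAlgebra.center ℝ L).toSubmodule)
    (hbr₂ : ∀ h ∈ H, ∀ x ∈ Zstar,
      ⁅h, x⁆ ∈ (LieAlgebra.center ℝ L).toSubmodule ⊔ W)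
    -- pr_W : projection of m onto W along z ⊕ z*
    (prW : L →ₗ[ℝ] L)
    (hprW₂ : ∀ w ∈ W, prW w = w)
    (hprW₃ : ∀ z ∈ LieAlgebra.center ℝ L, prW z = 0) :
    ∀ a ∈ Zstar, ∀ b ∈ Zstar, ∀ c ∈ Zstar, ∀ d ∈ Zstar,
      -- (1) F(a,b) is self-adjoint with respect to B|_W
      (∀ w ∈ W, ∀ w' ∈ W, B (prW ⁅a, ⁅b, w⁆⁆) w' = B w (prW ⁅a, ⁅b, w'⁆⁆)) ∧
      -- (2) F(a,b) = F(b,a)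
      (∀ w ∈ W, prW ⁅a, ⁅b, w⁆⁆ = prW ⁅b, ⁅a, w⁆⁆) ∧
      -- (3) F(a,b) ∘ F(c,d) = F(c,d) ∘ F(a,b)
      (∀ w ∈ W, prW ⁅a, ⁅b, prW ⁅c, ⁅d, w⁆⁆⁆⁆ = prW ⁅c, ⁅d, prW ⁅a, ⁅b, w⁆⁆⁆⁆) := by
  intro a ha b hb c hc d hd
  have hMM : ∀ x ∈ M, ∀ y ∈ M, ⁅x, y⁆ ∈ H := fun x hx y hy =>
    (hH _).2 (σ.map_lie_eq_self_of_map_eq_neg ((hM x).1 hx) ((hM y).1 hy))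
  have hMH : ∀ x ∈ M, ∀ h ∈ H, B x h = 0 := fun x hx h hh =>
    B.apply_eq_zero_of_map_eq_neg_of_map_eq_self σ hBσ ((hM x).1 hx) ((hH h).1 hh)
  have hA : AdaptedBrackets H W Zstar :=
    { zstar_lie_zstar := fun a ha b hb => hMM a (hZstarM ha) b (hZstarM hb)
      zstar_lie_W := fun a ha w hw => hMM a (hZstarM ha) w (hWM hw)
      W_lie_W := fun w hw w' hw' =>
        LieAlgebra.lie_eq_zero_of_orthogonal_center hcompl.sup_eq_top hBnd.1 hBad hMM hMH hWM
          (fun h hh w hw => hbr₁ h hh w (Submodule.mem_sup_right hw)) hWZ hw hw'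
      H_lie_center_sup_W := hbr₁
      H_lie_zstar := hbr₂ }
  exact ⟨fun w hw w' hw' => hA.apply_proj_lie_lie_symm hprW₃ hprW₂ hBsymm hBad hWZ ha hb hw hw',
    fun w hw => hA.proj_lie_lie_comm hprW₃ ha hb hw,
    fun w hw => hA.proj_lie_lie_proj_comm hprW₃ hprW₂ ha hb hc hd hw⟩

/-- For a symmetric triple with an adapted decomposition `m = z ⊕ W ⊕ z*`
with maximal center, the operators `F(a,b) = pr_W ∘ ad(a) ∘ ad(b)|_W` (`a,b ∈ z*`) are
self-adjoint w.r.t. `B|_W`, symmetric in `(a,b)`, and pairwise commute. -/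
theorem F_operators_selfadjoint_commute
    (L : Type*) [LieRing L] [LieAlgebra ℝ L] [FiniteDimensional ℝ L]
    (σ : L →ₗ⁅ℝ⁆ L) (hσ : ∀ x, σ (σ x) = x)
    (H M : Submodule ℝ L)
    (hH : ∀ x, x ∈ H ↔ σ x = x)
    (hM : ∀ x, x ∈ M ↔ σ x = -x)
    (hcompl : IsCompl H M)
    (hHspan : H = Submodule.span ℝ {z : L | ∃ x ∈ M, ∃ y ∈ M, ⁅x, y⁆ = z})
    (B : LinearMap.BilinForm ℝ L)
    (hBnd : B.Nondegenerate)
    (hBsymm : ∀ x y : L, B x y = B y x)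
    (hBσ : ∀ x y : L, B (σ x) (σ y) = B x y)
    (hBad : ∀ x y z : L, B ⁅x, y⁆ z = B x ⁅y, z⁆)
    -- adapted decomposition m = z ⊕ W ⊕ z* with maximal center
    (W Zstar : Submodule ℝ L)
    (hWM : W ≤ M) (hZstarM : Zstar ≤ M)
    (hdisj₁ : Disjoint (LieAlgebra.center ℝ L).toSubmodule W)
    (hdisj₂ : Disjoint ((LieAlgebra.center ℝ L).toSubmodule ⊔ W) Zstar)
    (hsum : (LieAlgebra.center ℝ L).toSubmodule ⊔ W ⊔ Zstar = M)
    (hZiso : ∀ x ∈ LieAlgebra.center ℝ L, ∀ y ∈ LieAlgebra.center ℝ L, B x y = 0)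
    (hZstariso : ∀ x ∈ Zstar, ∀ y ∈ Zstar, B x y = 0)
    (hWZ : ∀ w ∈ W, ∀ z ∈ LieAlgebra.center ℝ L, B w z = 0)
    (hWZstar : ∀ w ∈ W, ∀ a ∈ Zstar, B w a = 0)
    (hWpos : ∀ w ∈ W, w ≠ 0 → 0 < B w w)
    (hpair₁ : ∀ a ∈ LieAlgebra.center ℝ L, (∀ b ∈ Zstar, B a b = 0) → a = 0)
    (hpair₂ : ∀ b ∈ Zstar, (∀ a ∈ LieAlgebra.center ℝ L, B a b = 0) → b = 0)
    (hbr₁ : ∀ h ∈ H, ∀ x ∈ (LieAlgebra.center ℝ L).toSubmodule ⊔ W,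
      ⁅h, x⁆ ∈ (LieAlgebra.center ℝ L).toSubmodule)
    (hbr₂ : ∀ h ∈ H, ∀ x ∈ Zstar,
      ⁅h, x⁆ ∈ (LieAlgebra.center ℝ L).toSubmodule ⊔ W)
    -- pr_W : projection of m onto W along z ⊕ z*
    (prW : L →ₗ[ℝ] L)
    (hprW₁ : ∀ x : L, prW x ∈ W)
    (hprW₂ : ∀ w ∈ W, prW w = w)
    (hprW₃ : ∀ z ∈ LieAlgebra.center ℝ L, prW z = 0)
    (hprW₄ : ∀ a ∈ Zstar, prW a = 0) :
    ∀ a ∈ Zstar, ∀ b ∈ Zstar, ∀ c ∈ Zstar, ∀ d ∈ Zstar,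
      -- (1) F(a,b) is self-adjoint with respect to B|_W
      (∀ w ∈ W, ∀ w' ∈ W, B (prW ⁅a, ⁅b, w⁆⁆) w' = B w (prW ⁅a, ⁅b, w'⁆⁆)) ∧
      -- (2) F(a,b) = F(b,a)
      (∀ w ∈ W, prW ⁅a, ⁅b, w⁆⁆ = prW ⁅b, ⁅a, w⁆⁆) ∧
      -- (3) F(a,b) ∘ F(c,d) = F(c,d) ∘ F(a,b)
      (∀ w ∈ W, prW ⁅a, ⁅b, prW ⁅c, ⁅d, w⁆⁆⁆⁆ = prW ⁅c, ⁅d, prW ⁅a, ⁅b, w⁆⁆⁆⁆) :=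
  F_operators_selfadjoint_commute_general L σ H M hH hM hcompl B hBnd hBsymm hBσ hBad W Zstar hWM
    hZstarM hWZ hbr₁ hbr₂ prW hprW₂ hprW₃
end

section
/- Let p ≥ 1 and let f : Fin p → Fin p → ℝ be a symmetric matrix (f i j = f j i for all i,j) satisfying f i k * f j l = f i l * f j k for all i,j,k,l. Then there exist ε ∈ {−1, 1} and λ : Fin p → ℝ such that f i j = ε * λ i * λ j for all i,j. -/
/-- A symmetric real matrix `f` with `f i k * f j l = f i l * f j k` for
all indices is of the form `f i j = ε * λ i * λ j` for a sign `ε ∈ {−1,1}` and a vector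
`λ`. -/
theorem symmetric_rank_one_factorization
    (p : ℕ) (hp : 1 ≤ p)
    (f : Fin p → Fin p → ℝ)
    (hsymm : ∀ i j, f i j = f j i)
    (hrel : ∀ i j k l, f i k * f j l = f i l * f j k) :
    ∃ ε : ℝ, (ε = 1 ∨ ε = -1) ∧ ∃ lam : Fin p → ℝ, ∀ i j, f i j = ε * lam i * lam j := by
  by_cases h : ∀ i j, f i j = 0
  · exact ⟨1, Or.inl rfl, 0, fun i j => by simp [h]⟩
  · push_neg at h
    obtain ⟨i, j, hij⟩ := h
    have hdiag : f i i ≠ 0 := by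
      intro h0
      apply hij
      have h1 := hrel i j i j
      rw [← hsymm i j, h0, zero_mul] at h1
      exact mul_self_eq_zero.mp h1.symm
    set c := f i i with hc
    set s := Real.sqrt |c| with hsdef
    have hspos : 0 < s := Real.sqrt_pos.mpr (abs_pos.mpr hdiag)
    have hsq : s * s = |c| := Real.mul_self_sqrt (abs_nonneg c)
    refine ⟨if 0 < c then 1 else -1, by split <;> simp, fun k => f k i / s, fun k l => ?_⟩
    have key : f k i * f l i = f k l * c := by
      have h1 := hrel k i i l
      rw [hsymm i l] at h1
      linarith [h1]
    have expand : (if 0 < c then (1:ℝ) else -1) * (f k i / s) * (f l i / s)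
        = (if 0 < c then (1:ℝ) else -1) * (f k i * f l i) / (s * s) := by ring
    rw [expand, hsq, key]
    rcases lt_or_ge 0 c with hpos | hneg
    · rw [if_pos hpos, abs_of_pos hpos]
      field_simp
    · rw [if_neg (not_lt.mpr hneg), abs_of_neg (hneg.lt_of_ne hdiag)]
      field_simp
end
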